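/- arXiv:2506.14780 — 12 statements merged into one kernel-verified Lean document; each statement's English description precedes it below -/
import Mathlib

section
/- If (f₁,g₁) and (f₂,g₂) are both maximizers of the dual EOT objective Q_ε over (ℝ^n) × (ℝ^m), then there exists a constant c ∈ ℝ such that f₂ = f₁ + c·𝟙 and g₂ = g₁ − c·𝟙; i.e., the maximizer of Q_ε is unique modulo shifting the pair (f,g) by constants (𝟙, −𝟙). -/
open Real

/-- Dual entropic OT objective
`Q_ε(f,g) = ∑ᵢ αᵢ fᵢ + ∑ⱼ βⱼ gⱼ − ε(∑_{i,j} αᵢ βⱼ exp((fᵢ+gⱼ−C_{ij})/ε) − 1)`. -/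
noncomputable def Qdual {n m : ℕ} (α : Fin n → ℝ) (β : Fin m → ℝ)
    (C : Fin n → Fin m → ℝ) (ε : ℝ) (f : Fin n → ℝ) (g : Fin m → ℝ) : ℝ :=
  (∑ i, α i * f i) + (∑ j, β j * g j)
    - ε * ((∑ i, ∑ j, α i * β j * Real.exp ((f i + g j - C i j) / ε)) - 1)

lemma exp_midpoint_lt {u v : ℝ} (h : u ≠ v) :
    Real.exp ((u + v) / 2) < (Real.exp u + Real.exp v) / 2 := by
  have := strictConvexOn_exp.2 (Set.mem_univ u) (Set.mem_univ v) h
    (by norm_num : (0:ℝ) < 1/2) (by norm_num : (0:ℝ) < 1/2) (by norm_num)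
  simp only [smul_eq_mul] at this
  calc Real.exp ((u + v) / 2) = Real.exp (1/2 * u + 1/2 * v) := by ring_nf
    _ < 1/2 * Real.exp u + 1/2 * Real.exp v := this
    _ = (Real.exp u + Real.exp v) / 2 := by ring

lemma exp_midpoint_le (u v : ℝ) :
    Real.exp ((u + v) / 2) ≤ (Real.exp u + Real.exp v) / 2 := by
  rcases eq_or_ne u v with h | h
  · subst h
    rw [show (u + u) / 2 = u from by ring]
    linarith
  · exact (exp_midpoint_lt h).le

/-- Uniqueness of dual EOT maximizers modulo shifting `(f,g)` by `(c·𝟙, −c·𝟙)`. -/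
theorem eot_dual_maximizer_unique
    {n m : ℕ} (hn : 0 < n) (hm : 0 < m)
    (α : Fin n → ℝ) (β : Fin m → ℝ)
    (hα : ∀ i, 0 < α i) (hβ : ∀ j, 0 < β j)
    (hαs : ∑ i, α i = 1) (hβs : ∑ j, β j = 1)
    (C : Fin n → Fin m → ℝ) (ε : ℝ) (hε : 0 < ε)
    (f₁ : Fin n → ℝ) (g₁ : Fin m → ℝ) (f₂ : Fin n → ℝ) (g₂ : Fin m → ℝ)
    (h₁ : ∀ f g, Qdual α β C ε f g ≤ Qdual α β C ε f₁ g₁)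
    (h₂ : ∀ f g, Qdual α β C ε f g ≤ Qdual α β C ε f₂ g₂) :
    ∃ c : ℝ, (∀ i, f₂ i = f₁ i + c) ∧ (∀ j, g₂ j = g₁ j - c) := by
  have hQ12 : Qdual α β C ε f₂ g₂ = Qdual α β C ε f₁ g₁ := le_antisymm (h₁ _ _) (h₂ _ _)
  -- midpoint
  classical
  set fm : Fin n → ℝ := fun i => (f₁ i + f₂ i) / 2 with hfm
  set gm : Fin m → ℝ := fun j => (g₁ j + g₂ j) / 2 with hgm
  have key : ∀ i j, f₁ i + g₁ j = f₂ i + g₂ j := by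
    intro i j
    by_contra hne
    -- notation
    set x : Fin n → Fin m → ℝ := fun i j => (f₁ i + g₁ j - C i j) / ε with hx
    set y : Fin n → Fin m → ℝ := fun i j => (f₂ i + g₂ j - C i j) / ε with hy
    have hxy : x i j ≠ y i j := by
      simp only [hx, hy]
      intro h
      exact hne (by field_simp at h; linarith)
    set S₁ := ∑ i, ∑ j, α i * β j * Real.exp (x i j) with hS₁
    set S₂ := ∑ i, ∑ j, α i * β j * Real.exp (y i j) with hS₂
    set S := ∑ i, ∑ j, α i * β j * Real.exp ((x i j + y i j) / 2) with hS
    -- the midpoint value identity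
    have hQm : Qdual α β C ε fm gm
        = (Qdual α β C ε f₁ g₁ + Qdual α β C ε f₂ g₂) / 2 + ε * ((S₁ + S₂) / 2 - S) := by
      unfold Qdual
      have l1 : ∑ i, α i * fm i = ((∑ i, α i * f₁ i) + ∑ i, α i * f₂ i) / 2 := by
        have h' : ∀ i : Fin n, α i * fm i = (α i * f₁ i + α i * f₂ i) / 2 := fun i => by
          simp only [hfm]; ring
        simp_rw [h']
        rw [← Finset.sum_div, Finset.sum_add_distrib]
      have l2 : ∑ j, β j * gm j = ((∑ j, β j * g₁ j) + ∑ j, β j * g₂ j) / 2 := by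
        have h' : ∀ j : Fin m, β j * gm j = (β j * g₁ j + β j * g₂ j) / 2 := fun j => by
          simp only [hgm]; ring
        simp_rw [h']
        rw [← Finset.sum_div, Finset.sum_add_distrib]
      have l3 : ∑ i, ∑ j, α i * β j * Real.exp ((fm i + gm j - C i j) / ε) = S := by
        rw [hS]
        refine Finset.sum_congr rfl fun i _ => Finset.sum_congr rfl fun j _ => ?_
        congr 1
        simp only [hfm, hgm, hx, hy]
        field_simp
        ring
      rw [l1, l2, l3, hS₁, hS₂]
      ring
    -- strict inequality on the exponential sums
    have hSlt : S < (S₁ + S₂) / 2 := by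
      have hT : (S₁ + S₂) / 2
          = ∑ i, ∑ j, α i * β j * ((Real.exp (x i j) + Real.exp (y i j)) / 2) := by
        rw [hS₁, hS₂]
        have h' : ∀ i : Fin n, ∀ j : Fin m,
            α i * β j * ((Real.exp (x i j) + Real.exp (y i j)) / 2)
            = (α i * β j * Real.exp (x i j) + α i * β j * Real.exp (y i j)) / 2 :=
          fun i j => by ring
        simp_rw [h']
        have h'' : ∀ i : Fin n, ∀ j : Fin m,
            (α i * β j * Real.exp (x i j) + α i * β j * Real.exp (y i j)) / 2
            = α i * β j * Real.exp (x i j) / 2 + α i * β j * Real.exp (y i j) / 2 :=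
          fun i j => by ring
        simp_rw [h'', Finset.sum_add_distrib, ← Finset.sum_div]
        ring
      rw [hT, hS]
      refine Finset.sum_lt_sum (fun i _ => Finset.sum_le_sum fun j _ => ?_) ⟨i, Finset.mem_univ i, ?_⟩
      · exact mul_le_mul_of_nonneg_left (exp_midpoint_le _ _)
          (mul_nonneg (hα i).le (hβ j).le)
      · refine Finset.sum_lt_sum (fun j' _ => mul_le_mul_of_nonneg_left (exp_midpoint_le _ _)
          (mul_nonneg (hα i).le (hβ j').le)) ⟨j, Finset.mem_univ j, ?_⟩
        exact mul_lt_mul_of_pos_left (exp_midpoint_lt hxy)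
          (mul_pos (hα i) (hβ j))
    -- contradiction with maximality
    have hmid := h₁ fm gm
    rw [hQm, hQ12] at hmid
    nlinarith
  -- conclude
  set i₀ : Fin n := ⟨0, hn⟩
  set j₀ : Fin m := ⟨0, hm⟩
  refine ⟨g₁ j₀ - g₂ j₀, fun i => ?_, fun j => ?_⟩
  · have := key i j₀; linarith
  · have h1 := key i₀ j; have h2 := key i₀ j₀; linarith
end

section
/- Structure Theorem for the Hessian: at an optimal pair (f*, g*), the second derivative of Q_ε satisfies, for all directions (f₁,g₁), (f₂,g₂) ∈ ℝ^n × ℝ^m, D²Q_ε(f*,g*)[(f₁,g₁),(f₂,g₂)] = −(1/ε)·⟨(Id + K_ε)(f₁,g₁), (f₂,g₂)⟩_H; that is, the Hessian of Q_ε at (f*,g*), computed with respect to the weighted inner product on H, equals −(1/ε)(Id_H + K_ε). -/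
open Real

/-- The operator `R : ℝ^m → ℝ^n`, `(R g₁)(i) = ∑ⱼ βⱼ exp((f*ᵢ+g*ⱼ−C_{ij})/ε) g₁(j)`. -/
noncomputable def Rop {n m : ℕ} (β : Fin m → ℝ) (C : Fin n → Fin m → ℝ) (ε : ℝ)
    (fs : Fin n → ℝ) (gs : Fin m → ℝ) (g₁ : Fin m → ℝ) : Fin n → ℝ :=
  fun i => ∑ j, β j * Real.exp ((fs i + gs j - C i j) / ε) * g₁ j

/-- The operator `Rᵀ : ℝ^n → ℝ^m`, `(Rᵀ f₁)(j) = ∑ᵢ αᵢ exp((f*ᵢ+g*ⱼ−C_{ij})/ε) f₁(i)`. -/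
noncomputable def RopT {n m : ℕ} (α : Fin n → ℝ) (C : Fin n → Fin m → ℝ) (ε : ℝ)
    (fs : Fin n → ℝ) (gs : Fin m → ℝ) (f₁ : Fin n → ℝ) : Fin m → ℝ :=
  fun j => ∑ i, α i * Real.exp ((fs i + gs j - C i j) / ε) * f₁ i

lemma row_marginal {m : ℕ} (hm : 0 < m) (β : Fin m → ℝ) (hβ : ∀ j, 0 < β j)
    (ε : ℝ) (hε : 0 < ε) (a : ℝ) (c : Fin m → ℝ)
    (ha : a = -ε * Real.log (∑ j, β j * Real.exp (c j / ε))) :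
    ∑ j, β j * Real.exp ((a + c j) / ε) = 1 := by
  have : Nonempty (Fin m) := ⟨⟨0, hm⟩⟩
  set S := ∑ j, β j * Real.exp (c j / ε) with hS
  have hSpos : 0 < S :=
    Finset.sum_pos (fun j _ => mul_pos (hβ j) (Real.exp_pos _)) Finset.univ_nonempty
  have hexp : Real.exp (a / ε) = S⁻¹ := by
    have : a / ε = -Real.log S := by
      rw [ha]; field_simp
    rw [this, Real.exp_neg, Real.exp_log hSpos]
  have : ∀ j, Real.exp ((a + c j) / ε) = Real.exp (a / ε) * Real.exp (c j / ε) := by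
    intro j; rw [← Real.exp_add, ← add_div]
  calc ∑ j, β j * Real.exp ((a + c j) / ε)
      = ∑ j, Real.exp (a / ε) * (β j * Real.exp (c j / ε)) := by
        refine Finset.sum_congr rfl fun j _ => ?_; rw [this j]; ring
    _ = Real.exp (a / ε) * S := by rw [← Finset.mul_sum]
    _ = 1 := by rw [hexp]; exact inv_mul_cancel₀ (ne_of_gt hSpos)

/-- Structure theorem for the Hessian of the dual EOT objective at the optimum:
for all directions `(f₁,g₁)`, `(f₂,g₂)`,
`D²Q_ε(f*,g*)[(f₁,g₁),(f₂,g₂)] = −(1/ε)·⟨(Id + K_ε)(f₁,g₁),(f₂,g₂)⟩_H`,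
where the second differential is computed as a mixed second derivative along the
two directions, and `⟨·,·⟩_H` is the `(α,β)`-weighted inner product. -/
theorem hessian_structure_theorem
    {n m : ℕ} (hn : 0 < n) (hm : 0 < m)
    (α : Fin n → ℝ) (β : Fin m → ℝ)
    (hα : ∀ i, 0 < α i) (hβ : ∀ j, 0 < β j)
    (hαs : ∑ i, α i = 1) (hβs : ∑ j, β j = 1)
    (C : Fin n → Fin m → ℝ) (ε : ℝ) (hε : 0 < ε)
    (fs : Fin n → ℝ) (gs : Fin m → ℝ)
    (hfs : ∀ i, fs i = -ε * Real.log (∑ j, β j * Real.exp ((gs j - C i j) / ε)))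
    (hgs : ∀ j, gs j = -ε * Real.log (∑ i, α i * Real.exp ((fs i - C i j) / ε)))
    (f₁ : Fin n → ℝ) (g₁ : Fin m → ℝ) (f₂ : Fin n → ℝ) (g₂ : Fin m → ℝ) :
    deriv (fun s : ℝ => deriv (fun t : ℝ =>
        Qdual α β C ε (fun i => fs i + t * f₁ i + s * f₂ i)
          (fun j => gs j + t * g₁ j + s * g₂ j)) 0) 0
      = -(1 / ε) *
        ((∑ i, α i * (f₁ i + Rop β C ε fs gs g₁ i) * f₂ i)
          + ∑ j, β j * (g₁ j + RopT α C ε fs gs f₁ j) * g₂ j) := by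
  have hε' : ε ≠ 0 := ne_of_gt hε
  -- marginals
  have hrow : ∀ i, ∑ j, β j * Real.exp ((fs i + (gs j - C i j)) / ε) = 1 := fun i =>
    row_marginal hm β hβ ε hε (fs i) (fun j => gs j - C i j) (hfs i)
  have hcol : ∀ j, ∑ i, α i * Real.exp ((gs j + (fs i - C i j)) / ε) = 1 := fun j =>
    row_marginal hn α hα ε hε (gs j) (fun i => fs i - C i j) (hgs j)
  have hrow' : ∀ i, ∑ j, β j * Real.exp ((fs i + gs j - C i j) / ε) = 1 := by
    intro i
    rw [← hrow i]; exact Finset.sum_congr rfl fun j _ => by ring_nf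
  have hcol' : ∀ j, ∑ i, α i * Real.exp ((fs i + gs j - C i j) / ε) = 1 := by
    intro j
    rw [← hcol j]; exact Finset.sum_congr rfl fun i _ => by ring_nf
  -- Step 1: inner derivative
  have key1 : ∀ s : ℝ,
      HasDerivAt (fun t : ℝ => Qdual α β C ε (fun i => fs i + t * f₁ i + s * f₂ i)
          (fun j => gs j + t * g₁ j + s * g₂ j))
        ((∑ i, α i * f₁ i) + (∑ j, β j * g₁ j)
          - ε * ∑ i, ∑ j, α i * β j *
            (Real.exp ((fs i + 0 * f₁ i + s * f₂ i + (gs j + 0 * g₁ j + s * g₂ j) - C i j) / ε)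
              * ((f₁ i + g₁ j) / ε))) 0 := by
    intro s
    unfold Qdual
    have h1 : HasDerivAt (fun t : ℝ => ∑ i, α i * (fs i + t * f₁ i + s * f₂ i))
        (∑ i, α i * f₁ i) 0 :=
      HasDerivAt.fun_sum fun i _ =>
        (((hasDerivAt_mul_const (f₁ i)).const_add (fs i)).add_const (s * f₂ i)).const_mul (α i)
    have h2 : HasDerivAt (fun t : ℝ => ∑ j, β j * (gs j + t * g₁ j + s * g₂ j))
        (∑ j, β j * g₁ j) 0 :=
      HasDerivAt.fun_sum fun j _ =>
        (((hasDerivAt_mul_const (g₁ j)).const_add (gs j)).add_const (s * g₂ j)).const_mul (β j)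
    have h3 : HasDerivAt (fun t : ℝ =>
        (∑ i, ∑ j, α i * β j * Real.exp
          ((fs i + t * f₁ i + s * f₂ i + (gs j + t * g₁ j + s * g₂ j) - C i j) / ε)) - 1)
        (∑ i, ∑ j, α i * β j *
          (Real.exp ((fs i + 0 * f₁ i + s * f₂ i + (gs j + 0 * g₁ j + s * g₂ j) - C i j) / ε)
            * ((f₁ i + g₁ j) / ε))) 0 := by
      refine HasDerivAt.sub_const 1 ?_
      refine HasDerivAt.fun_sum fun i _ => HasDerivAt.fun_sum fun j _ => ?_
      have hw : HasDerivAt (fun t : ℝ =>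
          (fs i + t * f₁ i + s * f₂ i + (gs j + t * g₁ j + s * g₂ j) - C i j) / ε)
          ((f₁ i + g₁ j) / ε) 0 := by
        refine HasDerivAt.div_const ?_ ε
        refine HasDerivAt.sub_const (C i j) ?_
        exact ((((hasDerivAt_mul_const (f₁ i)).const_add (fs i)).add_const (s * f₂ i)).add
          (((hasDerivAt_mul_const (g₁ j)).const_add (gs j)).add_const (s * g₂ j)))
      exact (hw.exp).const_mul (α i * β j)
    exact (h1.add h2).sub (h3.const_mul ε)
  have hinner : (fun s : ℝ => deriv (fun t : ℝ =>
      Qdual α β C ε (fun i => fs i + t * f₁ i + s * f₂ i)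
        (fun j => gs j + t * g₁ j + s * g₂ j)) 0)
      = fun s : ℝ => (∑ i, α i * f₁ i) + (∑ j, β j * g₁ j)
          - ε * ∑ i, ∑ j, α i * β j *
            (Real.exp ((fs i + s * f₂ i + (gs j + s * g₂ j) - C i j) / ε)
              * ((f₁ i + g₁ j) / ε)) := by
    funext s
    rw [(key1 s).deriv]
    norm_num
  rw [hinner]
  -- Step 2: outer derivative
  have key2 : HasDerivAt (fun s : ℝ => (∑ i, α i * f₁ i) + (∑ j, β j * g₁ j)
        - ε * ∑ i, ∑ j, α i * β j *
          (Real.exp ((fs i + s * f₂ i + (gs j + s * g₂ j) - C i j) / ε)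
            * ((f₁ i + g₁ j) / ε)))
      (-(ε * ∑ i, ∑ j, α i * β j *
          ((Real.exp ((fs i + 0 * f₂ i + (gs j + 0 * g₂ j) - C i j) / ε)
            * ((f₂ i + g₂ j) / ε)) * ((f₁ i + g₁ j) / ε)))) 0 := by
    have h3 : HasDerivAt (fun s : ℝ => ∑ i, ∑ j, α i * β j *
        (Real.exp ((fs i + s * f₂ i + (gs j + s * g₂ j) - C i j) / ε)
          * ((f₁ i + g₁ j) / ε)))
        (∑ i, ∑ j, α i * β j *
          ((Real.exp ((fs i + 0 * f₂ i + (gs j + 0 * g₂ j) - C i j) / ε)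
            * ((f₂ i + g₂ j) / ε)) * ((f₁ i + g₁ j) / ε))) 0 := by
      refine HasDerivAt.fun_sum fun i _ => HasDerivAt.fun_sum fun j _ => ?_
      have hw : HasDerivAt (fun s : ℝ =>
          (fs i + s * f₂ i + (gs j + s * g₂ j) - C i j) / ε) ((f₂ i + g₂ j) / ε) 0 := by
        refine HasDerivAt.div_const ?_ ε
        refine HasDerivAt.sub_const (C i j) ?_
        exact (((hasDerivAt_mul_const (f₂ i)).const_add (fs i)).add
          ((hasDerivAt_mul_const (g₂ j)).const_add (gs j)))
      exact ((hw.exp).mul_const ((f₁ i + g₁ j) / ε)).const_mul (α i * β j)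
    have := (h3.const_mul ε).const_sub ((∑ i, α i * f₁ i) + (∑ j, β j * g₁ j))
    convert this using 2 <;> ring
  rw [key2.deriv]
  -- Step 3: algebra
  simp only [zero_mul, add_zero, Rop, RopT]
  have h1 : ∑ i, α i * (f₁ i + ∑ j, β j * Real.exp ((fs i + gs j - C i j) / ε) * g₁ j) * f₂ i
      = ∑ i, ∑ j, α i * β j * Real.exp ((fs i + gs j - C i j) / ε) * (f₁ i + g₁ j) * f₂ i := by
    refine Finset.sum_congr rfl fun i _ => ?_
    rw [show (∑ j, α i * β j * Real.exp ((fs i + gs j - C i j) / ε) * (f₁ i + g₁ j) * f₂ i)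
        = α i * f₁ i * f₂ i * (∑ j, β j * Real.exp ((fs i + gs j - C i j) / ε))
          + α i * f₂ i * (∑ j, β j * Real.exp ((fs i + gs j - C i j) / ε) * g₁ j) from by
      rw [Finset.mul_sum, Finset.mul_sum, ← Finset.sum_add_distrib]
      exact Finset.sum_congr rfl fun j _ => by ring]
    rw [hrow' i]; ring
  have h2 : ∑ j, β j * (g₁ j + ∑ i, α i * Real.exp ((fs i + gs j - C i j) / ε) * f₁ i) * g₂ j
      = ∑ j, ∑ i, α i * β j * Real.exp ((fs i + gs j - C i j) / ε) * (f₁ i + g₁ j) * g₂ j := by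
    refine Finset.sum_congr rfl fun j _ => ?_
    rw [show (∑ i, α i * β j * Real.exp ((fs i + gs j - C i j) / ε) * (f₁ i + g₁ j) * g₂ j)
        = β j * g₁ j * g₂ j * (∑ i, α i * Real.exp ((fs i + gs j - C i j) / ε))
          + β j * g₂ j * (∑ i, α i * Real.exp ((fs i + gs j - C i j) / ε) * f₁ i) from by
      rw [Finset.mul_sum, Finset.mul_sum, ← Finset.sum_add_distrib]
      exact Finset.sum_congr rfl fun i _ => by ring]
    rw [hcol' j]; ring
  have hswap : (∑ j, ∑ i, α i * β j * Real.exp ((fs i + gs j - C i j) / ε) * (f₁ i + g₁ j) * g₂ j)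
      = ∑ i, ∑ j, α i * β j * Real.exp ((fs i + gs j - C i j) / ε) * (f₁ i + g₁ j) * g₂ j :=
    Finset.sum_comm
  rw [h1, h2, hswap, ← Finset.sum_add_distrib, neg_mul (1/ε), neg_inj,
    Finset.mul_sum, Finset.mul_sum]
  refine Finset.sum_congr rfl fun i _ => ?_
  rw [← Finset.sum_add_distrib, Finset.mul_sum, Finset.mul_sum]
  refine Finset.sum_congr rfl fun j _ => ?_
  field_simp
end

section
/- The operator K_ε is self-adjoint with respect to the weighted inner product ⟨·,·⟩_H, and every eigenvalue of K_ε lies in the interval [−1, 1]. -/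
open Real

/-- The operator `K_ε(f₁,g₁) = (R g₁, Rᵀ f₁)` on `ℝ^n × ℝ^m`. -/
noncomputable def Kop {n m : ℕ} (α : Fin n → ℝ) (β : Fin m → ℝ)
    (C : Fin n → Fin m → ℝ) (ε : ℝ) (fs : Fin n → ℝ) (gs : Fin m → ℝ)
    (p : (Fin n → ℝ) × (Fin m → ℝ)) : (Fin n → ℝ) × (Fin m → ℝ) :=
  (Rop β C ε fs gs p.2, RopT α C ε fs gs p.1)

/-- The weighted inner product on `H = ℝ^n × ℝ^m`. -/
noncomputable def innerH {n m : ℕ} (α : Fin n → ℝ) (β : Fin m → ℝ)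
    (p q : (Fin n → ℝ) × (Fin m → ℝ)) : ℝ :=
  (∑ i, α i * p.1 i * q.1 i) + ∑ j, β j * p.2 j * q.2 j

/-- `K_ε` is self-adjoint for the weighted inner product `⟨·,·⟩_H`, and every
eigenvalue of `K_ε` lies in `[−1, 1]`. -/
theorem Kop_selfAdjoint_and_eigenvalues_mem_Icc
    {n m : ℕ} (hn : 0 < n) (hm : 0 < m)
    (α : Fin n → ℝ) (β : Fin m → ℝ)
    (hα : ∀ i, 0 < α i) (hβ : ∀ j, 0 < β j)
    (hαs : ∑ i, α i = 1) (hβs : ∑ j, β j = 1)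
    (C : Fin n → Fin m → ℝ) (ε : ℝ) (hε : 0 < ε)
    (fs : Fin n → ℝ) (gs : Fin m → ℝ)
    (hfs : ∀ i, fs i = -ε * Real.log (∑ j, β j * Real.exp ((gs j - C i j) / ε)))
    (hgs : ∀ j, gs j = -ε * Real.log (∑ i, α i * Real.exp ((fs i - C i j) / ε))) :
    (∀ p q : (Fin n → ℝ) × (Fin m → ℝ),
        innerH α β (Kop α β C ε fs gs p) q = innerH α β p (Kop α β C ε fs gs q)) ∧
    (∀ (ρ : ℝ) (p : (Fin n → ℝ) × (Fin m → ℝ)),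
        p ≠ 0 → Kop α β C ε fs gs p = ρ • p → ρ ∈ Set.Icc (-1 : ℝ) 1) := by
  have hεne : ε ≠ 0 := ne_of_gt hε
  haveI : Nonempty (Fin m) := Fin.pos_iff_nonempty.mp hm
  haveI : Nonempty (Fin n) := Fin.pos_iff_nonempty.mp hn
  have hne_m : (Finset.univ : Finset (Fin m)).Nonempty := Finset.univ_nonempty
  have hne_n : (Finset.univ : Finset (Fin n)).Nonempty := Finset.univ_nonempty
  set E : Fin n → Fin m → ℝ := fun i j => Real.exp ((fs i + gs j - C i j) / ε) with hE
  have hEpos : ∀ i j, 0 < E i j := fun i j => Real.exp_pos _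
  -- row sums are 1
  have hrow : ∀ i, ∑ j, β j * E i j = 1 := by
    intro i
    have hS : 0 < ∑ j, β j * Real.exp ((gs j - C i j) / ε) := by
      refine Finset.sum_pos (fun j _ => mul_pos (hβ j) (Real.exp_pos _)) hne_m
    have hsplit : ∀ j, β j * E i j
        = Real.exp (fs i / ε) * (β j * Real.exp ((gs j - C i j) / ε)) := by
      intro j
      show β j * Real.exp ((fs i + gs j - C i j) / ε) = _
      rw [show (fs i + gs j - C i j) / ε = fs i / ε + (gs j - C i j) / ε by ring,
        Real.exp_add]
      ring
    rw [Finset.sum_congr rfl (fun j _ => hsplit j), ← Finset.mul_sum, hfs i]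
    rw [show -ε * Real.log (∑ j, β j * Real.exp ((gs j - C i j) / ε)) / ε
        = -Real.log (∑ j, β j * Real.exp ((gs j - C i j) / ε)) by field_simp]
    rw [Real.exp_neg, Real.exp_log hS, inv_mul_cancel₀ (ne_of_gt hS)]
  -- column sums are 1
  have hcol : ∀ j, ∑ i, α i * E i j = 1 := by
    intro j
    have hS : 0 < ∑ i, α i * Real.exp ((fs i - C i j) / ε) := by
      refine Finset.sum_pos (fun i _ => mul_pos (hα i) (Real.exp_pos _)) hne_n
    have hsplit : ∀ i, α i * E i j
        = Real.exp (gs j / ε) * (α i * Real.exp ((fs i - C i j) / ε)) := by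
      intro i
      show α i * Real.exp ((fs i + gs j - C i j) / ε) = _
      rw [show (fs i + gs j - C i j) / ε = gs j / ε + (fs i - C i j) / ε by ring,
        Real.exp_add]
      ring
    rw [Finset.sum_congr rfl (fun i _ => hsplit i), ← Finset.mul_sum, hgs j]
    rw [show -ε * Real.log (∑ i, α i * Real.exp ((fs i - C i j) / ε)) / ε
        = -Real.log (∑ i, α i * Real.exp ((fs i - C i j) / ε)) by field_simp]
    rw [Real.exp_neg, Real.exp_log hS, inv_mul_cancel₀ (ne_of_gt hS)]
  -- expansion lemmas
  have expRL : ∀ (u : Fin m → ℝ) (w : Fin n → ℝ),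
      ∑ i, α i * Rop β C ε fs gs u i * w i
        = ∑ i, ∑ j, α i * β j * E i j * (u j * w i) := by
    intro u w
    refine Finset.sum_congr rfl fun i _ => ?_
    simp only [Rop, Finset.mul_sum, Finset.sum_mul, hE]
    exact Finset.sum_congr rfl fun j _ => by ring
  have expRR : ∀ (u : Fin m → ℝ) (w : Fin n → ℝ),
      ∑ i, α i * w i * Rop β C ε fs gs u i
        = ∑ i, ∑ j, α i * β j * E i j * (u j * w i) := by
    intro u w
    rw [← expRL u w]
    exact Finset.sum_congr rfl fun i _ => by ring
  have expTL : ∀ (u : Fin n → ℝ) (w : Fin m → ℝ),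
      ∑ j, β j * RopT α C ε fs gs u j * w j
        = ∑ i, ∑ j, α i * β j * E i j * (u i * w j) := by
    intro u w
    rw [Finset.sum_comm]
    refine Finset.sum_congr rfl fun j _ => ?_
    simp only [RopT, Finset.mul_sum, Finset.sum_mul, hE]
    exact Finset.sum_congr rfl fun i _ => by ring
  have expTR : ∀ (u : Fin n → ℝ) (w : Fin m → ℝ),
      ∑ j, β j * w j * RopT α C ε fs gs u j
        = ∑ i, ∑ j, α i * β j * E i j * (u i * w j) := by
    intro u w
    rw [← expTL u w]
    exact Finset.sum_congr rfl fun j _ => by ring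
  constructor
  · intro p q
    simp only [innerH, Kop]
    rw [expRL p.2 q.1, expTL p.1 q.2, expRR q.2 p.1, expTR q.1 p.2, add_comm]
    congr 1 <;>
      exact Finset.sum_congr rfl fun i _ => Finset.sum_congr rfl fun j _ => by ring
  · intro ρ p hp hKp
    have h1 : ∀ i, Rop β C ε fs gs p.2 i = ρ * p.1 i := by
      intro i
      have := congrFun (congrArg Prod.fst hKp) i
      simpa [Kop] using this
    have h2 : ∀ j, RopT α C ε fs gs p.1 j = ρ * p.2 j := by
      intro j
      have := congrFun (congrArg Prod.snd hKp) j
      simpa [Kop] using this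
    set N : ℝ := (∑ i, α i * p.1 i * p.1 i) + ∑ j, β j * p.2 j * p.2 j with hNdef
    set T : ℝ := ∑ i, ∑ j, α i * β j * E i j * (p.1 i * p.2 j) with hTdef
    -- N > 0
    have hN1nn : 0 ≤ ∑ i, α i * p.1 i * p.1 i :=
      Finset.sum_nonneg fun i _ => by nlinarith [hα i, sq_nonneg (p.1 i)]
    have hN2nn : 0 ≤ ∑ j, β j * p.2 j * p.2 j :=
      Finset.sum_nonneg fun j _ => by nlinarith [hβ j, sq_nonneg (p.2 j)]
    have hNpos : 0 < N := by
      have hcases : p.1 ≠ 0 ∨ p.2 ≠ 0 := by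
        by_contra hcon
        push_neg at hcon
        exact hp (Prod.ext_iff.mpr ⟨hcon.1, hcon.2⟩)
      rcases hcases with h | h
      · obtain ⟨i0, hi0⟩ := Function.ne_iff.mp h
        have : 0 < ∑ i, α i * p.1 i * p.1 i := by
          refine Finset.sum_pos' (fun i _ => by nlinarith [hα i, sq_nonneg (p.1 i)])
            ⟨i0, Finset.mem_univ _, ?_⟩
          have : p.1 i0 ≠ 0 := by simpa using hi0
          nlinarith [hα i0, (mul_self_pos).mpr this]
        rw [hNdef]; linarith
      · obtain ⟨j0, hj0⟩ := Function.ne_iff.mp h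
        have : 0 < ∑ j, β j * p.2 j * p.2 j := by
          refine Finset.sum_pos' (fun j _ => by nlinarith [hβ j, sq_nonneg (p.2 j)])
            ⟨j0, Finset.mem_univ _, ?_⟩
          have : p.2 j0 ≠ 0 := by simpa using hj0
          nlinarith [hβ j0, (mul_self_pos).mpr this]
        rw [hNdef]; linarith
    -- ρ * N = 2 * T
    have hA : ∑ i, α i * Rop β C ε fs gs p.2 i * p.1 i = T := by
      rw [expRL, hTdef]
      exact Finset.sum_congr rfl fun i _ => Finset.sum_congr rfl fun j _ => by ring
    have hA' : ∑ i, α i * Rop β C ε fs gs p.2 i * p.1 i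
        = ρ * ∑ i, α i * p.1 i * p.1 i := by
      rw [Finset.mul_sum]
      exact Finset.sum_congr rfl fun i _ => by rw [h1 i]; ring
    have hB : ∑ j, β j * RopT α C ε fs gs p.1 j * p.2 j = T := by
      rw [expTL, hTdef]
    have hB' : ∑ j, β j * RopT α C ε fs gs p.1 j * p.2 j
        = ρ * ∑ j, β j * p.2 j * p.2 j := by
      rw [Finset.mul_sum]
      exact Finset.sum_congr rfl fun j _ => by rw [h2 j]; ring
    have hrhoN : ρ * N = 2 * T := by
      rw [hNdef, mul_add, ← hA', ← hB', hA, hB]; ring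
    -- N as double sum
    have hN1ds : ∑ i, α i * p.1 i * p.1 i
        = ∑ i, ∑ j, α i * β j * E i j * (p.1 i * p.1 i) := by
      refine Finset.sum_congr rfl fun i _ => ?_
      calc α i * p.1 i * p.1 i = (∑ j, β j * E i j) * (α i * p.1 i * p.1 i) := by
            rw [hrow i]; ring
        _ = ∑ j, α i * β j * E i j * (p.1 i * p.1 i) := by
            rw [Finset.sum_mul]
            exact Finset.sum_congr rfl fun j _ => by ring
    have hN2ds : ∑ j, β j * p.2 j * p.2 j
        = ∑ i, ∑ j, α i * β j * E i j * (p.2 j * p.2 j) := by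
      rw [Finset.sum_comm]
      refine Finset.sum_congr rfl fun j _ => ?_
      calc β j * p.2 j * p.2 j = (∑ i, α i * E i j) * (β j * p.2 j * p.2 j) := by
            rw [hcol j]; ring
        _ = ∑ i, α i * β j * E i j * (p.2 j * p.2 j) := by
            rw [Finset.sum_mul]
            exact Finset.sum_congr rfl fun i _ => by ring
    have hupper : 2 * T ≤ N := by
      have : 0 ≤ N - 2 * T := by
        have hcalc : N - 2 * T
            = ∑ i, ∑ j, α i * β j * E i j * (p.1 i - p.2 j) ^ 2 := by
          rw [hNdef, hTdef, hN1ds, hN2ds, ← Finset.sum_add_distrib, Finset.mul_sum,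
            ← Finset.sum_sub_distrib]
          refine Finset.sum_congr rfl fun i _ => ?_
          rw [Finset.mul_sum, ← Finset.sum_add_distrib, ← Finset.sum_sub_distrib]
          exact Finset.sum_congr rfl fun j _ => by ring
        rw [hcalc]
        refine Finset.sum_nonneg fun i _ => Finset.sum_nonneg fun j _ =>
          mul_nonneg (mul_nonneg (mul_nonneg (hα i).le (hβ j).le) (hEpos i j).le)
            (sq_nonneg _)
      linarith
    have hlower : -N ≤ 2 * T := by
      have : 0 ≤ N + 2 * T := by
        have hcalc : N + 2 * T
            = ∑ i, ∑ j, α i * β j * E i j * (p.1 i + p.2 j) ^ 2 := by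
          rw [hNdef, hTdef, hN1ds, hN2ds, ← Finset.sum_add_distrib, Finset.mul_sum,
            ← Finset.sum_add_distrib]
          refine Finset.sum_congr rfl fun i _ => ?_
          rw [Finset.mul_sum, ← Finset.sum_add_distrib, ← Finset.sum_add_distrib]
          exact Finset.sum_congr rfl fun j _ => by ring
        rw [hcalc]
        refine Finset.sum_nonneg fun i _ => Finset.sum_nonneg fun j _ =>
          mul_nonneg (mul_nonneg (mul_nonneg (hα i).le (hβ j).le) (hEpos i j).le)
            (sq_nonneg _)
      linarith
    constructor
    · nlinarith [hrhoN, hlower, hNpos]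
    · nlinarith [hrhoN, hupper, hNpos]
end

section
/- Linearization of the Sinkhorn map at the optimum: there exist constants C > 0 and δ > 0 such that for all (f, g) ∈ ℝ^n × ℝ^m with max(‖f − f*‖_∞, ‖g − g*‖_∞) < δ, the pair (g^{C,ε} − f*, f^{C,ε} − g*) satisfies ‖(g^{C,ε} − f*, f^{C,ε} − g*) + K_ε(f − f*, g − g*)‖_∞ ≤ (C/ε)·(max(‖f − f*‖_∞, ‖g − g*‖_∞))², where ‖(u,v)‖_∞ = max(‖u‖_∞, ‖v‖_∞). -/
open Real


/-- The `(C,ε)`-transform of `f : Fin n → ℝ`: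
`f^{C,ε}(j) = −ε·log(∑ᵢ αᵢ exp((fᵢ − C_{ij})/ε))`. -/
noncomputable def transformF {n m : ℕ} (α : Fin n → ℝ) (C : Fin n → Fin m → ℝ)
    (ε : ℝ) (f : Fin n → ℝ) : Fin m → ℝ :=
  fun j => -ε * Real.log (∑ i, α i * Real.exp ((f i - C i j) / ε))

/-- The `(C,ε)`-transform of `g : Fin m → ℝ`:
`g^{C,ε}(i) = −ε·log(∑ⱼ βⱼ exp((gⱼ − C_{ij})/ε))`. -/
noncomputable def transformG {n m : ℕ} (β : Fin m → ℝ) (C : Fin n → Fin m → ℝ)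
    (ε : ℝ) (g : Fin m → ℝ) : Fin n → ℝ :=
  fun i => -ε * Real.log (∑ j, β j * Real.exp ((g j - C i j) / ε))

lemma exp_le_quad {x : ℝ} (hx : |x| ≤ 1) : Real.exp x ≤ 1 + x + x ^ 2 := by
  have h := Real.exp_bound hx (by norm_num : 0 < 2)
  simp [Finset.sum_range_succ] at h
  have h2 := (abs_le.1 h).2
  nlinarith [sq_abs x, sq_nonneg x]

lemma key_lemma {m : ℕ} (w x : Fin m → ℝ) (hw : ∀ j, 0 < w j) (hws : ∑ j, w j = 1)
    (s : ℝ) (hs : s ≤ 1) (hx : ∀ j, |x j| ≤ s) :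
    |Real.log (∑ j, w j * Real.exp (x j)) - ∑ j, w j * x j| ≤ s ^ 2 := by
  have hm : m ≠ 0 := by rintro rfl; simp at hws
  have : Nonempty (Fin m) := ⟨⟨0, Nat.pos_of_ne_zero hm⟩⟩
  have hne : (Finset.univ : Finset (Fin m)).Nonempty := Finset.univ_nonempty
  set S := ∑ j, w j * Real.exp (x j) with hS
  set X := ∑ j, w j * x j with hX
  have hSpos : 0 < S := Finset.sum_pos (fun j _ => mul_pos (hw j) (Real.exp_pos _)) hne
  -- Jensen: exp X ≤ S
  have hjensen : Real.exp X ≤ S := by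
    have := convexOn_exp.map_sum_le (t := Finset.univ) (w := w) (p := x)
      (fun j _ => (hw j).le) hws (fun j _ => Set.mem_univ _)
    simpa [smul_eq_mul] using this
  have hlow : X ≤ Real.log S := (Real.le_log_iff_exp_le hSpos).2 hjensen
  -- upper bound
  have hQ : ∑ j, w j * (x j) ^ 2 ≤ s ^ 2 := by
    calc ∑ j, w j * (x j) ^ 2 ≤ ∑ j, w j * s ^ 2 := by
          apply Finset.sum_le_sum
          intro j _
          have : (x j) ^ 2 ≤ s ^ 2 := by
            have := hx j
            nlinarith [abs_nonneg (x j), sq_abs (x j)]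
          exact mul_le_mul_of_nonneg_left this (hw j).le
      _ = s ^ 2 := by rw [← Finset.sum_mul, hws, one_mul]
  have hSle : S ≤ 1 + X + ∑ j, w j * (x j) ^ 2 := by
    have : S ≤ ∑ j, w j * (1 + x j + (x j) ^ 2) := by
      apply Finset.sum_le_sum
      intro j _
      exact mul_le_mul_of_nonneg_left (exp_le_quad ((hx j).trans hs)) (hw j).le
    calc S ≤ ∑ j, w j * (1 + x j + (x j) ^ 2) := this
      _ = (∑ j, w j) + X + ∑ j, w j * (x j) ^ 2 := by
          rw [hX]; rw [← Finset.sum_add_distrib, ← Finset.sum_add_distrib]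
          apply Finset.sum_congr rfl; intro j _; ring
      _ = 1 + X + ∑ j, w j * (x j) ^ 2 := by rw [hws]
  have hup : Real.log S ≤ X + s ^ 2 := by
    have h1 : Real.log S ≤ S - 1 := Real.log_le_sub_one_of_pos hSpos
    linarith
  have hs2 : (0:ℝ) ≤ s ^ 2 := sq_nonneg s
  rw [abs_le]
  constructor <;> linarith

lemma comp_lemma {m : ℕ} (w u : Fin m → ℝ) (hw : ∀ j, 0 < w j) (hws : ∑ j, w j = 1)
    (ε t : ℝ) (hε : 0 < ε) (ht : ∀ j, |u j| ≤ t) (htε : t ≤ ε) :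
    |(-ε * Real.log (∑ j, w j * Real.exp (u j / ε)) + ∑ j, w j * u j)| ≤ t ^ 2 / ε := by
  have hkey := key_lemma w (fun j => u j / ε) hw hws (t / ε)
    (by rw [div_le_one hε]; exact htε)
    (fun j => by rw [abs_div, abs_of_pos hε]; gcongr; exact ht j)
  have hsum : ∑ j, w j * u j = ε * ∑ j, w j * (u j / ε) := by
    rw [Finset.mul_sum]; apply Finset.sum_congr rfl; intro j _; field_simp
  have heq : -ε * Real.log (∑ j, w j * Real.exp (u j / ε)) + ∑ j, w j * u j
      = -ε * (Real.log (∑ j, w j * Real.exp (u j / ε)) - ∑ j, w j * (u j / ε)) := by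
    rw [hsum]; ring
  rw [heq, abs_mul, abs_neg, abs_of_pos hε]
  calc ε * |Real.log (∑ j, w j * Real.exp (u j / ε)) - ∑ j, w j * (u j / ε)|
      ≤ ε * (t / ε) ^ 2 := mul_le_mul_of_nonneg_left hkey hε.le
    _ = t ^ 2 / ε := by field_simp

/-- Linearization -/
theorem sinkhorn_linearization
    {n m : ℕ} (hn : 0 < n) (hm : 0 < m)
    (α : Fin n → ℝ) (β : Fin m → ℝ)
    (hα : ∀ i, 0 < α i) (hβ : ∀ j, 0 < β j)
    (hαs : ∑ i, α i = 1) (hβs : ∑ j, β j = 1)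
    (C : Fin n → Fin m → ℝ) (ε : ℝ) (hε : 0 < ε)
    (fs : Fin n → ℝ) (gs : Fin m → ℝ)
    (hfs : fs = transformG β C ε gs) (hgs : gs = transformF α C ε fs) :
    ∃ Cc > (0 : ℝ), ∃ δ > (0 : ℝ), ∀ (f : Fin n → ℝ) (g : Fin m → ℝ),
      max ‖f - fs‖ ‖g - gs‖ < δ →
      max ‖transformG β C ε g - fs + Rop β C ε fs gs (g - gs)‖
          ‖transformF α C ε f - gs + RopT α C ε fs gs (f - fs)‖
        ≤ (Cc / ε) * (max ‖f - fs‖ ‖g - gs‖) ^ 2 := by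
  have hnem : Nonempty (Fin n) := ⟨⟨0, hn⟩⟩
  have hmem : Nonempty (Fin m) := ⟨⟨0, hm⟩⟩
  refine ⟨1, one_pos, ε, hε, ?_⟩
  intro f g hlt
  set t := max ‖f - fs‖ ‖g - gs‖ with htdef
  have ht0 : 0 ≤ t := le_trans (norm_nonneg _) (le_max_left _ _)
  have htε : t ≤ ε := hlt.le
  have hbound : (1 / ε) * t ^ 2 = t ^ 2 / ε := by ring
  rw [hbound]
  have hc : (0:ℝ) ≤ t ^ 2 / ε := by positivity
  apply max_le
  · rw [pi_norm_le_iff_of_nonneg hc]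
    intro i
    set w : Fin m → ℝ := fun j => β j * Real.exp ((fs i + gs j - C i j) / ε) with hwdef
    have hw : ∀ j, 0 < w j := fun j => mul_pos (hβ j) (Real.exp_pos _)
    have hD : 0 < ∑ j, β j * Real.exp ((gs j - C i j) / ε) :=
      Finset.sum_pos (fun j _ => mul_pos (hβ j) (Real.exp_pos _)) Finset.univ_nonempty
    have hfsi : fs i = -ε * Real.log (∑ j, β j * Real.exp ((gs j - C i j) / ε)) := by
      rw [hfs]; rfl
    have hexp : Real.exp (fs i / ε) = (∑ j, β j * Real.exp ((gs j - C i j) / ε))⁻¹ := by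
      rw [hfsi]
      have h1 : -ε * Real.log (∑ j, β j * Real.exp ((gs j - C i j) / ε)) / ε
          = -Real.log (∑ j, β j * Real.exp ((gs j - C i j) / ε)) := by
        field_simp
      rw [h1, Real.exp_neg, Real.exp_log hD]
    have hws : ∑ j, w j = 1 := by
      have hterm : ∀ j, w j = Real.exp (fs i / ε) * (β j * Real.exp ((gs j - C i j) / ε)) := by
        intro j
        rw [hwdef]
        simp only
        rw [show (fs i + gs j - C i j) / ε = fs i / ε + (gs j - C i j) / ε by ring,
          Real.exp_add]
        ring
      rw [Finset.sum_congr rfl (fun j _ => hterm j), ← Finset.mul_sum, hexp,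
        inv_mul_cancel₀ hD.ne']
    have hSpos : 0 < ∑ j, w j * Real.exp ((g j - gs j) / ε) :=
      Finset.sum_pos (fun j _ => mul_pos (hw j) (Real.exp_pos _)) Finset.univ_nonempty
    have hT : (∑ j, β j * Real.exp ((g j - C i j) / ε))
        = Real.exp (-(fs i) / ε) * ∑ j, w j * Real.exp ((g j - gs j) / ε) := by
      rw [Finset.mul_sum]
      apply Finset.sum_congr rfl
      intro j _
      rw [hwdef]
      simp only
      rw [show (g j - C i j) / ε
          = -(fs i) / ε + ((fs i + gs j - C i j) / ε + (g j - gs j) / ε) by ring,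
        Real.exp_add, Real.exp_add]
      ring
    have htrans : transformG β C ε g i
        = fs i + -ε * Real.log (∑ j, w j * Real.exp ((g j - gs j) / ε)) := by
      show -ε * Real.log (∑ j, β j * Real.exp ((g j - C i j) / ε)) = _
      rw [hT, Real.log_mul (Real.exp_ne_zero _) hSpos.ne', Real.log_exp]
      field_simp
      ring
    have hRop : Rop β C ε fs gs (g - gs) i = ∑ j, w j * (g j - gs j) := by
      simp only [Rop, Pi.sub_apply, hwdef]
    have ht' : ∀ j, |g j - gs j| ≤ t := by
      intro j
      have := norm_le_pi_norm (g - gs) j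
      simp only [Pi.sub_apply, Real.norm_eq_abs] at this
      exact this.trans (le_max_right _ _)
    have hfinal := comp_lemma w (fun j => g j - gs j) hw hws ε t hε ht' htε
    simp only [Pi.add_apply, Pi.sub_apply, Real.norm_eq_abs]
    rw [htrans, hRop]
    have : fs i + -ε * Real.log (∑ j, w j * Real.exp ((g j - gs j) / ε)) - fs i
        + ∑ j, w j * (g j - gs j)
        = -ε * Real.log (∑ j, w j * Real.exp ((g j - gs j) / ε))
          + ∑ j, w j * (g j - gs j) := by ring
    rw [this]
    exact hfinal
  · rw [pi_norm_le_iff_of_nonneg hc]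
    intro j
    set w : Fin n → ℝ := fun i => α i * Real.exp ((fs i + gs j - C i j) / ε) with hwdef
    have hw : ∀ i, 0 < w i := fun i => mul_pos (hα i) (Real.exp_pos _)
    have hD : 0 < ∑ i, α i * Real.exp ((fs i - C i j) / ε) :=
      Finset.sum_pos (fun i _ => mul_pos (hα i) (Real.exp_pos _)) Finset.univ_nonempty
    have hgsj : gs j = -ε * Real.log (∑ i, α i * Real.exp ((fs i - C i j) / ε)) := by
      rw [hgs]; rfl
    have hexp : Real.exp (gs j / ε) = (∑ i, α i * Real.exp ((fs i - C i j) / ε))⁻¹ := by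
      rw [hgsj]
      have h1 : -ε * Real.log (∑ i, α i * Real.exp ((fs i - C i j) / ε)) / ε
          = -Real.log (∑ i, α i * Real.exp ((fs i - C i j) / ε)) := by
        field_simp
      rw [h1, Real.exp_neg, Real.exp_log hD]
    have hws : ∑ i, w i = 1 := by
      have hterm : ∀ i, w i = Real.exp (gs j / ε) * (α i * Real.exp ((fs i - C i j) / ε)) := by
        intro i
        rw [hwdef]
        simp only
        rw [show (fs i + gs j - C i j) / ε = gs j / ε + (fs i - C i j) / ε by ring,
          Real.exp_add]
        ring
      rw [Finset.sum_congr rfl (fun i _ => hterm i), ← Finset.mul_sum, hexp,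
        inv_mul_cancel₀ hD.ne']
    have hSpos : 0 < ∑ i, w i * Real.exp ((f i - fs i) / ε) :=
      Finset.sum_pos (fun i _ => mul_pos (hw i) (Real.exp_pos _)) Finset.univ_nonempty
    have hT : (∑ i, α i * Real.exp ((f i - C i j) / ε))
        = Real.exp (-(gs j) / ε) * ∑ i, w i * Real.exp ((f i - fs i) / ε) := by
      rw [Finset.mul_sum]
      apply Finset.sum_congr rfl
      intro i _
      rw [hwdef]
      simp only
      rw [show (f i - C i j) / ε
          = -(gs j) / ε + ((fs i + gs j - C i j) / ε + (f i - fs i) / ε) by ring,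
        Real.exp_add, Real.exp_add]
      ring
    have htrans : transformF α C ε f j
        = gs j + -ε * Real.log (∑ i, w i * Real.exp ((f i - fs i) / ε)) := by
      show -ε * Real.log (∑ i, α i * Real.exp ((f i - C i j) / ε)) = _
      rw [hT, Real.log_mul (Real.exp_ne_zero _) hSpos.ne', Real.log_exp]
      field_simp
      ring
    have hRop : RopT α C ε fs gs (f - fs) j = ∑ i, w i * (f i - fs i) := by
      simp only [RopT, Pi.sub_apply, hwdef]
    have ht' : ∀ i, |f i - fs i| ≤ t := by
      intro i
      have := norm_le_pi_norm (f - fs) i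
      simp only [Pi.sub_apply, Real.norm_eq_abs] at this
      exact this.trans (le_max_left _ _)
    have hfinal := comp_lemma w (fun i => f i - fs i) hw hws ε t hε ht' htε
    simp only [Pi.add_apply, Pi.sub_apply, Real.norm_eq_abs]
    rw [htrans, hRop]
    have : gs j + -ε * Real.log (∑ i, w i * Real.exp ((f i - fs i) / ε)) - gs j
        + ∑ i, w i * (f i - fs i)
        = -ε * Real.log (∑ i, w i * Real.exp ((f i - fs i) / ε))
          + ∑ i, w i * (f i - fs i) := by ring
    rw [this]
    exact hfinal
end

section
/- Asymptotic rate of the Sinkhorn–Knopp iteration: let ρ₁ denote the largest eigenvalue of K_ε restricted to the orthogonal complement (in ⟨·,·⟩_H) of the span of (𝟙_n, 𝟙_m) and (𝟙_n, −𝟙_m), i.e. the second-largest eigenvalue of K_ε. If the Sinkhorn iterates f_{k+1} = ((f_k)^{C,ε})^{C,ε} converge to f* modulo additive constants (d_α(f_k, f*) → 0), then there exists a constant C > 0 such that for all k, d_α(f_{k+1}, f*) ≤ ρ₁²·d_α(f_k, f*) + C·d_α(f_k, f*)². -/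
open Real Filter RealInnerProductSpace

/-- Quotient norm modulo additive constants:
`d_α(f,f') = inf_{c ∈ ℝ} ‖f − f' − c·𝟙‖_α` with `‖h‖_α² = ∑ᵢ αᵢ hᵢ²`. -/
noncomputable def dalpha {n : ℕ} (α : Fin n → ℝ) (f f' : Fin n → ℝ) : ℝ :=
  ⨅ c : ℝ, Real.sqrt (∑ i, α i * (f i - f' i - c) ^ 2)

lemma dalpha_nonneg {n : ℕ} (α : Fin n → ℝ) (f f' : Fin n → ℝ) : 0 ≤ dalpha α f f' :=
  Real.iInf_nonneg fun _ => Real.sqrt_nonneg _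

lemma dalpha_le {n : ℕ} (α : Fin n → ℝ) (f f' : Fin n → ℝ) (c : ℝ) :
    dalpha α f f' ≤ Real.sqrt (∑ i, α i * (f i - f' i - c) ^ 2) :=
  ciInf_le ⟨0, by rintro x ⟨c', rfl⟩; exact Real.sqrt_nonneg _⟩ c

lemma dalpha_eq_norm {n : ℕ} (α : Fin n → ℝ) (hαs : ∑ i, α i = 1)
    (f f' : Fin n → ℝ) :
    dalpha α f f' =
      Real.sqrt (∑ i, α i * (f i - f' i - ∑ i', α i' * (f i' - f' i')) ^ 2) := by
  set mb := ∑ i', α i' * (f i' - f' i') with hmb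
  have key : ∀ c : ℝ, ∑ i, α i * (f i - f' i - c) ^ 2
      = (∑ i, α i * (f i - f' i - mb) ^ 2) + (mb - c) ^ 2 := by
    intro c
    have expand : ∀ i, α i * (f i - f' i - c) ^ 2
        = α i * (f i - f' i - mb) ^ 2 + 2 * (mb - c) * (α i * (f i - f' i) - α i * mb)
          + α i * (mb - c) ^ 2 := by intro i; ring
    rw [Finset.sum_congr rfl fun i _ => expand i]
    rw [Finset.sum_add_distrib, Finset.sum_add_distrib]
    have h1 : ∑ x : Fin n, α x * mb = mb := by rw [← Finset.sum_mul, hαs, one_mul]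
    have h2 : ∑ x : Fin n, α x * (mb - c) ^ 2 = (mb - c) ^ 2 := by
      rw [← Finset.sum_mul, hαs, one_mul]
    have h3 : ∑ x : Fin n, 2 * (mb - c) * (α x * (f x - f' x) - α x * mb) = 0 := by
      rw [← Finset.mul_sum, Finset.sum_sub_distrib, h1, ← hmb]; ring
    rw [h2, h3]
    ring
  apply le_antisymm
  · have := dalpha_le α f f' mb
    simpa using this
  · apply le_ciInf
    intro c
    rw [key c]
    apply Real.sqrt_le_sqrt
    nlinarith [sq_nonneg (mb - c)]

lemma dalpha_shift {n : ℕ} (α : Fin n → ℝ) (hαs : ∑ i, α i = 1)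
    (f f' : Fin n → ℝ) (c₀ : ℝ) :
    dalpha α (fun i => f i + c₀) f' = dalpha α f f' := by
  rw [dalpha_eq_norm α hαs, dalpha_eq_norm α hαs]
  congr 1
  have : ∑ i', α i' * (f i' + c₀ - f' i') = (∑ i', α i' * (f i' - f' i')) + c₀ := by
    have h1 : ∑ i' : Fin n, α i' * c₀ = c₀ := by rw [← Finset.sum_mul, hαs, one_mul]
    have h2 : ∀ i : Fin n, α i * (f i + c₀ - f' i) = α i * (f i - f' i) + α i * c₀ :=
      fun i => by ring
    rw [Finset.sum_congr rfl fun i _ => h2 i, Finset.sum_add_distrib, h1]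
  rw [this]
  apply Finset.sum_congr rfl; intro i _; ring





lemma log1p_lower {X : ℝ} (hX : |X| ≤ 1/2) : X - 2 * X ^ 2 ≤ Real.log (1 + X) := by
  have h1 : (0:ℝ) < 1 + X := by have := abs_le.1 hX; linarith [this.1]
  have h2 : Real.log (1 + X)⁻¹ ≤ (1 + X)⁻¹ - 1 :=
    Real.log_le_sub_one_of_pos (inv_pos.2 h1)
  rw [Real.log_inv] at h2
  have h3 : 1 - (1 + X)⁻¹ ≤ Real.log (1 + X) := by linarith
  refine le_trans ?_ h3
  rw [← sub_nonneg]
  have hX1 : -(1/2) ≤ X := by linarith [(abs_le.1 hX).1]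
  have h4 : 0 ≤ X ^ 2 * (1 + 2 * X) := by nlinarith [sq_nonneg X]
  have h5 : 1 - (1 + X)⁻¹ - (X - 2 * X ^ 2) = X ^ 2 * (1 + 2 * X) / (1 + X) := by
    field_simp
    ring
  rw [h5]
  exact div_nonneg h4 (le_of_lt h1)

lemma lse_core {n : ℕ} (pp : Fin n → ℝ) (hp : ∀ i, 0 ≤ pp i) (hps : ∑ i, pp i = 1)
    (x : Fin n → ℝ) (b : ℝ) (hx : ∀ i, |x i| ≤ b) (hb : b ≤ 1/2) :
    |Real.log (∑ i, pp i * Real.exp (x i)) - ∑ i, pp i * x i| ≤ 3 * b ^ 2 := by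
  have hb0 : 0 ≤ b := by
    by_contra h
    push_neg at h
    have hne : n ≠ 0 := by
      rintro rfl
      simp at hps
    obtain ⟨i⟩ := Fin.pos_iff_nonempty.1 (Nat.pos_of_ne_zero hne)
    exact absurd (le_trans (abs_nonneg _) (hx i)) (by linarith)
  set X := ∑ i, pp i * x i with hXdef
  have hXb : |X| ≤ b := by
    calc |X| ≤ ∑ i, |pp i * x i| := Finset.abs_sum_le_sum_abs _ _
    _ ≤ ∑ i, pp i * b := by
        apply Finset.sum_le_sum
        intro i _
        rw [abs_mul, abs_of_nonneg (hp i)]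
        exact mul_le_mul_of_nonneg_left (hx i) (hp i)
    _ = b := by rw [← Finset.sum_mul, hps, one_mul]
  set S := ∑ i, pp i * Real.exp (x i) with hSdef
  have hSlow : 1 + X ≤ S := by
    rw [hXdef, hSdef]
    have : ∀ i : Fin n, pp i * (1 + x i) ≤ pp i * Real.exp (x i) := fun i =>
      mul_le_mul_of_nonneg_left (by linarith [Real.add_one_le_exp (x i)]) (hp i)
    have e1 : ∑ i, pp i * (1 + x i) = (∑ i, pp i) + ∑ i, pp i * x i := by
      rw [← Finset.sum_add_distrib]
      apply Finset.sum_congr rfl; intro i _; ring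
    calc 1 + ∑ i, pp i * x i = ∑ i, pp i * (1 + x i) := by rw [e1, hps]
    _ ≤ ∑ i, pp i * Real.exp (x i) := Finset.sum_le_sum fun i _ => this i
  have hexp_up : ∀ i : Fin n, Real.exp (x i) ≤ 1 + x i + (3/4) * x i ^ 2 := by
    intro i
    have hx1 : |x i| ≤ 1 := le_trans (hx i) (by linarith)
    have h := Real.exp_bound hx1 (n := 2) (by norm_num)
    have hsum : ∑ m ∈ Finset.range 2, x i ^ m / m.factorial = 1 + x i := by
      simp [Finset.sum_range_succ]
    rw [hsum] at h
    have h2 := (abs_sub_le_iff.1 h).1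
    norm_num [Nat.factorial] at h2
    linarith
  have hSup : S ≤ 1 + X + (3/4) * b ^ 2 := by
    rw [hSdef, hXdef]
    calc ∑ i, pp i * Real.exp (x i) ≤ ∑ i, pp i * (1 + x i + (3/4) * b ^ 2) := by
          apply Finset.sum_le_sum
          intro i _
          apply mul_le_mul_of_nonneg_left _ (hp i)
          refine le_trans (hexp_up i) ?_
          have : x i ^ 2 ≤ b ^ 2 := by
            rw [← sq_abs]
            exact pow_le_pow_left₀ (abs_nonneg _) (hx i) 2
          linarith
    _ = 1 + (∑ i, pp i * x i) + (3/4) * b ^ 2 := by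
          rw [Finset.sum_congr rfl (fun i _ => by ring :
            ∀ i ∈ Finset.univ, pp i * (1 + x i + (3/4) * b ^ 2)
              = pp i * x i + pp i * (1 + (3/4) * b ^ 2))]
          rw [Finset.sum_add_distrib, ← Finset.sum_mul, hps]
          ring
  have hSpos : 0 < S := by
    have : -b ≤ X := neg_le_of_abs_le hXb
    linarith
  have hupper : Real.log S - X ≤ (3/4) * b ^ 2 := by
    have := Real.log_le_sub_one_of_pos hSpos
    linarith
  have hlower : X - Real.log S ≤ 2 * b ^ 2 := by
    have h1X : (0:ℝ) < 1 + X := by have := abs_le.1 hXb; linarith [this.1]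
    have hlog : Real.log (1 + X) ≤ Real.log S := Real.log_le_log h1X hSlow
    have hlog2 : X - 2 * X ^ 2 ≤ Real.log (1 + X) := log1p_lower (le_trans hXb hb)
    have hX2 : X ^ 2 ≤ b ^ 2 := by
      rw [← sq_abs]
      exact pow_le_pow_left₀ (abs_nonneg _) hXb 2
    linarith
  rw [abs_sub_le_iff]
  constructor
  · nlinarith [sq_nonneg b]
  · nlinarith [sq_nonneg b]





lemma spectral_bound {N : Type*} [Fintype N] [DecidableEq N]
    (M : Matrix N N ℝ) (hM : M.IsHermitian) (ρ : ℝ)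
    (w₁ w₂ : EuclideanSpace ℝ N)
    (hw₁ : M.toEuclideanLin w₁ = w₁) (hw₂ : M.toEuclideanLin w₂ = -w₂)
    (hw₁₂ : ⟪w₁, w₂⟫ = 0) (hw₁n : ⟪w₁, w₁⟫ = 2) (hw₂n : ⟪w₂, w₂⟫ = 2)
    (hmax : ∀ (r : ℝ) (v : EuclideanSpace ℝ N), v ≠ 0 → ⟪w₁, v⟫ = 0 → ⟪w₂, v⟫ = 0 →
      M.toEuclideanLin v = r • v → |r| ≤ ρ)
    (v : EuclideanSpace ℝ N) (hv₁ : ⟪w₁, v⟫ = 0) (hv₂ : ⟪w₂, v⟫ = 0) :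
    ‖M.toEuclideanLin v‖ ≤ ρ * ‖v‖ := by
  classical
  by_cases hv0 : v = 0
  · simp [hv0]
  have hsym : (Matrix.toEuclideanLin M).IsSymmetric :=
    Matrix.isHermitian_iff_isSymmetric.1 hM
  set T := Matrix.toEuclideanLin M with hT
  set bb := hM.eigenvectorBasis with hbb
  set μ := hM.eigenvalues with hμ
  have hTb : ∀ j, T (bb j) = μ j • bb j := by
    intro j
    have h := hM.mulVec_eigenvectorBasis j
    rw [hT, Matrix.toEuclideanLin_apply]
    exact congrArg (WithLp.equiv 2 (N → ℝ)).symm h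
  -- components
  set c : N → ℝ := fun j => ⟪bb j, v⟫ with hc
  have hcomp : ∀ j, bb.repr (T v) j = μ j * c j := by
    intro j
    rw [bb.repr_apply_apply]
    have h1 : ⟪T (bb j), v⟫ = ⟪bb j, T v⟫ := hsym (bb j) v
    rw [← h1, hTb j, real_inner_smul_left]
  have hreprv : ∀ j, bb.repr v j = c j := fun j => bb.repr_apply_apply v j
  -- each eigenvalue with nonzero coefficient satisfies |μ j| ≤ ρ
  have hkey : ∀ j, c j ≠ 0 → |μ j| ≤ ρ := by
    intro j hcj
    set a := ⟪w₁, bb j⟫ with ha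
    set b2 := ⟪w₂, bb j⟫ with hb2
    set q : EuclideanSpace ℝ N := bb j - (a/2) • w₁ - (b2/2) • w₂ with hq
    have fact1 : a = μ j * a := by
      have h1 : ⟪T w₁, bb j⟫ = ⟪w₁, T (bb j)⟫ := hsym w₁ (bb j)
      rw [hw₁, hTb j, real_inner_smul_right] at h1
      exact h1
    have fact2 : -b2 = μ j * b2 := by
      have h1 : ⟪T w₂, bb j⟫ = ⟪w₂, T (bb j)⟫ := hsym w₂ (bb j)
      rw [hw₂, hTb j, real_inner_smul_right, inner_neg_left] at h1
      exact h1
    have hqw₁ : ⟪w₁, q⟫ = 0 := by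
      rw [hq, inner_sub_right, inner_sub_right, real_inner_smul_right,
        real_inner_smul_right, hw₁n, hw₁₂]
      ring
    have hqw₂ : ⟪w₂, q⟫ = 0 := by
      have hcomm : (inner ℝ w₂ w₁ : ℝ) = 0 := by rw [real_inner_comm]; exact hw₁₂
      rw [hq, inner_sub_right, inner_sub_right, real_inner_smul_right,
        real_inner_smul_right, hw₂n, hcomm]
      ring
    have hqv : ⟪q, v⟫ = c j := by
      rw [hq, inner_sub_left, inner_sub_left, real_inner_smul_left,
        real_inner_smul_left, hv₁, hv₂, hc]
      ring
    have hq0 : q ≠ 0 := by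
      intro h0
      rw [h0, inner_zero_left] at hqv
      exact hcj hqv.symm
    have hTq : T q = μ j • q := by
      have e1 : μ j * (a/2) = a/2 := by linear_combination (-1/2 : ℝ) * fact1
      have e2 : μ j * (b2/2) = -(b2/2) := by linear_combination (-1/2 : ℝ) * fact2
      have expand : T q = μ j • bb j - (a/2) • w₁ + (b2/2) • w₂ := by
        rw [hq, map_sub, map_sub, map_smul, map_smul, hTb j, hw₁, hw₂, smul_neg]
        abel
      rw [expand, hq, smul_sub, smul_sub, smul_smul, smul_smul, e1, e2, neg_smul]
      abel
    exact hmax (μ j) q hq0 hqw₁ hqw₂ hTq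
  obtain ⟨j₀, hj₀⟩ : ∃ j, c j ≠ 0 := by
    by_contra hall
    push_neg at hall
    apply hv0
    have hz : bb.repr v = 0 := by
      ext j
      simpa [hreprv j] using hall j
    simpa using bb.repr.map_eq_zero_iff.1 hz
  have hρ0 : 0 ≤ ρ := le_trans (abs_nonneg _) (hkey j₀ hj₀)
  have hnorm : ∀ x : EuclideanSpace ℝ N, ‖x‖ = Real.sqrt (∑ j, (bb.repr x j) ^ 2) := by
    intro x
    rw [← bb.repr.norm_map x, EuclideanSpace.norm_eq]
    congr 1
    apply Finset.sum_congr rfl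
    intro j _
    rw [Real.norm_eq_abs, sq_abs]
  rw [hnorm (T v), hnorm v]
  have hterm : ∀ j, (bb.repr (T v) j) ^ 2 ≤ ρ ^ 2 * (bb.repr v j) ^ 2 := by
    intro j
    rw [hcomp j, hreprv j]
    by_cases h : c j = 0
    · simp [h]
    · have h1 := hkey j h
      have h2 : μ j ^ 2 ≤ ρ ^ 2 := by nlinarith [abs_le.1 h1, abs_nonneg (μ j)]
      nlinarith [sq_nonneg (c j)]
  calc Real.sqrt (∑ j, (bb.repr (T v) j) ^ 2)
      ≤ Real.sqrt (∑ j, ρ ^ 2 * (bb.repr v j) ^ 2) :=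
        Real.sqrt_le_sqrt (Finset.sum_le_sum fun j _ => hterm j)
    _ = ρ * Real.sqrt (∑ j, (bb.repr v j) ^ 2) := by
        rw [← Finset.mul_sum, Real.sqrt_mul (sq_nonneg ρ), Real.sqrt_sq hρ0]

noncomputable def emb2 {n m : ℕ} (α : Fin n → ℝ) (β : Fin m → ℝ)
    (p : (Fin n → ℝ) × (Fin m → ℝ)) : EuclideanSpace ℝ (Fin n ⊕ Fin m) :=
  (WithLp.equiv 2 _).symm
    (Sum.elim (fun i => Real.sqrt (α i) * p.1 i) (fun j => Real.sqrt (β j) * p.2 j))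

noncomputable def Mmat {n m : ℕ} (α : Fin n → ℝ) (β : Fin m → ℝ)
    (P : Fin n → Fin m → ℝ) : Matrix (Fin n ⊕ Fin m) (Fin n ⊕ Fin m) ℝ :=
  fun a b => match a, b with
  | Sum.inl i, Sum.inr j => Real.sqrt (α i) * Real.sqrt (β j) * P i j
  | Sum.inr j, Sum.inl i => Real.sqrt (α i) * Real.sqrt (β j) * P i j
  | _, _ => 0

section trans

variable {n m : ℕ} {α : Fin n → ℝ} {β : Fin m → ℝ} {P : Fin n → Fin m → ℝ}

lemma Mmat_isHermitian : (Mmat α β P).IsHermitian := by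
  unfold Matrix.IsHermitian
  ext a b
  rcases a with i | j <;> rcases b with i' | j' <;>
    simp [Matrix.conjTranspose_apply, Mmat]

lemma emb2_apply_inl (p : (Fin n → ℝ) × (Fin m → ℝ)) (i : Fin n) :
    emb2 α β p (Sum.inl i) = Real.sqrt (α i) * p.1 i := rfl

lemma emb2_apply_inr (p : (Fin n → ℝ) × (Fin m → ℝ)) (j : Fin m) :
    emb2 α β p (Sum.inr j) = Real.sqrt (β j) * p.2 j := rfl

lemma inner_emb2 (hα : ∀ i, 0 < α i) (hβ : ∀ j, 0 < β j)
    (p q : (Fin n → ℝ) × (Fin m → ℝ)) :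
    ⟪emb2 α β p, emb2 α β q⟫ = innerH α β p q := by
  rw [PiLp.inner_apply]
  rw [Fintype.sum_sum_type]
  unfold innerH
  congr 1
  · apply Finset.sum_congr rfl
    intro i _
    simp only [RCLike.inner_apply, conj_trivial, emb2_apply_inl]
    have h := Real.mul_self_sqrt (le_of_lt (hα i))
    linear_combination (p.1 i * q.1 i) * h
  · apply Finset.sum_congr rfl
    intro j _
    simp only [RCLike.inner_apply, conj_trivial, emb2_apply_inr]
    have h := Real.mul_self_sqrt (le_of_lt (hβ j))
    linear_combination (p.2 j * q.2 j) * h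

lemma emb2_smul (r : ℝ) (p : (Fin n → ℝ) × (Fin m → ℝ)) :
    emb2 α β (r • p) = r • emb2 α β p := by
  unfold emb2
  apply (WithLp.equiv 2 _).injective
  funext a
  rcases a with i | j <;>
    simp [Prod.smul_fst, Prod.smul_snd, Pi.smul_apply, smul_eq_mul] <;> ring

lemma emb2_inj (hα : ∀ i, 0 < α i) (hβ : ∀ j, 0 < β j)
    (p q : (Fin n → ℝ) × (Fin m → ℝ))
    (h : emb2 α β p = emb2 α β q) : p = q := by
  have hc : ∀ a, emb2 α β p a = emb2 α β q a := fun a => congrFun (congrArg _ h) a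
  ext x
  · have := hc (Sum.inl x)
    rw [emb2_apply_inl, emb2_apply_inl] at this
    exact mul_left_cancel₀ (ne_of_gt (Real.sqrt_pos.2 (hα x))) this
  · have := hc (Sum.inr x)
    rw [emb2_apply_inr, emb2_apply_inr] at this
    exact mul_left_cancel₀ (ne_of_gt (Real.sqrt_pos.2 (hβ x))) this

lemma emb2_surj (hα : ∀ i, 0 < α i) (hβ : ∀ j, 0 < β j)
    (v : EuclideanSpace ℝ (Fin n ⊕ Fin m)) :
    ∃ p, emb2 α β p = v := by
  refine ⟨⟨fun i => v (Sum.inl i) / Real.sqrt (α i),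
    fun j => v (Sum.inr j) / Real.sqrt (β j)⟩, ?_⟩
  apply (WithLp.equiv 2 _).injective
  funext a
  rcases a with i | j
  · show Real.sqrt (α i) * (v (Sum.inl i) / Real.sqrt (α i)) = _
    rw [mul_div_cancel₀ _ (ne_of_gt (Real.sqrt_pos.2 (hα i)))]
    rfl
  · show Real.sqrt (β j) * (v (Sum.inr j) / Real.sqrt (β j)) = _
    rw [mul_div_cancel₀ _ (ne_of_gt (Real.sqrt_pos.2 (hβ j)))]
    rfl

lemma Mmat_mul_emb2 (hα : ∀ i, 0 < α i) (hβ : ∀ j, 0 < β j)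
    (p : (Fin n → ℝ) × (Fin m → ℝ)) :
    Matrix.toEuclideanLin (Mmat α β P) (emb2 α β p)
      = emb2 α β ((fun i => ∑ j, β j * P i j * p.2 j),
          (fun j => ∑ i, α i * P i j * p.1 i)) := by
  rw [Matrix.toEuclideanLin_apply]
  unfold emb2
  apply (WithLp.equiv 2 _).injective
  change (Mmat α β P).mulVec (Sum.elim (fun i => Real.sqrt (α i) * p.1 i)
    (fun j => Real.sqrt (β j) * p.2 j)) = _
  funext a
  rcases a with i | j
  · have : ((Mmat α β P).mulVec <| Sum.elim (fun i => Real.sqrt (α i) * p.1 i)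
        (fun j => Real.sqrt (β j) * p.2 j)) (Sum.inl i)
        = ∑ i', Mmat α β P (Sum.inl i) (Sum.inl i') * (Real.sqrt (α i') * p.1 i')
          + ∑ j, Mmat α β P (Sum.inl i) (Sum.inr j) * (Real.sqrt (β j) * p.2 j) := by
      simp [Matrix.mulVec, dotProduct, Fintype.sum_sum_type]
    rw [this]
    have h1 : ∑ i', Mmat α β P (Sum.inl i) (Sum.inl i') * (Real.sqrt (α i') * p.1 i') = 0 := by
      apply Finset.sum_eq_zero
      intro i' _
      show (0:ℝ) * _ = 0
      ring
    have h2 : ∑ j, Mmat α β P (Sum.inl i) (Sum.inr j) * (Real.sqrt (β j) * p.2 j)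
        = Real.sqrt (α i) * ∑ j, β j * P i j * p.2 j := by
      rw [Finset.mul_sum]
      apply Finset.sum_congr rfl
      intro j _
      show Real.sqrt (α i) * Real.sqrt (β j) * P i j * (Real.sqrt (β j) * p.2 j) = _
      have hb := Real.mul_self_sqrt (le_of_lt (hβ j))
      linear_combination (Real.sqrt (α i) * P i j * p.2 j) * hb
    rw [h1, h2, zero_add]
    rfl
  · have : ((Mmat α β P).mulVec <| Sum.elim (fun i => Real.sqrt (α i) * p.1 i)
        (fun j => Real.sqrt (β j) * p.2 j)) (Sum.inr j)
        = ∑ i, Mmat α β P (Sum.inr j) (Sum.inl i) * (Real.sqrt (α i) * p.1 i)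
          + ∑ j', Mmat α β P (Sum.inr j) (Sum.inr j') * (Real.sqrt (β j') * p.2 j') := by
      simp [Matrix.mulVec, dotProduct, Fintype.sum_sum_type]
    rw [this]
    have h2 : ∑ j', Mmat α β P (Sum.inr j) (Sum.inr j') * (Real.sqrt (β j') * p.2 j') = 0 := by
      apply Finset.sum_eq_zero
      intro j' _
      show (0:ℝ) * _ = 0
      ring
    have h1 : ∑ i, Mmat α β P (Sum.inr j) (Sum.inl i) * (Real.sqrt (α i) * p.1 i)
        = Real.sqrt (β j) * ∑ i, α i * P i j * p.1 i := by
      rw [Finset.mul_sum]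
      apply Finset.sum_congr rfl
      intro i _
      show Real.sqrt (α i) * Real.sqrt (β j) * P i j * (Real.sqrt (α i) * p.1 i) = _
      have ha := Real.mul_self_sqrt (le_of_lt (hα i))
      linear_combination (Real.sqrt (β j) * P i j * p.1 i) * ha
    rw [h1, h2, add_zero]
    rfl

lemma norm_emb2_left (hα : ∀ i, 0 < α i) (w : Fin n → ℝ) :
    ‖emb2 α β ((w, fun _ => 0) : (Fin n → ℝ) × (Fin m → ℝ))‖
      = Real.sqrt (∑ i, α i * w i ^ 2) := by
  rw [EuclideanSpace.norm_eq]
  congr 1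
  rw [Fintype.sum_sum_type]
  have h2 : ∀ j : Fin m, ‖emb2 α β ((w, fun _ => 0) : (Fin n → ℝ) × (Fin m → ℝ))
      (Sum.inr j)‖ ^ 2 = 0 := by
    intro j
    rw [emb2_apply_inr]
    simp
  rw [Finset.sum_congr rfl fun j _ => h2 j]
  simp only [Finset.sum_const_zero, add_zero]
  apply Finset.sum_congr rfl
  intro i _
  rw [emb2_apply_inl, Real.norm_eq_abs, sq_abs, mul_pow, Real.sq_sqrt (le_of_lt (hα i))]

end trans

section spectralmain

variable {n m : ℕ} {α : Fin n → ℝ} {β : Fin m → ℝ} {P : Fin n → Fin m → ℝ}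

lemma innerH_comm (p q : (Fin n → ℝ) × (Fin m → ℝ)) :
    innerH α β p q = innerH α β q p := by
  unfold innerH
  congr 1
  · apply Finset.sum_congr rfl; intro i _; ring
  · apply Finset.sum_congr rfl; intro j _; ring

lemma emb2_zero : emb2 α β (0 : (Fin n → ℝ) × (Fin m → ℝ)) = 0 := by
  unfold emb2
  apply (WithLp.equiv 2 _).injective
  funext a
  rcases a with i | j <;> simp

lemma spectral_main
    (hα : ∀ i, 0 < α i) (hβ : ∀ j, 0 < β j)
    (hαs : ∑ i, α i = 1) (hβs : ∑ j, β j = 1)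
    (hrow : ∀ j, ∑ i, α i * P i j = 1) (hcol : ∀ i, ∑ j, β j * P i j = 1)
    (ρ₁ : ℝ)
    (hex : ∃ p : (Fin n → ℝ) × (Fin m → ℝ), p ≠ 0 ∧
        innerH α β p ((fun _ => 1), (fun _ => 1)) = 0 ∧
        innerH α β p ((fun _ => 1), (fun _ => -1)) = 0 ∧
        ((fun i => ∑ j, β j * P i j * p.2 j), (fun j => ∑ i, α i * P i j * p.1 i)) = ρ₁ • p)
    (hmax : ∀ (r : ℝ) (p : (Fin n → ℝ) × (Fin m → ℝ)), p ≠ 0 →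
        innerH α β p ((fun _ => 1), (fun _ => 1)) = 0 →
        innerH α β p ((fun _ => 1), (fun _ => -1)) = 0 →
        ((fun i => ∑ j, β j * P i j * p.2 j), (fun j => ∑ i, α i * P i j * p.1 i)) = r • p →
        r ≤ ρ₁) :
    0 ≤ ρ₁ ∧ ∀ u : Fin n → ℝ, (∑ i, α i * u i) = 0 →
      Real.sqrt (∑ i, α i * (∑ j, β j * P i j * (∑ i', α i' * P i' j * u i')) ^ 2)
        ≤ ρ₁ ^ 2 * Real.sqrt (∑ i, α i * u i ^ 2) := by
  have hherm : (Mmat α β P).IsHermitian := Mmat_isHermitian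
  have hsym : (Matrix.toEuclideanLin (Mmat α β P)).IsSymmetric :=
    Matrix.isHermitian_iff_isSymmetric.1 hherm
  set w₁ : EuclideanSpace ℝ (Fin n ⊕ Fin m) :=
    emb2 α β ((fun _ => 1), (fun _ => 1)) with hw₁def
  set w₂ : EuclideanSpace ℝ (Fin n ⊕ Fin m) :=
    emb2 α β ((fun _ => 1), (fun _ => -1)) with hw₂def
  have hTw₁ : Matrix.toEuclideanLin (Mmat α β P) w₁ = w₁ := by
    rw [hw₁def, Mmat_mul_emb2 hα hβ]
    apply congrArg
    refine Prod.ext ?_ ?_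
    · funext i
      simpa using hcol i
    · funext j
      simpa using hrow j
  have hTw₂ : Matrix.toEuclideanLin (Mmat α β P) w₂ = -w₂ := by
    rw [hw₂def, Mmat_mul_emb2 hα hβ]
    have key : ((fun i => ∑ j, β j * P i j *
          (((fun _ => 1), (fun _ => -1)) : (Fin n → ℝ) × (Fin m → ℝ)).2 j),
        (fun j => ∑ i, α i * P i j *
          (((fun _ => 1), (fun _ => -1)) : (Fin n → ℝ) × (Fin m → ℝ)).1 i))
        = (-1 : ℝ) • ((((fun _ => 1), (fun _ => -1))) : (Fin n → ℝ) × (Fin m → ℝ)) := by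
      refine Prod.ext ?_ ?_
      · funext i
        show (∑ j, β j * P i j * (-1)) = (-1 : ℝ) • (1:ℝ)
        have : ∑ j, β j * P i j * (-1) = -(∑ j, β j * P i j) := by
          rw [← Finset.sum_neg_distrib]
          apply Finset.sum_congr rfl; intro j _; ring
        rw [this, hcol i]
        simp
      · funext j
        show (∑ i, α i * P i j * 1) = (-1 : ℝ) • (-1:ℝ)
        have : ∑ i, α i * P i j * 1 = ∑ i, α i * P i j := by
          apply Finset.sum_congr rfl; intro i _; ring
        rw [this, hrow j]
        simp
    rw [key, emb2_smul]
    simp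
  have hw₁₂ : ⟪w₁, w₂⟫ = 0 := by
    rw [hw₁def, hw₂def, inner_emb2 hα hβ]
    unfold innerH
    simp only [mul_one, mul_neg]
    rw [Finset.sum_neg_distrib, hαs, hβs]
    ring
  have hw₁n : ⟪w₁, w₁⟫ = 2 := by
    rw [hw₁def, inner_emb2 hα hβ]
    unfold innerH
    simp only [mul_one]
    rw [hαs, hβs]
    norm_num
  have hw₂n : ⟪w₂, w₂⟫ = 2 := by
    rw [hw₂def, inner_emb2 hα hβ]
    unfold innerH
    simp only [mul_one, mul_neg, neg_neg]
    rw [hαs, hβs]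
    norm_num
  have hmax' : ∀ (r : ℝ) (v : EuclideanSpace ℝ (Fin n ⊕ Fin m)), v ≠ 0 →
      ⟪w₁, v⟫ = 0 → ⟪w₂, v⟫ = 0 →
      Matrix.toEuclideanLin (Mmat α β P) v = r • v → |r| ≤ ρ₁ := by
    intro r v hv0 h1 h2 heig
    obtain ⟨p, hp⟩ := emb2_surj hα hβ v
    have hp0 : p ≠ 0 := by
      intro h
      apply hv0
      rw [← hp, h, emb2_zero]
    have ho1 : innerH α β p ((fun _ => 1), (fun _ => 1)) = 0 := by
      rw [← inner_emb2 hα hβ, hp, ← hw₁def, real_inner_comm]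
      exact h1
    have ho2 : innerH α β p ((fun _ => 1), (fun _ => -1)) = 0 := by
      rw [← inner_emb2 hα hβ, hp, ← hw₂def, real_inner_comm]
      exact h2
    have hKp : ((fun i => ∑ j, β j * P i j * p.2 j),
        (fun j => ∑ i, α i * P i j * p.1 i)) = r • p := by
      apply emb2_inj hα hβ
      rw [← Mmat_mul_emb2 hα hβ, hp, heig, emb2_smul, hp]
    have hr1 : r ≤ ρ₁ := hmax r p hp0 ho1 ho2 hKp
    -- flip trick
    have hc1 : ∀ i, (∑ j, β j * P i j * p.2 j) = r * p.1 i := by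
      intro i
      have := congrFun (congrArg Prod.fst hKp) i
      simpa using this
    have hc2 : ∀ j, (∑ i, α i * P i j * p.1 i) = r * p.2 j := by
      intro j
      have := congrFun (congrArg Prod.snd hKp) j
      simpa using this
    set q : (Fin n → ℝ) × (Fin m → ℝ) := (p.1, -p.2) with hqdef
    have hq0 : q ≠ 0 := by
      intro h
      apply hp0
      rw [Prod.ext_iff] at h ⊢
      refine ⟨h.1, ?_⟩
      have := h.2
      show p.2 = 0
      have : -p.2 = 0 := this
      simpa [neg_eq_zero] using this
    have hqo1 : innerH α β q ((fun _ => 1), (fun _ => 1)) = 0 := by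
      rw [← ho2]
      unfold innerH
      congr 1
      apply Finset.sum_congr rfl; intro j _
      show β j * (-p.2) j * 1 = β j * p.2 j * (-1)
      simp [Pi.neg_apply]
    have hqo2 : innerH α β q ((fun _ => 1), (fun _ => -1)) = 0 := by
      rw [← ho1]
      unfold innerH
      congr 1
      apply Finset.sum_congr rfl; intro j _
      show β j * (-p.2) j * (-1) = β j * p.2 j * 1
      simp [Pi.neg_apply]
    have hKq : ((fun i => ∑ j, β j * P i j * q.2 j),
        (fun j => ∑ i, α i * P i j * q.1 i)) = (-r) • q := by
      refine Prod.ext ?_ ?_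
      · funext i
        show (∑ j, β j * P i j * (-p.2) j) = ((-r) • p.1) i
        have : ∑ j, β j * P i j * (-p.2) j = -(∑ j, β j * P i j * p.2 j) := by
          rw [← Finset.sum_neg_distrib]
          apply Finset.sum_congr rfl; intro j _
          simp [Pi.neg_apply]
        rw [this, hc1 i]
        simp [Pi.smul_apply, smul_eq_mul]
      · funext j
        show (∑ i, α i * P i j * p.1 i) = ((-r) • (-p.2)) j
        rw [hc2 j]
        simp [Pi.smul_apply, smul_eq_mul]
    have hr2 : -r ≤ ρ₁ := hmax (-r) q hq0 hqo1 hqo2 hKq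
    rw [abs_le]
    constructor <;> linarith
  -- ρ₁ ≥ 0
  have hρnn : 0 ≤ ρ₁ := by
    obtain ⟨p, hp0, h1, h2, heig⟩ := hex
    have hv0 : emb2 α β p ≠ 0 := by
      intro h
      apply hp0
      apply emb2_inj hα hβ
      rw [h, emb2_zero]
    have hT : Matrix.toEuclideanLin (Mmat α β P) (emb2 α β p) = ρ₁ • emb2 α β p := by
      rw [Mmat_mul_emb2 hα hβ, heig, emb2_smul]
    have h1' : ⟪w₁, emb2 α β p⟫ = 0 := by
      rw [hw₁def, real_inner_comm, inner_emb2 hα hβ]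
      exact h1
    have h2' : ⟪w₂, emb2 α β p⟫ = 0 := by
      rw [hw₂def, real_inner_comm, inner_emb2 hα hβ]
      exact h2
    have := hmax' ρ₁ (emb2 α β p) hv0 h1' h2' hT
    calc (0:ℝ) ≤ |ρ₁| := abs_nonneg _
    _ ≤ ρ₁ := this
  refine ⟨hρnn, ?_⟩
  intro u hu
  set x : EuclideanSpace ℝ (Fin n ⊕ Fin m) :=
    emb2 α β ((u, fun _ => 0) : (Fin n → ℝ) × (Fin m → ℝ)) with hxdef
  have hx1 : ⟪w₁, x⟫ = 0 := by
    rw [hw₁def, hxdef, inner_emb2 hα hβ]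
    unfold innerH
    simp only [mul_one, mul_zero]
    simp only [Finset.sum_const_zero, add_zero]
    rw [← hu]
  have hx2 : ⟪w₂, x⟫ = 0 := by
    rw [hw₂def, hxdef, inner_emb2 hα hβ]
    unfold innerH
    simp only [mul_one, mul_zero, mul_neg, neg_zero]
    simp only [Finset.sum_const_zero, add_zero]
    rw [← hu]
  have hy : Matrix.toEuclideanLin (Mmat α β P) x
      = emb2 α β (((fun _ => 0), (fun j => ∑ i', α i' * P i' j * u i'))
          : (Fin n → ℝ) × (Fin m → ℝ)) := by
    rw [hxdef, Mmat_mul_emb2 hα hβ]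
    apply congrArg
    refine Prod.ext ?_ ?_
    · funext i
      show (∑ j, β j * P i j * (0:ℝ)) = 0
      simp
    · funext j
      rfl
  have hz : Matrix.toEuclideanLin (Mmat α β P)
        (emb2 α β (((fun _ => 0), (fun j => ∑ i', α i' * P i' j * u i'))
          : (Fin n → ℝ) × (Fin m → ℝ)))
      = emb2 α β (((fun i => ∑ j, β j * P i j * (∑ i', α i' * P i' j * u i')),
          (fun _ => 0)) : (Fin n → ℝ) × (Fin m → ℝ)) := by
    rw [Mmat_mul_emb2 hα hβ]
    apply congrArg
    refine Prod.ext ?_ ?_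
    · funext i
      rfl
    · funext j
      show (∑ i', α i' * P i' j * (0:ℝ)) = 0
      simp
  have hb1 : ‖Matrix.toEuclideanLin (Mmat α β P) x‖ ≤ ρ₁ * ‖x‖ :=
    spectral_bound (Mmat α β P) hherm ρ₁ w₁ w₂ hTw₁ hTw₂ hw₁₂ hw₁n hw₂n hmax' x hx1 hx2
  have hy1 : ⟪w₁, Matrix.toEuclideanLin (Mmat α β P) x⟫ = 0 := by
    rw [real_inner_comm, hsym x w₁, hTw₁, real_inner_comm]
    exact hx1
  have hy2 : ⟪w₂, Matrix.toEuclideanLin (Mmat α β P) x⟫ = 0 := by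
    rw [real_inner_comm, hsym x w₂, hTw₂]
    rw [inner_neg_right, real_inner_comm]
    rw [hx2]
    ring
  have hb2 : ‖Matrix.toEuclideanLin (Mmat α β P) (Matrix.toEuclideanLin (Mmat α β P) x)‖
      ≤ ρ₁ * ‖Matrix.toEuclideanLin (Mmat α β P) x‖ :=
    spectral_bound (Mmat α β P) hherm ρ₁ w₁ w₂ hTw₁ hTw₂ hw₁₂ hw₁n hw₂n hmax' _ hy1 hy2
  have hnx : ‖x‖ = Real.sqrt (∑ i, α i * u i ^ 2) := by
    rw [hxdef]
    exact norm_emb2_left hα u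
  have hnz : ‖Matrix.toEuclideanLin (Mmat α β P) (Matrix.toEuclideanLin (Mmat α β P) x)‖
      = Real.sqrt (∑ i, α i * (∑ j, β j * P i j * (∑ i', α i' * P i' j * u i')) ^ 2) := by
    rw [hy, hz]
    exact norm_emb2_left hα _
  calc Real.sqrt (∑ i, α i * (∑ j, β j * P i j * (∑ i', α i' * P i' j * u i')) ^ 2)
      = ‖Matrix.toEuclideanLin (Mmat α β P) (Matrix.toEuclideanLin (Mmat α β P) x)‖ := hnz.symm
    _ ≤ ρ₁ * ‖Matrix.toEuclideanLin (Mmat α β P) x‖ := hb2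
    _ ≤ ρ₁ * (ρ₁ * ‖x‖) := mul_le_mul_of_nonneg_left hb1 hρnn
    _ = ρ₁ ^ 2 * Real.sqrt (∑ i, α i * u i ^ 2) := by rw [hnx]; ring

end spectralmain

section transforms

variable {n m : ℕ} {α : Fin n → ℝ} {β : Fin m → ℝ} {C : Fin n → Fin m → ℝ} {ε : ℝ}
  {fs : Fin n → ℝ} {gs : Fin m → ℝ}

lemma exp_sum_pos {k : ℕ} (hk : 0 < k) (γ : Fin k → ℝ) (hγ : ∀ i, 0 < γ i)
    (w : Fin k → ℝ) : 0 < ∑ i, γ i * Real.exp (w i) := by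
  have : Nonempty (Fin k) := Fin.pos_iff_nonempty.1 hk
  apply Finset.sum_pos
  · intro i _
    exact mul_pos (hγ i) (Real.exp_pos _)
  · exact Finset.univ_nonempty

lemma row_sum_one (hn : 0 < n) (hα : ∀ i, 0 < α i) (hε : 0 < ε)
    (hgs : gs = transformF α C ε fs) (j : Fin m) :
    ∑ i, α i * Real.exp ((fs i + gs j - C i j) / ε) = 1 := by
  have hS : 0 < ∑ i, α i * Real.exp ((fs i - C i j) / ε) :=
    exp_sum_pos hn α hα _
  have hgsj : gs j = -ε * Real.log (∑ i, α i * Real.exp ((fs i - C i j) / ε)) := by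
    rw [hgs]; rfl
  have hsplit : ∀ i, Real.exp ((fs i + gs j - C i j) / ε)
      = Real.exp ((fs i - C i j) / ε) * Real.exp (gs j / ε) := by
    intro i
    rw [← Real.exp_add]
    congr 1
    field_simp
    ring
  have hterm : ∑ i, α i * Real.exp ((fs i + gs j - C i j) / ε)
      = (∑ i, α i * Real.exp ((fs i - C i j) / ε)) * Real.exp (gs j / ε) := by
    rw [Finset.sum_mul]
    apply Finset.sum_congr rfl
    intro i _
    rw [hsplit i]
    ring
  rw [hterm, hgsj]
  have : -ε * Real.log (∑ i, α i * Real.exp ((fs i - C i j) / ε)) / ε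
      = -Real.log (∑ i, α i * Real.exp ((fs i - C i j) / ε)) := by
    field_simp
  rw [this, Real.exp_neg, Real.exp_log hS]
  field_simp

lemma col_sum_one (hm : 0 < m) (hβ : ∀ j, 0 < β j) (hε : 0 < ε)
    (hfs : fs = transformG β C ε gs) (i : Fin n) :
    ∑ j, β j * Real.exp ((fs i + gs j - C i j) / ε) = 1 := by
  have hS : 0 < ∑ j, β j * Real.exp ((gs j - C i j) / ε) :=
    exp_sum_pos hm β hβ _
  have hfsi : fs i = -ε * Real.log (∑ j, β j * Real.exp ((gs j - C i j) / ε)) := by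
    rw [hfs]; rfl
  have hsplit : ∀ j, Real.exp ((fs i + gs j - C i j) / ε)
      = Real.exp ((gs j - C i j) / ε) * Real.exp (fs i / ε) := by
    intro j
    rw [← Real.exp_add]
    congr 1
    field_simp
    ring
  have hterm : ∑ j, β j * Real.exp ((fs i + gs j - C i j) / ε)
      = (∑ j, β j * Real.exp ((gs j - C i j) / ε)) * Real.exp (fs i / ε) := by
    rw [Finset.sum_mul]
    apply Finset.sum_congr rfl
    intro j _
    rw [hsplit j]
    ring
  rw [hterm, hfsi]
  have : -ε * Real.log (∑ j, β j * Real.exp ((gs j - C i j) / ε)) / ε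
      = -Real.log (∑ j, β j * Real.exp ((gs j - C i j) / ε)) := by
    field_simp
  rw [this, Real.exp_neg, Real.exp_log hS]
  field_simp

lemma transformF_shift (hn : 0 < n) (hα : ∀ i, 0 < α i) (hε : 0 < ε)
    (f : Fin n → ℝ) (c : ℝ) :
    transformF α C ε (fun i => f i + c) = fun j => transformF α C ε f j - c := by
  funext j
  unfold transformF
  have hS : 0 < ∑ i, α i * Real.exp ((f i - C i j) / ε) := exp_sum_pos hn α hα _
  have hterm : ∑ i, α i * Real.exp ((f i + c - C i j) / ε)
      = Real.exp (c / ε) * ∑ i, α i * Real.exp ((f i - C i j) / ε) := by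
    rw [Finset.mul_sum]
    apply Finset.sum_congr rfl
    intro i _
    rw [show (f i + c - C i j) / ε = c / ε + (f i - C i j) / ε by ring, Real.exp_add]
    ring
  rw [hterm, Real.log_mul (Real.exp_ne_zero _) (ne_of_gt hS), Real.log_exp]
  field_simp
  ring

lemma transformG_shift (hm : 0 < m) (hβ : ∀ j, 0 < β j) (hε : 0 < ε)
    (g : Fin m → ℝ) (c : ℝ) :
    transformG β C ε (fun j => g j + c) = fun i => transformG β C ε g i - c := by
  funext i
  unfold transformG
  have hS : 0 < ∑ j, β j * Real.exp ((g j - C i j) / ε) := exp_sum_pos hm β hβ _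
  have hterm : ∑ j, β j * Real.exp ((g j + c - C i j) / ε)
      = Real.exp (c / ε) * ∑ j, β j * Real.exp ((g j - C i j) / ε) := by
    rw [Finset.mul_sum]
    apply Finset.sum_congr rfl
    intro j _
    rw [show (g j + c - C i j) / ε = c / ε + (g j - C i j) / ε by ring, Real.exp_add]
    ring
  rw [hterm, Real.log_mul (Real.exp_ne_zero _) (ne_of_gt hS), Real.log_exp]
  field_simp
  ring

lemma transformF_expand (hn : 0 < n) (hα : ∀ i, 0 < α i) (hε : 0 < ε)
    (u : Fin n → ℝ) (b : ℝ) (hu : ∀ i, |u i| ≤ b) (hbe : b ≤ ε / 2)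
    (j : Fin m) (hrowj : ∑ i, α i * Real.exp ((fs i + gs j - C i j) / ε) = 1) :
    |transformF α C ε (fun i => fs i + u i) j - gs j
      + ∑ i, α i * Real.exp ((fs i + gs j - C i j) / ε) * u i| ≤ 3 * b ^ 2 / ε := by
  set pp : Fin n → ℝ := fun i => α i * Real.exp ((fs i + gs j - C i j) / ε) with hppdef
  set x : Fin n → ℝ := fun i => u i / ε with hxdef
  have hppos : ∀ i, 0 < pp i := fun i => mul_pos (hα i) (Real.exp_pos _)
  have hSig : 0 < ∑ i, pp i * Real.exp (x i) := by
    apply Finset.sum_pos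
    · intro i _
      exact mul_pos (hppos i) (Real.exp_pos _)
    · have : Nonempty (Fin n) := Fin.pos_iff_nonempty.1 hn
      exact Finset.univ_nonempty
  have hsplit : ∑ i, α i * Real.exp ((fs i + u i - C i j) / ε)
      = Real.exp (-gs j / ε) * ∑ i, pp i * Real.exp (x i) := by
    rw [Finset.mul_sum]
    apply Finset.sum_congr rfl
    intro i _
    rw [hppdef, hxdef]
    show α i * Real.exp ((fs i + u i - C i j) / ε)
      = Real.exp (-gs j / ε) * (α i * Real.exp ((fs i + gs j - C i j) / ε) * Real.exp (u i / ε))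
    have e1 : Real.exp ((fs i + u i - C i j) / ε)
        = Real.exp (-gs j / ε) * Real.exp ((fs i + gs j - C i j) / ε) * Real.exp (u i / ε) := by
      rw [← Real.exp_add, ← Real.exp_add]
      congr 1
      ring
    rw [e1]
    ring
  have hTF : transformF α C ε (fun i => fs i + u i) j
      = gs j - ε * Real.log (∑ i, pp i * Real.exp (x i)) := by
    show -ε * Real.log (∑ i, α i * Real.exp ((fs i + u i - C i j) / ε)) = _
    rw [hsplit, Real.log_mul (Real.exp_ne_zero _) (ne_of_gt hSig), Real.log_exp]
    field_simp
    ring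
  have hepu : ∑ i, α i * Real.exp ((fs i + gs j - C i j) / ε) * u i
      = ε * ∑ i, pp i * x i := by
    rw [Finset.mul_sum]
    apply Finset.sum_congr rfl
    intro i _
    rw [hppdef, hxdef]
    show α i * Real.exp ((fs i + gs j - C i j) / ε) * u i
      = ε * (α i * Real.exp ((fs i + gs j - C i j) / ε) * (u i / ε))
    field_simp
  have hxb : ∀ i, |x i| ≤ b / ε := by
    intro i
    rw [hxdef]
    show |u i / ε| ≤ b / ε
    rw [abs_div, abs_of_pos hε]
    exact (div_le_div_iff_of_pos_right hε).mpr (hu i)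
  have hbε : b / ε ≤ 1/2 := by
    rw [div_le_iff₀ hε]
    linarith
  have hlse := lse_core pp (fun i => le_of_lt (hppos i)) hrowj x (b / ε) hxb hbε
  rw [hTF, hepu]
  have heq : gs j - ε * Real.log (∑ i, pp i * Real.exp (x i)) - gs j + ε * ∑ i, pp i * x i
      = -ε * (Real.log (∑ i, pp i * Real.exp (x i)) - ∑ i, pp i * x i) := by ring
  rw [heq, abs_mul, abs_neg, abs_of_pos hε]
  calc ε * |Real.log (∑ i, pp i * Real.exp (x i)) - ∑ i, pp i * x i|
      ≤ ε * (3 * (b / ε) ^ 2) := mul_le_mul_of_nonneg_left hlse (le_of_lt hε)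
    _ = 3 * b ^ 2 / ε := by field_simp

lemma transformG_expand (hm : 0 < m) (hβ : ∀ j, 0 < β j) (hε : 0 < ε)
    (v : Fin m → ℝ) (b : ℝ) (hv : ∀ j, |v j| ≤ b) (hbe : b ≤ ε / 2)
    (i : Fin n) (hcoli : ∑ j, β j * Real.exp ((fs i + gs j - C i j) / ε) = 1) :
    |transformG β C ε (fun j => gs j + v j) i - fs i
      + ∑ j, β j * Real.exp ((fs i + gs j - C i j) / ε) * v j| ≤ 3 * b ^ 2 / ε := by
  set pp : Fin m → ℝ := fun j => β j * Real.exp ((fs i + gs j - C i j) / ε) with hppdef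
  set x : Fin m → ℝ := fun j => v j / ε with hxdef
  have hppos : ∀ j, 0 < pp j := fun j => mul_pos (hβ j) (Real.exp_pos _)
  have hSig : 0 < ∑ j, pp j * Real.exp (x j) := by
    apply Finset.sum_pos
    · intro j _
      exact mul_pos (hppos j) (Real.exp_pos _)
    · have : Nonempty (Fin m) := Fin.pos_iff_nonempty.1 hm
      exact Finset.univ_nonempty
  have hsplit : ∑ j, β j * Real.exp ((gs j + v j - C i j) / ε)
      = Real.exp (-fs i / ε) * ∑ j, pp j * Real.exp (x j) := by
    rw [Finset.mul_sum]
    apply Finset.sum_congr rfl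
    intro j _
    rw [hppdef, hxdef]
    show β j * Real.exp ((gs j + v j - C i j) / ε)
      = Real.exp (-fs i / ε) * (β j * Real.exp ((fs i + gs j - C i j) / ε) * Real.exp (v j / ε))
    have e1 : Real.exp ((gs j + v j - C i j) / ε)
        = Real.exp (-fs i / ε) * Real.exp ((fs i + gs j - C i j) / ε) * Real.exp (v j / ε) := by
      rw [← Real.exp_add, ← Real.exp_add]
      congr 1
      ring
    rw [e1]
    ring
  have hTF : transformG β C ε (fun j => gs j + v j) i
      = fs i - ε * Real.log (∑ j, pp j * Real.exp (x j)) := by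
    show -ε * Real.log (∑ j, β j * Real.exp ((gs j + v j - C i j) / ε)) = _
    rw [hsplit, Real.log_mul (Real.exp_ne_zero _) (ne_of_gt hSig), Real.log_exp]
    field_simp
    ring
  have hepu : ∑ j, β j * Real.exp ((fs i + gs j - C i j) / ε) * v j
      = ε * ∑ j, pp j * x j := by
    rw [Finset.mul_sum]
    apply Finset.sum_congr rfl
    intro j _
    rw [hppdef, hxdef]
    show β j * Real.exp ((fs i + gs j - C i j) / ε) * v j
      = ε * (β j * Real.exp ((fs i + gs j - C i j) / ε) * (v j / ε))
    field_simp
  have hxb : ∀ j, |x j| ≤ b / ε := by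
    intro j
    rw [hxdef]
    show |v j / ε| ≤ b / ε
    rw [abs_div, abs_of_pos hε]
    exact (div_le_div_iff_of_pos_right hε).mpr (hv j)
  have hbε : b / ε ≤ 1/2 := by
    rw [div_le_iff₀ hε]
    linarith
  have hlse := lse_core pp (fun j => le_of_lt (hppos j)) hcoli x (b / ε) hxb hbε
  rw [hTF, hepu]
  have heq : fs i - ε * Real.log (∑ j, pp j * Real.exp (x j)) - fs i + ε * ∑ j, pp j * x j
      = -ε * (Real.log (∑ j, pp j * Real.exp (x j)) - ∑ j, pp j * x j) := by ring
  rw [heq, abs_mul, abs_neg, abs_of_pos hε]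
  calc ε * |Real.log (∑ j, pp j * Real.exp (x j)) - ∑ j, pp j * x j|
      ≤ ε * (3 * (b / ε) ^ 2) := mul_le_mul_of_nonneg_left hlse (le_of_lt hε)
    _ = 3 * b ^ 2 / ε := by field_simp

end transforms

section comp

variable {n m : ℕ} {α : Fin n → ℝ} {β : Fin m → ℝ} {C : Fin n → Fin m → ℝ} {ε : ℝ}
  {fs : Fin n → ℝ} {gs : Fin m → ℝ}

lemma sinkhorn_step_expand (hn : 0 < n) (hm : 0 < m)
    (hα : ∀ i, 0 < α i) (hβ : ∀ j, 0 < β j) (hε : 0 < ε)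
    (hrow : ∀ j, ∑ i, α i * Real.exp ((fs i + gs j - C i j) / ε) = 1)
    (hcol : ∀ i, ∑ j, β j * Real.exp ((fs i + gs j - C i j) / ε) = 1)
    (u : Fin n → ℝ) (b : ℝ) (hb0 : 0 ≤ b) (hu : ∀ i, |u i| ≤ b) (hbe : b ≤ ε / 4) :
    ∀ i, |transformG β C ε (transformF α C ε (fun i' => fs i' + u i')) i - fs i
      - ∑ j, β j * Real.exp ((fs i + gs j - C i j) / ε)
          * (∑ i', α i' * Real.exp ((fs i' + gs j - C i' j) / ε) * u i')| ≤ 15 * b ^ 2 / ε := by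
  intro i
  set g' := transformF α C ε (fun i' => fs i' + u i') with hg'
  set Au : Fin m → ℝ := fun j => ∑ i', α i' * Real.exp ((fs i' + gs j - C i' j) / ε) * u i'
    with hAu
  set v : Fin m → ℝ := fun j => g' j - gs j with hv
  have hF : ∀ j, |v j + Au j| ≤ 3 * b ^ 2 / ε := by
    intro j
    have := transformF_expand hn hα hε u b hu (by linarith) j (hrow j)
    rw [← hg'] at this
    simpa [hv, hAu] using this
  have hAub : ∀ j, |Au j| ≤ b := by
    intro j
    rw [hAu]
    calc |∑ i', α i' * Real.exp ((fs i' + gs j - C i' j) / ε) * u i'|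
        ≤ ∑ i', |α i' * Real.exp ((fs i' + gs j - C i' j) / ε) * u i'| :=
          Finset.abs_sum_le_sum_abs _ _
      _ ≤ ∑ i', α i' * Real.exp ((fs i' + gs j - C i' j) / ε) * b := by
          apply Finset.sum_le_sum
          intro i' _
          rw [abs_mul, abs_of_nonneg (le_of_lt (mul_pos (hα i') (Real.exp_pos _)))]
          exact mul_le_mul_of_nonneg_left (hu i')
            (le_of_lt (mul_pos (hα i') (Real.exp_pos _)))
      _ = b := by rw [← Finset.sum_mul, hrow j, one_mul]
  have hq : 3 * b ^ 2 / ε ≤ b := by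
    rw [div_le_iff₀ hε]
    nlinarith
  have hvb : ∀ j, |v j| ≤ 2 * b := by
    intro j
    have h1 : |v j| ≤ |v j + Au j| + |Au j| := by
      have := abs_sub_abs_le_abs_sub (v j + Au j) (Au j)
      have h2 : v j + Au j - Au j = v j := by ring
      rw [h2] at this
      have := abs_add_le (v j + Au j) (-(Au j))
      rw [abs_neg] at this
      have h3 : v j + Au j + -(Au j) = v j := by ring
      rw [h3] at this
      exact this
    calc |v j| ≤ |v j + Au j| + |Au j| := h1
      _ ≤ 3 * b ^ 2 / ε + b := add_le_add (hF j) (hAub j)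
      _ ≤ 2 * b := by linarith
  have hG := transformG_expand hm hβ hε v (2 * b) hvb (by linarith) i (hcol i)
  have hgfun : (fun j => gs j + v j) = g' := by
    funext j
    rw [hv]
    ring
  rw [hgfun] at hG
  -- hG : |transformG β C ε g' i - fs i + ∑ j, β j * P i j * v j| ≤ 3 * (2b)^2 / ε
  have hBsum : |∑ j, β j * Real.exp ((fs i + gs j - C i j) / ε) * v j
      + ∑ j, β j * Real.exp ((fs i + gs j - C i j) / ε) * Au j| ≤ 3 * b ^ 2 / ε := by
    have hcomb : ∑ j, β j * Real.exp ((fs i + gs j - C i j) / ε) * v j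
        + ∑ j, β j * Real.exp ((fs i + gs j - C i j) / ε) * Au j
        = ∑ j, β j * Real.exp ((fs i + gs j - C i j) / ε) * (v j + Au j) := by
      rw [← Finset.sum_add_distrib]
      apply Finset.sum_congr rfl
      intro j _
      ring
    rw [hcomb]
    calc |∑ j, β j * Real.exp ((fs i + gs j - C i j) / ε) * (v j + Au j)|
        ≤ ∑ j, |β j * Real.exp ((fs i + gs j - C i j) / ε) * (v j + Au j)| :=
          Finset.abs_sum_le_sum_abs _ _
      _ ≤ ∑ j, β j * Real.exp ((fs i + gs j - C i j) / ε) * (3 * b ^ 2 / ε) := by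
          apply Finset.sum_le_sum
          intro j _
          rw [abs_mul, abs_of_nonneg (le_of_lt (mul_pos (hβ j) (Real.exp_pos _)))]
          exact mul_le_mul_of_nonneg_left (hF j)
            (le_of_lt (mul_pos (hβ j) (Real.exp_pos _)))
      _ = 3 * b ^ 2 / ε := by rw [← Finset.sum_mul, hcol i, one_mul]
  have hsplit : transformG β C ε g' i - fs i
      - ∑ j, β j * Real.exp ((fs i + gs j - C i j) / ε) * Au j
      = (transformG β C ε g' i - fs i
          + ∑ j, β j * Real.exp ((fs i + gs j - C i j) / ε) * v j)
        - (∑ j, β j * Real.exp ((fs i + gs j - C i j) / ε) * v j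
          + ∑ j, β j * Real.exp ((fs i + gs j - C i j) / ε) * Au j) := by ring
  rw [hsplit]
  calc |_ - _| ≤ |transformG β C ε g' i - fs i
        + ∑ j, β j * Real.exp ((fs i + gs j - C i j) / ε) * v j|
      + |∑ j, β j * Real.exp ((fs i + gs j - C i j) / ε) * v j
        + ∑ j, β j * Real.exp ((fs i + gs j - C i j) / ε) * Au j| := abs_sub _ _
    _ ≤ 3 * (2 * b) ^ 2 / ε + 3 * b ^ 2 / ε := add_le_add hG hBsum
    _ = 15 * b ^ 2 / ε := by field_simp; ring

end comp


section helpers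

variable {n m : ℕ} {α : Fin n → ℝ} {β : Fin m → ℝ}

lemma emb2_add (p q : (Fin n → ℝ) × (Fin m → ℝ)) :
    emb2 α β (p + q) = emb2 α β p + emb2 α β q := by
  unfold emb2
  apply (WithLp.equiv 2 _).injective
  funext a
  rcases a with i | j <;>
    simp [Prod.fst_add, Prod.snd_add, Pi.add_apply] <;> ring

lemma weighted_triangle (hα : ∀ i, 0 < α i) (β : Fin m → ℝ) (w w' : Fin n → ℝ) :
    Real.sqrt (∑ i, α i * (w i + w' i) ^ 2)
      ≤ Real.sqrt (∑ i, α i * w i ^ 2) + Real.sqrt (∑ i, α i * w' i ^ 2) := by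
  have hadd : emb2 α β ((fun i => w i + w' i, fun _ => 0) : (Fin n → ℝ) × (Fin m → ℝ))
      = emb2 α β ((w, fun _ => 0) : (Fin n → ℝ) × (Fin m → ℝ))
        + emb2 α β ((w', fun _ => 0) : (Fin n → ℝ) × (Fin m → ℝ)) := by
    rw [← emb2_add]
    apply congrArg
    refine Prod.ext ?_ ?_
    · funext i
      rfl
    · funext j
      show (0:ℝ) = 0 + 0
      ring
  have h1 := norm_emb2_left (β := β) hα (fun i => w i + w' i)
  have h2 := norm_emb2_left (β := β) hα w
  have h3 := norm_emb2_left (β := β) hα w'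
  calc Real.sqrt (∑ i, α i * (w i + w' i) ^ 2)
      = ‖emb2 α β ((fun i => w i + w' i, fun _ => 0) : (Fin n → ℝ) × (Fin m → ℝ))‖ := h1.symm
    _ ≤ ‖emb2 α β ((w, fun _ => 0) : (Fin n → ℝ) × (Fin m → ℝ))‖
        + ‖emb2 α β ((w', fun _ => 0) : (Fin n → ℝ) × (Fin m → ℝ))‖ := by
          rw [hadd]; exact norm_add_le _ _
    _ = _ := by rw [h2, h3]

lemma weighted_norm_le (hα : ∀ i, 0 < α i) (hαs : ∑ i, α i = 1)
    (E : Fin n → ℝ) (K : ℝ) (hK : 0 ≤ K) (hE : ∀ i, |E i| ≤ K) :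
    Real.sqrt (∑ i, α i * E i ^ 2) ≤ K := by
  have h1 : ∑ i, α i * E i ^ 2 ≤ K ^ 2 := by
    calc ∑ i, α i * E i ^ 2 ≤ ∑ i, α i * K ^ 2 := by
          apply Finset.sum_le_sum
          intro i _
          apply mul_le_mul_of_nonneg_left _ (le_of_lt (hα i))
          rw [← sq_abs]
          exact pow_le_pow_left₀ (abs_nonneg _) (hE i) 2
      _ = K ^ 2 := by rw [← Finset.sum_mul, hαs, one_mul]
  calc Real.sqrt (∑ i, α i * E i ^ 2) ≤ Real.sqrt (K ^ 2) := Real.sqrt_le_sqrt h1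
    _ = K := by rw [Real.sqrt_sq hK]

end helpers

/-- Asymptotic rate of the Sinkhorn–Knopp iteration: if `ρ₁` is the largest
eigenvalue of `K_ε` restricted to the `⟨·,·⟩_H`-orthogonal complement of the
span of `(𝟙,𝟙)` and `(𝟙,−𝟙)`, and the Sinkhorn iterates converge to `f*`
modulo additive constants, then
`d_α(f_{k+1},f*) ≤ ρ₁²·d_α(f_k,f*) + C·d_α(f_k,f*)²` for some `C > 0`. -/
theorem sinkhorn_asymptotic_rate
    {n m : ℕ} (hn : 0 < n) (hm : 0 < m)
    (α : Fin n → ℝ) (β : Fin m → ℝ)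
    (hα : ∀ i, 0 < α i) (hβ : ∀ j, 0 < β j)
    (hαs : ∑ i, α i = 1) (hβs : ∑ j, β j = 1)
    (C : Fin n → Fin m → ℝ) (ε : ℝ) (hε : 0 < ε)
    (fs : Fin n → ℝ) (gs : Fin m → ℝ)
    (hfs : fs = transformG β C ε gs) (hgs : gs = transformF α C ε fs)
    (ρ₁ : ℝ)
    (hρ₁_eig : ∃ p : (Fin n → ℝ) × (Fin m → ℝ), p ≠ 0 ∧
        innerH α β p ((fun _ => 1), (fun _ => 1)) = 0 ∧
        innerH α β p ((fun _ => 1), (fun _ => -1)) = 0 ∧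
        Kop α β C ε fs gs p = ρ₁ • p)
    (hρ₁_max : ∀ (r : ℝ) (p : (Fin n → ℝ) × (Fin m → ℝ)), p ≠ 0 →
        innerH α β p ((fun _ => 1), (fun _ => 1)) = 0 →
        innerH α β p ((fun _ => 1), (fun _ => -1)) = 0 →
        Kop α β C ε fs gs p = r • p → r ≤ ρ₁)
    (f : ℕ → Fin n → ℝ)
    (hseq : ∀ k, f (k + 1) = transformG β C ε (transformF α C ε (f k)))
    (hconv : Tendsto (fun k => dalpha α (f k) fs) atTop (nhds 0)) :
    ∃ Cc > (0 : ℝ), ∀ k,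
      dalpha α (f (k + 1)) fs
        ≤ ρ₁ ^ 2 * dalpha α (f k) fs + Cc * (dalpha α (f k) fs) ^ 2 := by
  have hrow : ∀ j, ∑ i, α i * Real.exp ((fs i + gs j - C i j) / ε) = 1 :=
    row_sum_one hn hα hε hgs
  have hcol : ∀ i, ∑ j, β j * Real.exp ((fs i + gs j - C i j) / ε) = 1 :=
    col_sum_one hm hβ hε hfs
  have hex' : ∃ p : (Fin n → ℝ) × (Fin m → ℝ), p ≠ 0 ∧
      innerH α β p ((fun _ => 1), (fun _ => 1)) = 0 ∧
      innerH α β p ((fun _ => 1), (fun _ => -1)) = 0 ∧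
      ((fun i => ∑ j, β j * Real.exp ((fs i + gs j - C i j) / ε) * p.2 j),
        (fun j => ∑ i, α i * Real.exp ((fs i + gs j - C i j) / ε) * p.1 i)) = ρ₁ • p := by
    obtain ⟨p, h0, h1, h2, h3⟩ := hρ₁_eig
    exact ⟨p, h0, h1, h2, h3⟩
  have hmax' : ∀ (r : ℝ) (p : (Fin n → ℝ) × (Fin m → ℝ)), p ≠ 0 →
      innerH α β p ((fun _ => 1), (fun _ => 1)) = 0 →
      innerH α β p ((fun _ => 1), (fun _ => -1)) = 0 →
      ((fun i => ∑ j, β j * Real.exp ((fs i + gs j - C i j) / ε) * p.2 j),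
        (fun j => ∑ i, α i * Real.exp ((fs i + gs j - C i j) / ε) * p.1 i)) = r • p →
      r ≤ ρ₁ := by
    intro r p h0 h1 h2 h3
    exact hρ₁_max r p h0 h1 h2 h3
  obtain ⟨hρnn, hspectral⟩ :=
    spectral_main (P := fun i j => Real.exp ((fs i + gs j - C i j) / ε))
      hα hβ hαs hβs hrow hcol ρ₁ hex' hmax'
  -- minimum weight
  have hnem : Nonempty (Fin n) := Fin.pos_iff_nonempty.1 hn
  have hne : (Finset.univ : Finset (Fin n)).Nonempty := Finset.univ_nonempty
  set a0 := Finset.univ.inf' hne α with ha0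
  have ha0le : ∀ i, a0 ≤ α i := fun i => Finset.inf'_le α (Finset.mem_univ i)
  have ha0pos : 0 < a0 := by
    obtain ⟨i0, _, h⟩ := Finset.exists_mem_eq_inf' hne α
    rw [ha0, h]
    exact hα i0
  set s0 := Real.sqrt a0 with hs0
  have hs0pos : 0 < s0 := Real.sqrt_pos.2 ha0pos
  have hs0sq : s0 ^ 2 = a0 := Real.sq_sqrt (le_of_lt ha0pos)
  set δ := ε * s0 / 4 with hδ
  have hδpos : 0 < δ := by positivity
  -- boundedness of the sequence
  have hdnn : ∀ k, 0 ≤ dalpha α (f k) fs := fun k => dalpha_nonneg α _ _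
  obtain ⟨N, hN⟩ := (Metric.tendsto_atTop.1 hconv) 1 one_pos
  set M' := 1 + ∑ k ∈ Finset.range N, dalpha α (f k) fs with hM'
  have hsumnn : (0:ℝ) ≤ ∑ k ∈ Finset.range N, dalpha α (f k) fs :=
    Finset.sum_nonneg fun k _ => hdnn k
  have hbdd : ∀ k, dalpha α (f k) fs ≤ M' := by
    intro k
    rcases le_or_gt N k with h | h
    · have h2 := hN k h
      rw [Real.dist_eq, sub_zero, abs_of_nonneg (hdnn k)] at h2
      rw [hM']
      linarith
    · have h2 : dalpha α (f k) fs ≤ ∑ k' ∈ Finset.range N, dalpha α (f k') fs :=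
        Finset.single_le_sum (fun k' _ => hdnn k') (Finset.mem_range.2 h)
      rw [hM']
      linarith
  set Cc := 15 / (ε * a0) + (1 + M') / δ ^ 2 with hCc
  have hMpos : 0 < 1 + M' := by rw [hM']; linarith
  have hCc1 : 0 < 15 / (ε * a0) := by positivity
  have hCc2 : 0 < (1 + M') / δ ^ 2 := by positivity
  have hCcpos : 0 < Cc := by rw [hCc]; linarith
  refine ⟨Cc, hCcpos, ?_⟩
  intro k
  have hdk0 := hdnn k
  rcases le_or_gt (dalpha α (f k) fs) δ with hsmall | hlarge
  · -- SMALL CASE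
    set cb := ∑ i', α i' * (f k i' - fs i') with hcb
    set u : Fin n → ℝ := fun i => f k i - fs i - cb with hu
    have hdk_eq : dalpha α (f k) fs = Real.sqrt (∑ i, α i * u i ^ 2) :=
      dalpha_eq_norm α hαs (f k) fs
    have hsum0 : ∑ i, α i * u i = 0 := by
      have e : ∀ i : Fin n, α i * u i = α i * (f k i - fs i) - cb * α i := by
        intro i
        simp only [hu]
        ring
      rw [Finset.sum_congr rfl fun i _ => e i, Finset.sum_sub_distrib]
      have e2 : ∑ x : Fin n, cb * α x = cb := by
        rw [← Finset.mul_sum, hαs, mul_one]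
      rw [e2, ← hcb, sub_self]
    set b := dalpha α (f k) fs / s0 with hb
    have hb0 : 0 ≤ b := div_nonneg hdk0 (le_of_lt hs0pos)
    have hbe : b ≤ ε / 4 := by
      rw [hb, div_le_iff₀ hs0pos]
      have e : ε / 4 * s0 = ε * s0 / 4 := by ring
      rw [e, ← hδ]
      exact hsmall
    have hub : ∀ i, |u i| ≤ b := by
      intro i
      have h1 : α i * u i ^ 2 ≤ ∑ i', α i' * u i' ^ 2 :=
        Finset.single_le_sum (fun i' _ => mul_nonneg (le_of_lt (hα i')) (sq_nonneg _))
          (Finset.mem_univ i)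
      have h2 : a0 * u i ^ 2 ≤ α i * u i ^ 2 :=
        mul_le_mul_of_nonneg_right (ha0le i) (sq_nonneg _)
      have h3 : u i ^ 2 ≤ (∑ i', α i' * u i' ^ 2) / a0 := by
        rw [le_div_iff₀ ha0pos]
        nlinarith
      calc |u i| = Real.sqrt (u i ^ 2) := (Real.sqrt_sq_eq_abs _).symm
        _ ≤ Real.sqrt ((∑ i', α i' * u i' ^ 2) / a0) := Real.sqrt_le_sqrt h3
        _ = Real.sqrt (∑ i', α i' * u i' ^ 2) / s0 := by
            rw [Real.sqrt_div (Finset.sum_nonneg fun i' _ =>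
              mul_nonneg (le_of_lt (hα i')) (sq_nonneg _)), hs0]
        _ = b := by rw [hb, hdk_eq]
    have hcompE := sinkhorn_step_expand hn hm hα hβ hε hrow hcol u b hb0 hub hbe
    -- identify f (k+1)
    have hfk : f k = fun i => (fs i + u i) + cb := by
      funext i
      simp only [hu]
      ring
    have hfk1 : f (k+1)
        = fun i => transformG β C ε (transformF α C ε (fun i' => fs i' + u i')) i + cb := by
      rw [hseq k, hfk]
      rw [transformF_shift hn hα hε (fun i => fs i + u i) cb]
      have e : (fun j => transformF α C ε (fun i => fs i + u i) j - cb)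
          = (fun j => transformF α C ε (fun i => fs i + u i) j + (-cb)) := by
        funext j
        ring
      rw [e, transformG_shift hm hβ hε _ (-cb)]
      funext i
      ring
    set Tu : Fin n → ℝ :=
      fun i => transformG β C ε (transformF α C ε (fun i' => fs i' + u i')) i with hTu
    have hd1 : dalpha α (f (k+1)) fs = dalpha α Tu fs := by
      rw [hfk1]
      exact dalpha_shift α hαs Tu fs cb
    set BAu : Fin n → ℝ := fun i => ∑ j, β j * Real.exp ((fs i + gs j - C i j) / ε)
      * (∑ i', α i' * Real.exp ((fs i' + gs j - C i' j) / ε) * u i') with hBAu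
    set E : Fin n → ℝ := fun i => Tu i - fs i - BAu i with hE
    have hEb : ∀ i, |E i| ≤ 15 * b ^ 2 / ε := by
      intro i
      have := hcompE i
      simpa [hE, hTu, hBAu] using this
    have hstep1 : dalpha α Tu fs ≤ Real.sqrt (∑ i, α i * (BAu i + E i) ^ 2) := by
      calc dalpha α Tu fs ≤ Real.sqrt (∑ i, α i * (Tu i - fs i - 0) ^ 2) :=
            dalpha_le α Tu fs 0
        _ = Real.sqrt (∑ i, α i * (BAu i + E i) ^ 2) := by
            congr 1
            apply Finset.sum_congr rfl
            intro i _
            simp only [hE]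
            ring
    have htri : Real.sqrt (∑ i, α i * (BAu i + E i) ^ 2)
        ≤ Real.sqrt (∑ i, α i * BAu i ^ 2) + Real.sqrt (∑ i, α i * E i ^ 2) :=
      weighted_triangle hα β BAu E
    have hspec_app : Real.sqrt (∑ i, α i * BAu i ^ 2)
        ≤ ρ₁ ^ 2 * dalpha α (f k) fs := by
      have h := hspectral u hsum0
      rw [hdk_eq]
      exact h
    have hKnn : (0:ℝ) ≤ 15 * b ^ 2 / ε := by positivity
    have hE2 : Real.sqrt (∑ i, α i * E i ^ 2) ≤ 15 * b ^ 2 / ε :=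
      weighted_norm_le hα hαs E _ hKnn hEb
    have hbsq : 15 * b ^ 2 / ε ≤ Cc * dalpha α (f k) fs ^ 2 := by
      have e1 : b ^ 2 = dalpha α (f k) fs ^ 2 / a0 := by
        rw [hb, div_pow, hs0sq]
      have e2 : 15 * b ^ 2 / ε = 15 / (ε * a0) * dalpha α (f k) fs ^ 2 := by
        rw [e1]
        field_simp
      rw [e2]
      apply mul_le_mul_of_nonneg_right _ (sq_nonneg _)
      rw [hCc]
      linarith
    calc dalpha α (f (k+1)) fs = dalpha α Tu fs := hd1
      _ ≤ Real.sqrt (∑ i, α i * (BAu i + E i) ^ 2) := hstep1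
      _ ≤ Real.sqrt (∑ i, α i * BAu i ^ 2) + Real.sqrt (∑ i, α i * E i ^ 2) := htri
      _ ≤ ρ₁ ^ 2 * dalpha α (f k) fs + 15 * b ^ 2 / ε := add_le_add hspec_app hE2
      _ ≤ ρ₁ ^ 2 * dalpha α (f k) fs + Cc * dalpha α (f k) fs ^ 2 := by linarith
  · -- LARGE CASE
    have h1 : dalpha α (f (k+1)) fs ≤ M' := hbdd (k+1)
    have hδ2 : δ ^ 2 ≤ dalpha α (f k) fs ^ 2 := by nlinarith
    have e1 : (1 + M') = (1 + M') / δ ^ 2 * δ ^ 2 := by field_simp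
    have h2 : M' ≤ Cc * dalpha α (f k) fs ^ 2 := by
      calc M' ≤ 1 + M' := by linarith
        _ = (1 + M') / δ ^ 2 * δ ^ 2 := e1
        _ ≤ (1 + M') / δ ^ 2 * dalpha α (f k) fs ^ 2 :=
            mul_le_mul_of_nonneg_left hδ2 (le_of_lt hCc2)
        _ ≤ Cc * dalpha α (f k) fs ^ 2 := by
            apply mul_le_mul_of_nonneg_right _ (sq_nonneg _)
            rw [hCc]
            linarith
    have h3 : 0 ≤ ρ₁ ^ 2 * dalpha α (f k) fs := mul_nonneg (sq_nonneg _) hdk0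
    linarith
end

section
/- Second differential of the dual objective: for any (f, g) ∈ ℝ^n × ℝ^m and any direction (f₁, g₁), the second derivative of Q_ε satisfies D²Q_ε(f,g)[(f₁,g₁),(f₁,g₁)] = −(1/ε)·∑_{i,j} α_i β_j (f₁_i + g₁_j)²·exp((f_i + g_j − C_{i,j})/ε). In particular this quadratic form is nonpositive everywhere, so Q_ε is concave on ℝ^n × ℝ^m. -/
open Real

lemma iter2_helper {ι κ : Type*} [Fintype ι] [Fintype κ]
    (A B ε : ℝ) (c a b : ι → κ → ℝ) :
    iteratedDeriv 2 (fun t : ℝ =>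
        A + t * B - ε * ((∑ i, ∑ j, c i j * Real.exp (a i j + t * b i j)) - 1)) 0
      = -ε * ∑ i, ∑ j, c i j * (b i j) ^ 2 * Real.exp (a i j) := by
  have hinner : ∀ (i : ι) (j : κ) (t : ℝ),
      HasDerivAt (fun t : ℝ => a i j + t * b i j) (b i j) t := by
    intro i j t
    refine ((hasDerivAt_const t (a i j)).add ((hasDerivAt_id t).mul_const (b i j))).congr_deriv ?_
    simp
  have hD1 : ∀ t : ℝ, HasDerivAt (fun t : ℝ =>
        A + t * B - ε * ((∑ i, ∑ j, c i j * Real.exp (a i j + t * b i j)) - 1))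
      (B - ε * ∑ i, ∑ j, c i j * (Real.exp (a i j + t * b i j) * b i j)) t := by
    intro t
    have hsum : HasDerivAt (fun t : ℝ => ∑ i, ∑ j, c i j * Real.exp (a i j + t * b i j))
        (∑ i, ∑ j, c i j * (Real.exp (a i j + t * b i j) * b i j)) t := by
      refine HasDerivAt.fun_sum fun i _ => HasDerivAt.fun_sum fun j _ => ?_
      exact (((hinner i j t).exp)).const_mul (c i j)
    have := ((hasDerivAt_const t A).add ((hasDerivAt_id t).mul_const B)).sub
      ((hsum.sub_const 1).const_mul ε)
    refine this.congr_deriv ?_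
    simp
  have hd1 : deriv (fun t : ℝ =>
        A + t * B - ε * ((∑ i, ∑ j, c i j * Real.exp (a i j + t * b i j)) - 1))
      = fun t => B - ε * ∑ i, ∑ j, c i j * (Real.exp (a i j + t * b i j) * b i j) :=
    funext fun t => (hD1 t).deriv
  rw [iteratedDeriv_succ, iteratedDeriv_one, hd1]
  have hD2 : HasDerivAt (fun t : ℝ =>
        B - ε * ∑ i, ∑ j, c i j * (Real.exp (a i j + t * b i j) * b i j))
      (0 - ε * ∑ i, ∑ j, c i j * (Real.exp (a i j + 0 * b i j) * b i j * b i j)) 0 := by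
    have hsum : HasDerivAt (fun t : ℝ => ∑ i, ∑ j, c i j * (Real.exp (a i j + t * b i j) * b i j))
        (∑ i, ∑ j, c i j * (Real.exp (a i j + 0 * b i j) * b i j * b i j)) 0 := by
      refine HasDerivAt.fun_sum fun i _ => HasDerivAt.fun_sum fun j _ => ?_
      exact (((hinner i j 0).exp).mul_const (b i j)).const_mul (c i j)
    exact (hasDerivAt_const 0 B).sub (hsum.const_mul ε)
  rw [hD2.deriv]
  have hs : (∑ i, ∑ j, c i j * (Real.exp (a i j + 0 * b i j) * b i j * b i j))
      = ∑ i, ∑ j, c i j * (b i j) ^ 2 * Real.exp (a i j) :=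
    Finset.sum_congr rfl fun i _ => Finset.sum_congr rfl fun j _ => by
      rw [zero_mul, add_zero]; ring
  rw [zero_sub, hs, neg_mul]

/-- Second differential of the dual objective: for any `(f,g)` and direction
`(f₁,g₁)`, `D²Q_ε(f,g)[(f₁,g₁),(f₁,g₁)]
  = −(1/ε)·∑_{i,j} αᵢβⱼ (f₁ᵢ+g₁ⱼ)²·exp((fᵢ+gⱼ−C_{ij})/ε)`;
in particular the quadratic form is nonpositive everywhere and `Q_ε` is concave. -/
theorem second_differential_Qdual
    {n m : ℕ} (hn : 0 < n) (hm : 0 < m)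
    (α : Fin n → ℝ) (β : Fin m → ℝ)
    (hα : ∀ i, 0 < α i) (hβ : ∀ j, 0 < β j)
    (hαs : ∑ i, α i = 1) (hβs : ∑ j, β j = 1)
    (C : Fin n → Fin m → ℝ) (ε : ℝ) (hε : 0 < ε) :
    (∀ (f : Fin n → ℝ) (g : Fin m → ℝ) (f₁ : Fin n → ℝ) (g₁ : Fin m → ℝ),
        iteratedDeriv 2 (fun t : ℝ =>
            Qdual α β C ε (fun i => f i + t * f₁ i) (fun j => g j + t * g₁ j)) 0
          = -(1 / ε) * ∑ i, ∑ j,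
              α i * β j * (f₁ i + g₁ j) ^ 2 * Real.exp ((f i + g j - C i j) / ε)) ∧
    (∀ (f : Fin n → ℝ) (g : Fin m → ℝ) (f₁ : Fin n → ℝ) (g₁ : Fin m → ℝ),
        iteratedDeriv 2 (fun t : ℝ =>
            Qdual α β C ε (fun i => f i + t * f₁ i) (fun j => g j + t * g₁ j)) 0 ≤ 0) ∧
    ConcaveOn ℝ Set.univ
      (fun p : (Fin n → ℝ) × (Fin m → ℝ) => Qdual α β C ε p.1 p.2) := by
  have hεne : ε ≠ 0 := ne_of_gt hε
  have part1 : ∀ (f : Fin n → ℝ) (g : Fin m → ℝ) (f₁ : Fin n → ℝ) (g₁ : Fin m → ℝ),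
      iteratedDeriv 2 (fun t : ℝ =>
          Qdual α β C ε (fun i => f i + t * f₁ i) (fun j => g j + t * g₁ j)) 0
        = -(1 / ε) * ∑ i, ∑ j,
            α i * β j * (f₁ i + g₁ j) ^ 2 * Real.exp ((f i + g j - C i j) / ε) := by
    intro f g f₁ g₁
    have hfun : (fun t : ℝ =>
          Qdual α β C ε (fun i => f i + t * f₁ i) (fun j => g j + t * g₁ j))
        = fun t : ℝ => ((∑ i, α i * f i) + (∑ j, β j * g j))
            + t * ((∑ i, α i * f₁ i) + (∑ j, β j * g₁ j))
            - ε * ((∑ i, ∑ j, (α i * β j) *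
                Real.exp ((f i + g j - C i j) / ε + t * ((f₁ i + g₁ j) / ε))) - 1) := by
      funext t
      simp only [Qdual]
      have h1 : ∑ i, α i * (f i + t * f₁ i)
          = (∑ i, α i * f i) + t * ∑ i, α i * f₁ i := by
        rw [Finset.mul_sum, ← Finset.sum_add_distrib]
        exact Finset.sum_congr rfl fun i _ => by ring
      have h2 : ∑ j, β j * (g j + t * g₁ j)
          = (∑ j, β j * g j) + t * ∑ j, β j * g₁ j := by
        rw [Finset.mul_sum, ← Finset.sum_add_distrib]
        exact Finset.sum_congr rfl fun j _ => by ring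
      have h3 : ∀ (i : Fin n) (j : Fin m),
          ((f i + t * f₁ i) + (g j + t * g₁ j) - C i j) / ε
            = (f i + g j - C i j) / ε + t * ((f₁ i + g₁ j) / ε) := fun i j => by ring
      simp only [h1, h2, h3]
      ring
    rw [hfun, iter2_helper]
    simp only [neg_mul, neg_inj, Finset.mul_sum]
    refine Finset.sum_congr rfl fun i _ => Finset.sum_congr rfl fun j _ => ?_
    field_simp
  refine ⟨part1, ?_, ?_⟩
  · intro f g f₁ g₁
    rw [part1 f g f₁ g₁]
    have hS : 0 ≤ ∑ i, ∑ j,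
        α i * β j * (f₁ i + g₁ j) ^ 2 * Real.exp ((f i + g j - C i j) / ε) := by
      refine Finset.sum_nonneg fun i _ => Finset.sum_nonneg fun j _ => ?_
      have := (hα i).le
      have := (hβ j).le
      positivity
    have h1ε : (0:ℝ) ≤ 1 / ε := by positivity
    nlinarith
  · refine ⟨convex_univ, ?_⟩
    intro p _ q _ a b ha hb hab
    simp only [smul_eq_mul, Prod.fst_add, Prod.snd_add, Prod.smul_fst, Prod.smul_snd,
      Pi.add_apply, Pi.smul_apply, smul_eq_mul, Qdual]
    have hl1 : ∑ i, α i * (a * p.1 i + b * q.1 i)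
        = a * ∑ i, α i * p.1 i + b * ∑ i, α i * q.1 i := by
      rw [Finset.mul_sum, Finset.mul_sum, ← Finset.sum_add_distrib]
      exact Finset.sum_congr rfl fun i _ => by ring
    have hl2 : ∑ j, β j * (a * p.2 j + b * q.2 j)
        = a * ∑ j, β j * p.2 j + b * ∑ j, β j * q.2 j := by
      rw [Finset.mul_sum, Finset.mul_sum, ← Finset.sum_add_distrib]
      exact Finset.sum_congr rfl fun j _ => by ring
    have key : ∀ (i : Fin n) (j : Fin m),
        Real.exp ((a * p.1 i + b * q.1 i + (a * p.2 j + b * q.2 j) - C i j) / ε)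
          ≤ a * Real.exp ((p.1 i + p.2 j - C i j) / ε)
            + b * Real.exp ((q.1 i + q.2 j - C i j) / ε) := by
      intro i j
      have harg : (a * p.1 i + b * q.1 i + (a * p.2 j + b * q.2 j) - C i j) / ε
          = a * ((p.1 i + p.2 j - C i j) / ε) + b * ((q.1 i + q.2 j - C i j) / ε) := by
        field_simp
        linear_combination (C i j) * hab
      rw [harg]
      have h := convexOn_exp.2 (Set.mem_univ ((p.1 i + p.2 j - C i j) / ε))
        (Set.mem_univ ((q.1 i + q.2 j - C i j) / ε)) ha hb hab
      simpa [smul_eq_mul] using h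
    have hsum : ∑ i, ∑ j, α i * β j *
          Real.exp ((a * p.1 i + b * q.1 i + (a * p.2 j + b * q.2 j) - C i j) / ε)
        ≤ a * ∑ i, ∑ j, α i * β j * Real.exp ((p.1 i + p.2 j - C i j) / ε)
          + b * ∑ i, ∑ j, α i * β j * Real.exp ((q.1 i + q.2 j - C i j) / ε) := by
      rw [Finset.mul_sum, Finset.mul_sum, ← Finset.sum_add_distrib]
      refine Finset.sum_le_sum fun i _ => ?_
      rw [Finset.mul_sum, Finset.mul_sum, ← Finset.sum_add_distrib]
      refine Finset.sum_le_sum fun j _ => ?_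
      have hc : (0:ℝ) ≤ α i * β j := mul_nonneg (hα i).le (hβ j).le
      calc α i * β j *
            Real.exp ((a * p.1 i + b * q.1 i + (a * p.2 j + b * q.2 j) - C i j) / ε)
          ≤ α i * β j * (a * Real.exp ((p.1 i + p.2 j - C i j) / ε)
              + b * Real.exp ((q.1 i + q.2 j - C i j) / ε)) :=
            mul_le_mul_of_nonneg_left (key i j) hc
        _ = a * (α i * β j * Real.exp ((p.1 i + p.2 j - C i j) / ε))
              + b * (α i * β j * Real.exp ((q.1 i + q.2 j - C i j) / ε)) := by ring
    rw [hl1, hl2]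
    nlinarith [mul_le_mul_of_nonneg_left hsum hε.le]
end

section
/- Degeneracy direction of the dual Hessian: for any (f, g) ∈ ℝ^n × ℝ^m and any direction (f₁, g₁) ∈ ℝ^n × ℝ^m, D²Q_ε(f,g)[(f₁,g₁),(f₁,g₁)] = 0 if and only if (f₁, g₁) lies in the one-dimensional span of (𝟙_n, −𝟙_m), i.e. if and only if there is c ∈ ℝ with f₁ = c·𝟙 and g₁ = −c·𝟙. Hence Q_ε is strictly concave on the quotient of ℝ^n × ℝ^m by ℝ·(𝟙_n, −𝟙_m). -/
open Real

lemma S_hasDerivAt {n m : ℕ} (c d e : Fin n → Fin m → ℝ) (t : ℝ) :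
    HasDerivAt (fun s => ∑ i, ∑ j, c i j * Real.exp (d i j + s * e i j))
      (∑ i, ∑ j, c i j * (e i j * Real.exp (d i j + t * e i j))) t := by
  apply HasDerivAt.fun_sum; intro i _; apply HasDerivAt.fun_sum; intro j _
  have h1 : HasDerivAt (fun s : ℝ => d i j + s * e i j) (e i j) t := by
    simpa using ((hasDerivAt_id t).mul_const (e i j)).const_add (d i j)
  simpa [mul_comm] using (h1.exp.const_mul (c i j))

lemma second_deriv_Qdual {n m : ℕ} (α : Fin n → ℝ) (β : Fin m → ℝ)
    (C : Fin n → Fin m → ℝ) (ε : ℝ) (hε : 0 < ε)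
    (f : Fin n → ℝ) (g : Fin m → ℝ) (f₁ : Fin n → ℝ) (g₁ : Fin m → ℝ) :
    iteratedDeriv 2 (fun t : ℝ =>
        Qdual α β C ε (fun i => f i + t * f₁ i) (fun j => g j + t * g₁ j)) 0
    = -ε * ∑ i, ∑ j, (α i * β j * ((f₁ i + g₁ j)/ε)) *
        (((f₁ i + g₁ j)/ε) * Real.exp ((f i + g j - C i j)/ε)) := by
  set c : Fin n → Fin m → ℝ := fun i j => α i * β j with hc
  set d : Fin n → Fin m → ℝ := fun i j => (f i + g j - C i j)/ε with hd
  set e : Fin n → Fin m → ℝ := fun i j => (f₁ i + g₁ j)/ε with he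
  have hεne : ε ≠ 0 := ne_of_gt hε
  have hfun : (fun t : ℝ =>
      Qdual α β C ε (fun i => f i + t * f₁ i) (fun j => g j + t * g₁ j))
      = fun t : ℝ =>
      ((∑ i, α i * (f i + t * f₁ i)) + (∑ j, β j * (g j + t * g₁ j)))
        - ε * ((∑ i, ∑ j, c i j * Real.exp (d i j + t * e i j)) - 1) := by
    funext t
    have harg : ∀ i j, (f i + t * f₁ i + (g j + t * g₁ j) - C i j) / ε
        = d i j + t * e i j := by
      intro i j; rw [hd, he]; field_simp; ring
    simp only [Qdual, harg, hc]
  rw [hfun]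
  set B : ℝ := (∑ i, α i * f₁ i) + (∑ j, β j * g₁ j) with hB
  have hd1 : ∀ t : ℝ, HasDerivAt (fun t : ℝ =>
      ((∑ i, α i * (f i + t * f₁ i)) + (∑ j, β j * (g j + t * g₁ j)))
        - ε * ((∑ i, ∑ j, c i j * Real.exp (d i j + t * e i j)) - 1))
      (B - ε * ∑ i, ∑ j, c i j * (e i j * Real.exp (d i j + t * e i j))) t := by
    intro t
    have h1 : HasDerivAt (fun t : ℝ => ∑ i, α i * (f i + t * f₁ i))
        (∑ i, α i * f₁ i) t := by
      apply HasDerivAt.fun_sum; intro i _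
      simpa using (((hasDerivAt_id t).mul_const (f₁ i)).const_add (f i)).const_mul (α i)
    have h2 : HasDerivAt (fun t : ℝ => ∑ j, β j * (g j + t * g₁ j))
        (∑ j, β j * g₁ j) t := by
      apply HasDerivAt.fun_sum; intro j _
      simpa using (((hasDerivAt_id t).mul_const (g₁ j)).const_add (g j)).const_mul (β j)
    exact (h1.add h2).sub (((S_hasDerivAt c d e t).sub_const 1).const_mul ε)
  have hderiv1 : deriv (fun t : ℝ =>
      ((∑ i, α i * (f i + t * f₁ i)) + (∑ j, β j * (g j + t * g₁ j)))
        - ε * ((∑ i, ∑ j, c i j * Real.exp (d i j + t * e i j)) - 1))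
      = fun t => B - ε * ∑ i, ∑ j, c i j * (e i j * Real.exp (d i j + t * e i j)) := by
    funext t; exact (hd1 t).deriv
  rw [show (2:ℕ) = 1 + 1 from rfl, iteratedDeriv_succ, iteratedDeriv_one, hderiv1]
  have hd2 : HasDerivAt (fun t : ℝ =>
      B - ε * ∑ i, ∑ j, c i j * (e i j * Real.exp (d i j + t * e i j)))
      (-ε * ∑ i, ∑ j, (c i j * e i j) * (e i j * Real.exp (d i j + 0 * e i j))) 0 := by
    have := ((S_hasDerivAt (fun i j => c i j * e i j) d e 0).const_mul ε).const_sub B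
    simpa [mul_assoc, neg_mul] using this
  rw [hd2.deriv]
  simp only [hc, hd, he, zero_mul, add_zero]

/-- Degeneracy direction of the dual Hessian:
`D²Q_ε(f,g)[(f₁,g₁),(f₁,g₁)] = 0` iff `(f₁,g₁) ∈ ℝ·(𝟙,−𝟙)`; hence `Q_ε` is
strictly concave on the quotient of `ℝ^n × ℝ^m` by `ℝ·(𝟙,−𝟙)`. -/
theorem hessian_degeneracy_direction
    {n m : ℕ} (hn : 0 < n) (hm : 0 < m)
    (α : Fin n → ℝ) (β : Fin m → ℝ)
    (hα : ∀ i, 0 < α i) (hβ : ∀ j, 0 < β j)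
    (hαs : ∑ i, α i = 1) (hβs : ∑ j, β j = 1)
    (C : Fin n → Fin m → ℝ) (ε : ℝ) (hε : 0 < ε) :
    (∀ (f : Fin n → ℝ) (g : Fin m → ℝ) (f₁ : Fin n → ℝ) (g₁ : Fin m → ℝ),
        iteratedDeriv 2 (fun t : ℝ =>
            Qdual α β C ε (fun i => f i + t * f₁ i) (fun j => g j + t * g₁ j)) 0 = 0
        ↔ ∃ c : ℝ, (∀ i, f₁ i = c) ∧ (∀ j, g₁ j = -c)) ∧
    (∀ p q : (Fin n → ℝ) × (Fin m → ℝ),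
        (¬ ∃ c : ℝ, (∀ i, p.1 i - q.1 i = c) ∧ (∀ j, p.2 j - q.2 j = -c)) →
        ∀ t : ℝ, 0 < t → t < 1 →
          t * Qdual α β C ε p.1 p.2 + (1 - t) * Qdual α β C ε q.1 q.2
            < Qdual α β C ε (t • p.1 + (1 - t) • q.1) (t • p.2 + (1 - t) • q.2)) := by
  have hεne : ε ≠ 0 := ne_of_gt hε
  set i0 : Fin n := ⟨0, hn⟩
  set j0 : Fin m := ⟨0, hm⟩
  constructor
  · intro f g f₁ g₁
    rw [second_deriv_Qdual α β C ε hε f g f₁ g₁]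
    have hterm_nonneg : ∀ i ∈ Finset.univ, (0:ℝ) ≤ ∑ j, (α i * β j * ((f₁ i + g₁ j)/ε)) *
        (((f₁ i + g₁ j)/ε) * Real.exp ((f i + g j - C i j)/ε)) := by
      intro i _
      apply Finset.sum_nonneg; intro j _
      have : (α i * β j * ((f₁ i + g₁ j)/ε)) *
          (((f₁ i + g₁ j)/ε) * Real.exp ((f i + g j - C i j)/ε))
          = (α i * β j) * ((f₁ i + g₁ j)/ε)^2 * Real.exp ((f i + g j - C i j)/ε) := by
        ring
      rw [this]
      exact mul_nonneg (mul_nonneg (le_of_lt (mul_pos (hα i) (hβ j))) (sq_nonneg _))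
        (le_of_lt (Real.exp_pos _))
    constructor
    · intro h0
      have hsum0 : ∑ i, ∑ j, (α i * β j * ((f₁ i + g₁ j)/ε)) *
          (((f₁ i + g₁ j)/ε) * Real.exp ((f i + g j - C i j)/ε)) = 0 := by
        have := mul_eq_zero.mp h0
        rcases this with h | h
        · exact absurd h (by simp [hεne])
        · exact h
      have hall : ∀ i ∈ Finset.univ, ∑ j, (α i * β j * ((f₁ i + g₁ j)/ε)) *
          (((f₁ i + g₁ j)/ε) * Real.exp ((f i + g j - C i j)/ε)) = 0 :=
        (Finset.sum_eq_zero_iff_of_nonneg hterm_nonneg).mp hsum0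
      have hzero : ∀ i j, f₁ i + g₁ j = 0 := by
        intro i j
        have hinner := hall i (Finset.mem_univ i)
        have hnn : ∀ j ∈ Finset.univ, (0:ℝ) ≤ (α i * β j * ((f₁ i + g₁ j)/ε)) *
            (((f₁ i + g₁ j)/ε) * Real.exp ((f i + g j - C i j)/ε)) := by
          intro j _
          have heq : (α i * β j * ((f₁ i + g₁ j)/ε)) *
              (((f₁ i + g₁ j)/ε) * Real.exp ((f i + g j - C i j)/ε))
              = (α i * β j) * ((f₁ i + g₁ j)/ε)^2 * Real.exp ((f i + g j - C i j)/ε) := by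
            ring
          rw [heq]
          exact mul_nonneg (mul_nonneg (le_of_lt (mul_pos (hα i) (hβ j))) (sq_nonneg _))
            (le_of_lt (Real.exp_pos _))
        have hj := (Finset.sum_eq_zero_iff_of_nonneg hnn).mp hinner j (Finset.mem_univ j)
        have heq : (α i * β j * ((f₁ i + g₁ j)/ε)) *
            (((f₁ i + g₁ j)/ε) * Real.exp ((f i + g j - C i j)/ε))
            = (α i * β j * Real.exp ((f i + g j - C i j)/ε) / ε^2) * (f₁ i + g₁ j)^2 := by
          field_simp
        rw [heq] at hj
        have hpos : 0 < α i * β j * Real.exp ((f i + g j - C i j)/ε) / ε^2 := by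
          have := hα i; have := hβ j; positivity
        have := mul_eq_zero.mp hj
        rcases this with h | h
        · exact absurd h (ne_of_gt hpos)
        · exact pow_eq_zero_iff (n := 2) (by norm_num) |>.mp h
      refine ⟨f₁ i0, fun i => ?_, fun j => ?_⟩
      · have h1 := hzero i j0; have h2 := hzero i0 j0; linarith
      · have h1 := hzero i0 j; linarith
    · rintro ⟨c, hf, hg⟩
      have : ∀ i j, f₁ i + g₁ j = 0 := by intro i j; rw [hf i, hg j]; ring
      simp only [this]
      simp
  · intro p q hne t ht ht1
    -- find a witness pair
    have key : ∃ i j, p.1 i + p.2 j ≠ q.1 i + q.2 j := by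
      by_contra hall
      push_neg at hall
      apply hne
      refine ⟨p.1 i0 - q.1 i0, fun i => ?_, fun j => ?_⟩
      · have h1 := hall i j0; have h2 := hall i0 j0; linarith
      · have h1 := hall i0 j; linarith
    obtain ⟨iw, jw, hw⟩ := key
    have ht' : (0:ℝ) < 1 - t := by linarith
    -- pointwise convexity bounds
    have harg : ∀ i j, ((t • p.1 + (1-t) • q.1) i + (t • p.2 + (1-t) • q.2) j - C i j) / ε
        = t * ((p.1 i + p.2 j - C i j)/ε) + (1-t) * ((q.1 i + q.2 j - C i j)/ε) := by
      intro i j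
      simp only [Pi.add_apply, Pi.smul_apply, smul_eq_mul]
      field_simp; ring
    have pair_le : ∀ i j,
        α i * β j * Real.exp (((t • p.1 + (1-t) • q.1) i + (t • p.2 + (1-t) • q.2) j - C i j) / ε)
        ≤ t * (α i * β j * Real.exp ((p.1 i + p.2 j - C i j)/ε))
          + (1-t) * (α i * β j * Real.exp ((q.1 i + q.2 j - C i j)/ε)) := by
      intro i j
      rw [harg i j]
      have hcv := convexOn_exp.2 (Set.mem_univ ((p.1 i + p.2 j - C i j)/ε))
        (Set.mem_univ ((q.1 i + q.2 j - C i j)/ε)) (le_of_lt ht) (le_of_lt ht') (by ring)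
      simp only [smul_eq_mul] at hcv
      have hab : 0 ≤ α i * β j := le_of_lt (mul_pos (hα i) (hβ j))
      calc α i * β j * Real.exp (t * ((p.1 i + p.2 j - C i j)/ε) + (1-t) * ((q.1 i + q.2 j - C i j)/ε))
          ≤ α i * β j * (t * Real.exp ((p.1 i + p.2 j - C i j)/ε)
              + (1-t) * Real.exp ((q.1 i + q.2 j - C i j)/ε)) :=
            mul_le_mul_of_nonneg_left hcv hab
        _ = t * (α i * β j * Real.exp ((p.1 i + p.2 j - C i j)/ε))
            + (1-t) * (α i * β j * Real.exp ((q.1 i + q.2 j - C i j)/ε)) := by ring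
    have pair_lt :
        α iw * β jw * Real.exp (((t • p.1 + (1-t) • q.1) iw + (t • p.2 + (1-t) • q.2) jw - C iw jw) / ε)
        < t * (α iw * β jw * Real.exp ((p.1 iw + p.2 jw - C iw jw)/ε))
          + (1-t) * (α iw * β jw * Real.exp ((q.1 iw + q.2 jw - C iw jw)/ε)) := by
      rw [harg iw jw]
      have hxy : (p.1 iw + p.2 jw - C iw jw)/ε ≠ (q.1 iw + q.2 jw - C iw jw)/ε := by
        intro h
        apply hw
        field_simp at h
        linarith
      have hcv := strictConvexOn_exp.2 (Set.mem_univ ((p.1 iw + p.2 jw - C iw jw)/ε))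
        (Set.mem_univ ((q.1 iw + q.2 jw - C iw jw)/ε)) hxy ht ht' (by ring)
      simp only [smul_eq_mul] at hcv
      have hab : 0 < α iw * β jw := mul_pos (hα iw) (hβ jw)
      calc α iw * β jw * Real.exp (t * ((p.1 iw + p.2 jw - C iw jw)/ε) + (1-t) * ((q.1 iw + q.2 jw - C iw jw)/ε))
          < α iw * β jw * (t * Real.exp ((p.1 iw + p.2 jw - C iw jw)/ε)
              + (1-t) * Real.exp ((q.1 iw + q.2 jw - C iw jw)/ε)) :=
            (mul_lt_mul_iff_right₀ hab).mpr hcv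
        _ = t * (α iw * β jw * Real.exp ((p.1 iw + p.2 jw - C iw jw)/ε))
            + (1-t) * (α iw * β jw * Real.exp ((q.1 iw + q.2 jw - C iw jw)/ε)) := by ring
    -- sum inequality
    have hS : (∑ i, ∑ j, α i * β j *
          Real.exp (((t • p.1 + (1-t) • q.1) i + (t • p.2 + (1-t) • q.2) j - C i j) / ε))
        < t * (∑ i, ∑ j, α i * β j * Real.exp ((p.1 i + p.2 j - C i j)/ε))
          + (1-t) * (∑ i, ∑ j, α i * β j * Real.exp ((q.1 i + q.2 j - C i j)/ε)) := by
      have hrw : t * (∑ i, ∑ j, α i * β j * Real.exp ((p.1 i + p.2 j - C i j)/ε))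
          + (1-t) * (∑ i, ∑ j, α i * β j * Real.exp ((q.1 i + q.2 j - C i j)/ε))
          = ∑ i, ∑ j, (t * (α i * β j * Real.exp ((p.1 i + p.2 j - C i j)/ε))
              + (1-t) * (α i * β j * Real.exp ((q.1 i + q.2 j - C i j)/ε))) := by
        rw [Finset.mul_sum, Finset.mul_sum, ← Finset.sum_add_distrib]
        congr 1; funext i
        rw [Finset.mul_sum, Finset.mul_sum, ← Finset.sum_add_distrib]
      rw [hrw, ← Finset.sum_product', ← Finset.sum_product']
      apply Finset.sum_lt_sum
      · rintro ⟨i, j⟩ _; exact pair_le i j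
      · exact ⟨(iw, jw), Finset.mem_univ _, pair_lt⟩
    -- linear terms
    have hL1 : (∑ i, α i * (t • p.1 + (1-t) • q.1) i)
        = t * (∑ i, α i * p.1 i) + (1-t) * (∑ i, α i * q.1 i) := by
      rw [Finset.mul_sum, Finset.mul_sum, ← Finset.sum_add_distrib]
      congr 1; funext i
      simp only [Pi.add_apply, Pi.smul_apply, smul_eq_mul]; ring
    have hL2 : (∑ j, β j * (t • p.2 + (1-t) • q.2) j)
        = t * (∑ j, β j * p.2 j) + (1-t) * (∑ j, β j * q.2 j) := by
      rw [Finset.mul_sum, Finset.mul_sum, ← Finset.sum_add_distrib]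
      congr 1; funext j
      simp only [Pi.add_apply, Pi.smul_apply, smul_eq_mul]; ring
    simp only [Qdual]
    rw [hL1, hL2]
    have hmul := (mul_lt_mul_iff_right₀ hε).mpr hS
    nlinarith [hmul]
end

section
/- First-order optimality conditions for the dual EOT problem: for (f, g) ∈ ℝ^n × ℝ^m, the gradient of Q_ε vanishes at (f, g) if and only if the Sinkhorn equations hold, i.e. if and only if exp(f_i/ε)·∑_j β_j exp((g_j − C_{i,j})/ε) = 1 for every i and exp(g_j/ε)·∑_i α_i exp((f_i − C_{i,j})/ε) = 1 for every j; equivalently, if and only if f = g^{C,ε} and g = f^{C,ε}. -/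
open Real

section aux
variable {n m : ℕ} (α : Fin n → ℝ) (β : Fin m → ℝ) (C : Fin n → Fin m → ℝ) (ε : ℝ)
  (f : Fin n → ℝ) (g : Fin m → ℝ)

/-- The derivative of the dual EOT objective, as an explicit continuous linear map. -/
noncomputable def EOTderiv : (Fin n → ℝ) × (Fin m → ℝ) →L[ℝ] ℝ :=
  ((∑ i, α i • ((ContinuousLinearMap.proj i).comp (ContinuousLinearMap.fst ℝ (Fin n → ℝ) (Fin m → ℝ)))
    + ∑ j, β j • ((ContinuousLinearMap.proj j).comp (ContinuousLinearMap.snd ℝ (Fin n → ℝ) (Fin m → ℝ))))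
    - ε • (∑ i, ∑ j, (α i * β j) • (Real.exp ((f i + g j - C i j) / ε) •
        (ε⁻¹ • (((ContinuousLinearMap.proj i).comp (ContinuousLinearMap.fst ℝ (Fin n → ℝ) (Fin m → ℝ)))
          + ((ContinuousLinearMap.proj j).comp (ContinuousLinearMap.snd ℝ (Fin n → ℝ) (Fin m → ℝ))))))))

lemma EOT_hasFDerivAt :
    HasFDerivAt (fun p : (Fin n → ℝ) × (Fin m → ℝ) => Qdual α β C ε p.1 p.2)
      (EOTderiv α β C ε f g) (f, g) := by
  set A : Fin n → (Fin n → ℝ) × (Fin m → ℝ) →L[ℝ] ℝ := fun i =>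
    (ContinuousLinearMap.proj i).comp (ContinuousLinearMap.fst ℝ (Fin n → ℝ) (Fin m → ℝ)) with hA
  set B : Fin m → (Fin n → ℝ) × (Fin m → ℝ) →L[ℝ] ℝ := fun j =>
    (ContinuousLinearMap.proj j).comp (ContinuousLinearMap.snd ℝ (Fin n → ℝ) (Fin m → ℝ)) with hB
  have hinner : ∀ i j, HasFDerivAt (fun p : (Fin n → ℝ) × (Fin m → ℝ) =>
      (p.1 i + p.2 j - C i j) / ε) (ε⁻¹ • (A i + B j)) (f, g) := by
    intro i j
    simp only [div_eq_inv_mul]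
    exact (((A i + B j).hasFDerivAt.sub_const (C i j)).const_mul ε⁻¹)
  have hsum : HasFDerivAt (fun p : (Fin n → ℝ) × (Fin m → ℝ) =>
      ∑ i, ∑ j, α i * β j * Real.exp ((p.1 i + p.2 j - C i j) / ε))
      (∑ i, ∑ j, (α i * β j) • (Real.exp ((f i + g j - C i j) / ε) • (ε⁻¹ • (A i + B j)))) (f, g) :=
    HasFDerivAt.fun_sum (fun i _ => HasFDerivAt.fun_sum (fun j _ => ((hinner i j).exp).const_mul _))
  have h1 : HasFDerivAt (fun p : (Fin n → ℝ) × (Fin m → ℝ) => ∑ i, α i * p.1 i)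
      (∑ i, α i • A i) (f, g) :=
    HasFDerivAt.fun_sum (fun i _ => (A i).hasFDerivAt.const_mul (α i))
  have h2 : HasFDerivAt (fun p : (Fin n → ℝ) × (Fin m → ℝ) => ∑ j, β j * p.2 j)
      (∑ j, β j • B j) (f, g) :=
    HasFDerivAt.fun_sum (fun j _ => (B j).hasFDerivAt.const_mul (β j))
  exact (h1.add h2).sub (((hsum.sub_const 1).const_mul ε))

lemma EOTderiv_apply (w : (Fin n → ℝ) × (Fin m → ℝ)) :
    EOTderiv α β C ε f g w =
      (∑ i, α i * w.1 i) + (∑ j, β j * w.2 j)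
        - ε * ∑ i, ∑ j, α i * β j * (Real.exp ((f i + g j - C i j) / ε) * (ε⁻¹ * (w.1 i + w.2 j))) := by
  simp [EOTderiv, ContinuousLinearMap.sum_apply, mul_assoc]
  exact Or.inl (Finset.sum_congr rfl fun i _ => Finset.sum_congr rfl fun j _ => by ring)

end aux

/-- First-order optimality conditions for the dual EOT problem: the gradient of
`Q_ε` vanishes at `(f,g)` iff the Sinkhorn equations hold, equivalently iff
`f = g^{C,ε}` and `g = f^{C,ε}`. -/
theorem first_order_optimality_sinkhorn
    {n m : ℕ} (hn : 0 < n) (hm : 0 < m)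
    (α : Fin n → ℝ) (β : Fin m → ℝ)
    (hα : ∀ i, 0 < α i) (hβ : ∀ j, 0 < β j)
    (hαs : ∑ i, α i = 1) (hβs : ∑ j, β j = 1)
    (C : Fin n → Fin m → ℝ) (ε : ℝ) (hε : 0 < ε)
    (f : Fin n → ℝ) (g : Fin m → ℝ) :
    (fderiv ℝ (fun p : (Fin n → ℝ) × (Fin m → ℝ) => Qdual α β C ε p.1 p.2) (f, g) = 0
      ↔ ((∀ i, Real.exp (f i / ε) * ∑ j, β j * Real.exp ((g j - C i j) / ε) = 1) ∧
         (∀ j, Real.exp (g j / ε) * ∑ i, α i * Real.exp ((f i - C i j) / ε) = 1))) ∧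
    (fderiv ℝ (fun p : (Fin n → ℝ) × (Fin m → ℝ) => Qdual α β C ε p.1 p.2) (f, g) = 0
      ↔ (f = transformG β C ε g ∧ g = transformF α C ε f)) := by
  haveI : Nonempty (Fin n) := ⟨⟨0, hn⟩⟩
  haveI : Nonempty (Fin m) := ⟨⟨0, hm⟩⟩
  have hεne : ε ≠ 0 := ne_of_gt hε
  have hfd : fderiv ℝ (fun p : (Fin n → ℝ) × (Fin m → ℝ) => Qdual α β C ε p.1 p.2) (f, g)
      = EOTderiv α β C ε f g := (EOT_hasFDerivAt α β C ε f g).fderiv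
  have hexp1 : ∀ (i : Fin n) (j : Fin m), Real.exp ((f i + g j - C i j) / ε)
      = Real.exp (f i / ε) * Real.exp ((g j - C i j) / ε) := by
    intro i j; rw [← Real.exp_add, ← add_div]; congr 2; ring
  have hexp2 : ∀ (i : Fin n) (j : Fin m), Real.exp ((f i + g j - C i j) / ε)
      = Real.exp (g j / ε) * Real.exp ((f i - C i j) / ε) := by
    intro i j; rw [← Real.exp_add, ← add_div]; congr 2; ring
  have hSpos : ∀ i, 0 < ∑ j, β j * Real.exp ((g j - C i j) / ε) := fun i =>
    Finset.sum_pos (fun j _ => mul_pos (hβ j) (Real.exp_pos _)) Finset.univ_nonempty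
  have hTpos : ∀ j, 0 < ∑ i, α i * Real.exp ((f i - C i j) / ε) := fun j =>
    Finset.sum_pos (fun i _ => mul_pos (hα i) (Real.exp_pos _)) Finset.univ_nonempty
  -- key equivalence with the Sinkhorn equations
  have key : fderiv ℝ (fun p : (Fin n → ℝ) × (Fin m → ℝ) => Qdual α β C ε p.1 p.2) (f, g) = 0
      ↔ ((∀ i, Real.exp (f i / ε) * ∑ j, β j * Real.exp ((g j - C i j) / ε) = 1) ∧
         (∀ j, Real.exp (g j / ε) * ∑ i, α i * Real.exp ((f i - C i j) / ε) = 1)) := by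
    rw [hfd]
    constructor
    · intro h
      have h0 : ∀ w, EOTderiv α β C ε f g w = 0 := by
        intro w; rw [h]; rfl
      constructor
      · intro i
        have hi := h0 (Pi.single i 1, 0)
        rw [EOTderiv_apply] at hi
        simp only [Pi.single_apply, mul_ite, mul_one, mul_zero, Finset.sum_ite_eq',
          Finset.mem_univ, if_true, Pi.zero_apply, add_zero, Finset.sum_const_zero] at hi
        rw [Finset.sum_comm] at hi
        simp only [Finset.sum_ite_eq', Finset.mem_univ, if_true] at hi
        have e1 : ε * ∑ j, α i * β j * (Real.exp ((f i + g j - C i j) / ε) * ε⁻¹)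
            = α i * (Real.exp (f i / ε) * ∑ j, β j * Real.exp ((g j - C i j) / ε)) := by
          rw [Finset.mul_sum, Finset.mul_sum, Finset.mul_sum]
          refine Finset.sum_congr rfl fun j _ => ?_
          rw [hexp1]
          field_simp
        rw [e1] at hi
        have : α i * (Real.exp (f i / ε) * ∑ j, β j * Real.exp ((g j - C i j) / ε))
            = α i * 1 := by rw [mul_one]; linarith [sub_eq_zero.mp hi]
        exact mul_left_cancel₀ (ne_of_gt (hα i)) this
      · intro j
        have hj := h0 (0, Pi.single j 1)
        rw [EOTderiv_apply] at hj
        simp only [Pi.single_apply, mul_ite, mul_one, mul_zero, Finset.sum_ite_eq',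
          Finset.mem_univ, if_true, Pi.zero_apply, zero_add, Finset.sum_const_zero] at hj
        have e1 : ε * ∑ i, α i * β j * (Real.exp ((f i + g j - C i j) / ε) * ε⁻¹)
            = β j * (Real.exp (g j / ε) * ∑ i, α i * Real.exp ((f i - C i j) / ε)) := by
          rw [Finset.mul_sum, Finset.mul_sum, Finset.mul_sum]
          refine Finset.sum_congr rfl fun i _ => ?_
          rw [hexp2]
          field_simp
        rw [e1] at hj
        have : β j * (Real.exp (g j / ε) * ∑ i, α i * Real.exp ((f i - C i j) / ε))
            = β j * 1 := by rw [mul_one]; linarith [sub_eq_zero.mp hj]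
        exact mul_left_cancel₀ (ne_of_gt (hβ j)) this
    · rintro ⟨h1, h2⟩
      refine ContinuousLinearMap.ext fun w => ?_
      rw [EOTderiv_apply, ContinuousLinearMap.zero_apply]
      have step : ∀ (i : Fin n) (j : Fin m),
          α i * β j * (Real.exp ((f i + g j - C i j) / ε) * (ε⁻¹ * (w.1 i + w.2 j)))
          = (ε⁻¹ * w.1 i * α i) * (Real.exp (f i / ε) * (β j * Real.exp ((g j - C i j) / ε)))
            + (ε⁻¹ * w.2 j * β j) * (Real.exp (g j / ε) * (α i * Real.exp ((f i - C i j) / ε))) := by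
        intro i j
        linear_combination (ε⁻¹ * w.1 i * α i * β j) * hexp1 i j
          + (ε⁻¹ * w.2 j * β j * α i) * hexp2 i j
      have hmain : ∑ i, ∑ j, α i * β j * (Real.exp ((f i + g j - C i j) / ε) * (ε⁻¹ * (w.1 i + w.2 j)))
          = ε⁻¹ * ((∑ i, α i * w.1 i) + (∑ j, β j * w.2 j)) := by
        simp only [step, Finset.sum_add_distrib]
        have T1 : ∑ i, ∑ j, (ε⁻¹ * w.1 i * α i) * (Real.exp (f i / ε) * (β j * Real.exp ((g j - C i j) / ε)))
            = ∑ i, ε⁻¹ * w.1 i * α i := by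
          refine Finset.sum_congr rfl fun i _ => ?_
          rw [← Finset.mul_sum, ← Finset.mul_sum, h1 i, mul_one]
        have T2 : ∑ i, ∑ j, (ε⁻¹ * w.2 j * β j) * (Real.exp (g j / ε) * (α i * Real.exp ((f i - C i j) / ε)))
            = ∑ j, ε⁻¹ * w.2 j * β j := by
          rw [Finset.sum_comm]
          refine Finset.sum_congr rfl fun j _ => ?_
          rw [← Finset.mul_sum, ← Finset.mul_sum, h2 j, mul_one]
        rw [T1, T2, mul_add, Finset.mul_sum, Finset.mul_sum]
        congr 1 <;> exact Finset.sum_congr rfl fun _ _ => by ring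
      rw [hmain]
      field_simp
      ring
  refine ⟨key, key.trans ?_⟩
  apply and_congr
  · rw [funext_iff]
    refine forall_congr' fun i => ?_
    unfold transformG
    constructor
    · intro h
      have hlog := congrArg Real.log h
      rw [Real.log_mul (Real.exp_ne_zero _) (ne_of_gt (hSpos i)), Real.log_exp,
        Real.log_one] at hlog
      have hdiv : f i / ε = -Real.log (∑ j, β j * Real.exp ((g j - C i j) / ε)) := by linarith
      have hf : f i = (f i / ε) * ε := (div_mul_cancel₀ _ hεne).symm
      rw [hf, hdiv]; ring
    · intro h
      rw [h]
      have : (-ε * Real.log (∑ j, β j * Real.exp ((g j - C i j) / ε))) / ε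
          = -Real.log (∑ j, β j * Real.exp ((g j - C i j) / ε)) := by field_simp
      rw [this, Real.exp_neg, Real.exp_log (hSpos i)]
      exact inv_mul_cancel₀ (ne_of_gt (hSpos i))
  · rw [funext_iff]
    refine forall_congr' fun j => ?_
    unfold transformF
    constructor
    · intro h
      have hlog := congrArg Real.log h
      rw [Real.log_mul (Real.exp_ne_zero _) (ne_of_gt (hTpos j)), Real.log_exp,
        Real.log_one] at hlog
      have hdiv : g j / ε = -Real.log (∑ i, α i * Real.exp ((f i - C i j) / ε)) := by linarith
      have hf : g j = (g j / ε) * ε := (div_mul_cancel₀ _ hεne).symm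
      rw [hf, hdiv]; ring
    · intro h
      rw [h]
      have : (-ε * Real.log (∑ i, α i * Real.exp ((f i - C i j) / ε))) / ε
          = -Real.log (∑ i, α i * Real.exp ((f i - C i j) / ε)) := by field_simp
      rw [this, Real.exp_neg, Real.exp_log (hTpos j)]
      exact inv_mul_cancel₀ (ne_of_gt (hTpos j))
end

section
/- Optimality of the (C,ε)-transform in the second block: for every f : Fin n → ℝ, the function g ↦ Q_ε(f, g) attains its maximum over ℝ^m at g = f^{C,ε}; that is, Q_ε(f, g) ≤ Q_ε(f, f^{C,ε}) = Q^semi_ε(f) for all g : Fin m → ℝ, with equality if and only if g = f^{C,ε}. -/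
open Real

/-- Semi-dual objective `Q^semi_ε(f) = ∑ᵢ αᵢ fᵢ + ∑ⱼ βⱼ f^{C,ε}(j)`. -/
noncomputable def Qsemi {n m : ℕ} (α : Fin n → ℝ) (β : Fin m → ℝ)
    (C : Fin n → Fin m → ℝ) (ε : ℝ) (f : Fin n → ℝ) : ℝ :=
  (∑ i, α i * f i) + ∑ j, β j * transformF α C ε f j

/-- Optimality of the `(C,ε)`-transform in the second block: for every `f`,
`g ↦ Q_ε(f,g)` is maximized exactly at `g = f^{C,ε}`, where its value equals
`Q^semi_ε(f)`. -/
theorem transform_maximizes_second_block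
    {n m : ℕ} (hn : 0 < n) (hm : 0 < m)
    (α : Fin n → ℝ) (β : Fin m → ℝ)
    (hα : ∀ i, 0 < α i) (hβ : ∀ j, 0 < β j)
    (hαs : ∑ i, α i = 1) (hβs : ∑ j, β j = 1)
    (C : Fin n → Fin m → ℝ) (ε : ℝ) (hε : 0 < ε)
    (f : Fin n → ℝ) :
    (∀ g : Fin m → ℝ, Qdual α β C ε f g ≤ Qdual α β C ε f (transformF α C ε f)) ∧
    Qdual α β C ε f (transformF α C ε f) = Qsemi α β C ε f ∧
    (∀ g : Fin m → ℝ,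
        Qdual α β C ε f g = Qdual α β C ε f (transformF α C ε f)
          ↔ g = transformF α C ε f) := by

  have hεne : ε ≠ 0 := ne_of_gt hε
  set g0 := transformF α C ε f with hg0
  have hS : ∀ j, 0 < ∑ i, α i * Real.exp ((f i - C i j) / ε) := by
    intro j
    apply Finset.sum_pos
    · intro i _; exact mul_pos (hα i) (Real.exp_pos _)
    · exact Finset.univ_nonempty_iff.mpr ⟨⟨0, hn⟩⟩
  have key : ∀ g : Fin m → ℝ, Qdual α β C ε f g
      = Qsemi α β C ε f - ε * ∑ j, β j *
        (Real.exp ((g j - g0 j) / ε) - (g j - g0 j) / ε - 1) := by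
    intro g
    have hswap : (∑ i, ∑ j, α i * β j * Real.exp ((f i + g j - C i j) / ε))
        = ∑ j, β j * Real.exp ((g j - g0 j) / ε) := by
      rw [Finset.sum_comm]
      refine Finset.sum_congr rfl fun j _ => ?_
      have hE : Real.exp ((g j - g0 j) / ε)
          = Real.exp (g j / ε) * (∑ i, α i * Real.exp ((f i - C i j) / ε)) := by
        rw [hg0]
        simp only [transformF]
        rw [show (g j - -ε * Real.log (∑ i, α i * Real.exp ((f i - C i j) / ε))) / ε
            = g j / ε + Real.log (∑ i, α i * Real.exp ((f i - C i j) / ε)) by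
          field_simp; ring]
        rw [Real.exp_add, Real.exp_log (hS j)]
      rw [hE, Finset.mul_sum, Finset.mul_sum]
      refine Finset.sum_congr rfl fun i _ => ?_
      rw [show (f i + g j - C i j) / ε = (f i - C i j) / ε + g j / ε by ring,
        Real.exp_add]
      ring
    have hsum : ε * ∑ j, β j *
        (Real.exp ((g j - g0 j) / ε) - (g j - g0 j) / ε - 1)
        = ε * (∑ j, β j * Real.exp ((g j - g0 j) / ε))
          - ((∑ j, β j * g j) - ∑ j, β j * g0 j) - ε := by
      rw [Finset.mul_sum, Finset.mul_sum]
      have h1 : ∀ j ∈ Finset.univ, ε * (β j * (Real.exp ((g j - g0 j) / ε)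
          - (g j - g0 j) / ε - 1))
          = ε * (β j * Real.exp ((g j - g0 j) / ε)) - (β j * g j - β j * g0 j)
            - ε * β j := by
        intro j _; field_simp
      rw [Finset.sum_congr rfl h1, Finset.sum_sub_distrib, Finset.sum_sub_distrib,
        Finset.sum_sub_distrib]
      simp [← Finset.mul_sum, hβs]
    unfold Qdual Qsemi
    rw [hswap]
    rw [hsum]
    ring
  have hterm_nonneg : ∀ (g : Fin m → ℝ) (j : Fin m),
      0 ≤ β j * (Real.exp ((g j - g0 j) / ε) - (g j - g0 j) / ε - 1) := by
    intro g j
    apply mul_nonneg (le_of_lt (hβ j))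
    have := Real.add_one_le_exp ((g j - g0 j) / ε)
    linarith
  have hzero : Qdual α β C ε f g0 = Qsemi α β C ε f := by
    rw [key g0]
    simp
  refine ⟨?_, hzero, ?_⟩
  · intro g
    rw [key g, hzero]
    have : 0 ≤ ∑ j, β j * (Real.exp ((g j - g0 j) / ε) - (g j - g0 j) / ε - 1) :=
      Finset.sum_nonneg fun j _ => hterm_nonneg g j
    nlinarith
  · intro g
    rw [key g, hzero]
    constructor
    · intro h
      have hsum0 : ∑ j, β j * (Real.exp ((g j - g0 j) / ε) - (g j - g0 j) / ε - 1)
          = 0 := by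
        have : ε * ∑ j, β j * (Real.exp ((g j - g0 j) / ε) - (g j - g0 j) / ε - 1)
            = 0 := by linarith
        exact (mul_eq_zero.mp this).resolve_left hεne
      have h0 := (Finset.sum_eq_zero_iff_of_nonneg
        (fun j _ => hterm_nonneg g j)).mp hsum0
      funext j
      have hj := h0 j (Finset.mem_univ j)
      have hfac : Real.exp ((g j - g0 j) / ε) - (g j - g0 j) / ε - 1 = 0 := by
        rcases mul_eq_zero.mp hj with h | h
        · exact absurd h (ne_of_gt (hβ j))
        · exact h
      by_contra hne
      have ht : (g j - g0 j) / ε ≠ 0 := by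
        intro h0'
        apply hne
        have := (div_eq_zero_iff.mp h0').resolve_right hεne
        linarith
      have := Real.add_one_lt_exp ht
      linarith
    · intro h
      subst h
      simp
end

section
/- First differential of the semi-dual objective: for every f : Fin n → ℝ and every direction f₁ : Fin n → ℝ, the derivative of Q^semi_ε at f in direction f₁ equals ∑_i α_i f₁_i − ∑_{i,j} α_i β_j f₁_i · exp((f_i + f^{C,ε}(j) − C_{i,j})/ε). -/
open Real

/-- First differential of the semi-dual objective: the directional derivative
of `Q^semi_ε` at `f` in direction `f₁` equals
`∑ᵢ αᵢ f₁ᵢ − ∑_{i,j} αᵢβⱼ f₁ᵢ·exp((fᵢ + f^{C,ε}(j) − C_{ij})/ε)`. -/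
theorem first_differential_Qsemi
    {n m : ℕ} (hn : 0 < n) (hm : 0 < m)
    (α : Fin n → ℝ) (β : Fin m → ℝ)
    (hα : ∀ i, 0 < α i) (hβ : ∀ j, 0 < β j)
    (hαs : ∑ i, α i = 1) (hβs : ∑ j, β j = 1)
    (C : Fin n → Fin m → ℝ) (ε : ℝ) (hε : 0 < ε)
    (f : Fin n → ℝ) (f₁ : Fin n → ℝ) :
    deriv (fun t : ℝ => Qsemi α β C ε (fun i => f i + t * f₁ i)) 0
      = (∑ i, α i * f₁ i)
        - ∑ i, ∑ j, α i * β j * f₁ i *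
            Real.exp ((f i + transformF α C ε f j - C i j) / ε) := by
  have hε' : ε ≠ 0 := ne_of_gt hε
  -- S j t : the inner sum
  set S : Fin m → ℝ → ℝ :=
    fun j t => ∑ i, α i * Real.exp ((f i + t * f₁ i - C i j) / ε) with hS
  have hSpos : ∀ j t, 0 < S j t := by
    intro j t
    apply Finset.sum_pos
    · intro i _
      exact mul_pos (hα i) (Real.exp_pos _)
    · exact Finset.univ_nonempty_iff.mpr (Fin.pos_iff_nonempty.mp hn)
  -- derivative of S j at 0
  set S' : Fin m → ℝ :=
    fun j => ∑ i, α i * (Real.exp ((f i + 0 * f₁ i - C i j) / ε) * (f₁ i / ε)) with hS'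
  have hDS : ∀ j, HasDerivAt (S j) (S' j) 0 := by
    intro j
    apply HasDerivAt.fun_sum
    intro i _
    have h1 : HasDerivAt (fun t : ℝ => (f i + t * f₁ i - C i j) / ε) (f₁ i / ε) 0 := by
      have : HasDerivAt (fun t : ℝ => f i + t * f₁ i - C i j) (f₁ i) 0 := by
        simpa using (((hasDerivAt_id (0:ℝ)).mul_const (f₁ i)).const_add (f i)).sub_const (C i j)
      simpa using this.div_const ε
    exact (h1.exp).const_mul (α i)
  -- derivative of the whole objective
  have hmain : HasDerivAt (fun t : ℝ => Qsemi α β C ε (fun i => f i + t * f₁ i))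
      ((∑ i, α i * f₁ i) + ∑ j, β j * (-ε * (S' j / S j 0))) 0 := by
    unfold Qsemi transformF
    apply HasDerivAt.add
    · have : HasDerivAt (fun t : ℝ => ∑ i, α i * (f i + t * f₁ i))
          (∑ i, α i * f₁ i) 0 := by
        apply HasDerivAt.fun_sum
        intro i _
        have : HasDerivAt (fun t : ℝ => f i + t * f₁ i) (f₁ i) 0 := by
          simpa using ((hasDerivAt_id (0:ℝ)).mul_const (f₁ i)).const_add (f i)
        exact this.const_mul (α i)
      exact this
    · apply HasDerivAt.fun_sum
      intro j _
      have hlog : HasDerivAt (fun t : ℝ => Real.log (S j t)) (S' j / S j 0) 0 :=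
        (hDS j).log (ne_of_gt (hSpos j 0))
      exact (hlog.const_mul (-ε)).const_mul (β j)
  rw [hmain.deriv]
  -- algebraic identification
  have hT : ∀ j, transformF α C ε f j = -ε * Real.log (S j 0) := by
    intro j
    simp [transformF, hS]
  have key : ∀ j, β j * (-ε * (S' j / S j 0))
      = -∑ i, α i * β j * f₁ i * Real.exp ((f i + transformF α C ε f j - C i j) / ε) := by
    intro j
    have hexp : ∀ i, Real.exp ((f i + transformF α C ε f j - C i j) / ε)
        = Real.exp ((f i - C i j) / ε) / S j 0 := by
      intro i
      rw [hT j]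
      have : (f i + -ε * Real.log (S j 0) - C i j) / ε
          = (f i - C i j) / ε + (-Real.log (S j 0)) := by
        field_simp; ring
      rw [this, Real.exp_add, Real.exp_neg, Real.exp_log (hSpos j 0)]
      ring
    rw [hS', Finset.sum_div, Finset.mul_sum, Finset.mul_sum, ← Finset.sum_neg_distrib]
    apply Finset.sum_congr rfl
    intro i _
    rw [hexp i]
    simp only [zero_mul, add_zero]
    have hS0 := (hSpos j 0).ne'
    generalize Real.exp ((f i - C i j) / ε) = E
    field_simp
  rw [sub_eq_add_neg, Finset.sum_comm, ← Finset.sum_neg_distrib]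
  congr 1
  exact Finset.sum_congr rfl fun j _ => key j
end

section
/- Second differential of the semi-dual objective as minus an averaged variance: for every f : Fin n → ℝ and direction f₁ : Fin n → ℝ, D²Q^semi_ε(f)[f₁,f₁] = −(1/ε)·[ ∑_{i,j} α_i β_j f₁_i² exp((f_i + f^{C,ε}(j) − C_{i,j})/ε) − ∑_j β_j ( ∑_i α_i f₁_i exp((f_i + f^{C,ε}(j) − C_{i,j})/ε) )² ] = −(1/ε)·∑_j β_j Var_{p_j}(f₁), where for each j, p_j(i) = α_i exp((f_i + f^{C,ε}(j) − C_{i,j})/ε) defines probability weights on Fin n (∑_i p_j(i) = 1) and Var_{p_j}(f₁) = ∑_i p_j(i) f₁_i² − (∑_i p_j(i) f₁_i)². In particular D²Q^semi_ε(f)[f₁,f₁] ≤ 0, so Q^semi_ε is concave. -/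
open Real

/-- The probability weights `p_j(i) = αᵢ·exp((fᵢ + f^{C,ε}(j) − C_{ij})/ε)`. -/
noncomputable def pweight {n m : ℕ} (α : Fin n → ℝ) (C : Fin n → Fin m → ℝ)
    (ε : ℝ) (f : Fin n → ℝ) (j : Fin m) (i : Fin n) : ℝ :=
  α i * Real.exp ((f i + transformF α C ε f j - C i j) / ε)

namespace EOTaux

variable {n m : ℕ}

/-- The denominator sum along the line `x + t d`. -/
noncomputable def Sx (α : Fin n → ℝ) (C : Fin n → Fin m → ℝ) (ε : ℝ)
    (x d : Fin n → ℝ) (j : Fin m) (t : ℝ) : ℝ :=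
  ∑ i, α i * Real.exp ((x i + t * d i - C i j) / ε)

noncomputable def S1 (α : Fin n → ℝ) (C : Fin n → Fin m → ℝ) (ε : ℝ)
    (x d : Fin n → ℝ) (j : Fin m) (t : ℝ) : ℝ :=
  ∑ i, α i * (d i / ε * Real.exp ((x i + t * d i - C i j) / ε))

noncomputable def S2 (α : Fin n → ℝ) (C : Fin n → Fin m → ℝ) (ε : ℝ)
    (x d : Fin n → ℝ) (j : Fin m) (t : ℝ) : ℝ :=
  ∑ i, α i * (d i / ε * (d i / ε * Real.exp ((x i + t * d i - C i j) / ε)))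

noncomputable def G1 (α : Fin n → ℝ) (β : Fin m → ℝ) (C : Fin n → Fin m → ℝ) (ε : ℝ)
    (x d : Fin n → ℝ) (t : ℝ) : ℝ :=
  (∑ i, α i * d i) + ∑ j, β j * (-ε * (S1 α C ε x d j t / Sx α C ε x d j t))

noncomputable def G2 (α : Fin n → ℝ) (β : Fin m → ℝ) (C : Fin n → Fin m → ℝ) (ε : ℝ)
    (x d : Fin n → ℝ) (t : ℝ) : ℝ :=
  ∑ j, β j * (-ε * ((S2 α C ε x d j t * Sx α C ε x d j t
      - S1 α C ε x d j t * S1 α C ε x d j t) / Sx α C ε x d j t ^ 2))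

variable {α : Fin n → ℝ} {β : Fin m → ℝ} {C : Fin n → Fin m → ℝ} {ε : ℝ}
  {x d : Fin n → ℝ}

lemma Sx_pos (hn : 0 < n) (hα : ∀ i, 0 < α i) (j : Fin m) (t : ℝ) :
    0 < Sx α C ε x d j t := by
  haveI : Nonempty (Fin n) := ⟨⟨0, hn⟩⟩
  exact Finset.sum_pos (fun i _ => mul_pos (hα i) (Real.exp_pos _)) Finset.univ_nonempty

lemma hasDerivAt_exp_term (i : Fin n) (j : Fin m) (t : ℝ) :
    HasDerivAt (fun t : ℝ => Real.exp ((x i + t * d i - C i j) / ε))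
      (Real.exp ((x i + t * d i - C i j) / ε) * (d i / ε)) t := by
  have hu : HasDerivAt (fun t : ℝ => (x i + t * d i - C i j) / ε) (d i / ε) t := by
    have h := ((((hasDerivAt_id t).mul_const (d i)).const_add (x i)).sub_const
      (C i j)).div_const ε
    simpa using h
  exact hu.exp

lemma hasDerivAt_Sx (j : Fin m) (t : ℝ) :
    HasDerivAt (Sx α C ε x d j) (S1 α C ε x d j t) t := by
  unfold Sx S1
  refine HasDerivAt.fun_sum fun i _ => ?_
  have h := (hasDerivAt_exp_term (x := x) (d := d) (C := C) (ε := ε) i j t).const_mul (α i)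
  exact h.congr_deriv (by ring)

lemma hasDerivAt_S1 (j : Fin m) (t : ℝ) :
    HasDerivAt (S1 α C ε x d j) (S2 α C ε x d j t) t := by
  unfold S1 S2
  refine HasDerivAt.fun_sum fun i _ => ?_
  have h := ((hasDerivAt_exp_term (x := x) (d := d) (C := C) (ε := ε) i j t).const_mul
    (d i / ε)).const_mul (α i)
  exact h.congr_deriv (by ring)

lemma hasDerivAt_G (hn : 0 < n) (hα : ∀ i, 0 < α i) (hε : ε ≠ 0) (t : ℝ) :
    HasDerivAt (fun t : ℝ => Qsemi α β C ε (fun i => x i + t * d i))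
      (G1 α β C ε x d t) t := by
  have hfun : (fun t : ℝ => Qsemi α β C ε (fun i => x i + t * d i)) =
      fun t => (∑ i, α i * (x i + t * d i)) + ∑ j, β j * (-ε * Real.log (Sx α C ε x d j t)) := by
    rfl
  rw [hfun]
  unfold G1
  refine HasDerivAt.add ?_ ?_
  · refine HasDerivAt.fun_sum fun i _ => ?_
    have h := (((hasDerivAt_id t).mul_const (d i)).const_add (x i)).const_mul (α i)
    exact h.congr_deriv (by ring)
  · refine HasDerivAt.fun_sum fun j _ => ?_
    have hpos := Sx_pos (C := C) (ε := ε) (x := x) (d := d) hn hα j t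
    have hlog := ((hasDerivAt_Sx (α := α) (x := x) (d := d) j t).log hpos.ne').const_mul (-ε)
    have h := hlog.const_mul (β j)
    exact h
  
lemma hasDerivAt_G1 (hn : 0 < n) (hα : ∀ i, 0 < α i) (t : ℝ) :
    HasDerivAt (G1 α β C ε x d) (G2 α β C ε x d t) t := by
  unfold G1 G2
  refine HasDerivAt.const_add _ (HasDerivAt.fun_sum fun j _ => ?_)
  have hpos := Sx_pos (C := C) (ε := ε) (x := x) (d := d) hn hα j t
  have h := (((hasDerivAt_S1 (α := α) (x := x) (d := d) (C := C) (ε := ε) j t).div (hasDerivAt_Sx (α := α) (x := x) (d := d) (C := C) (ε := ε) j t)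
    hpos.ne').const_mul (-ε)).const_mul (β j)
  exact h

lemma G2_nonpos (hn : 0 < n) (hα : ∀ i, 0 < α i) (hβ : ∀ j, 0 < β j) (hε : 0 < ε)
    (t : ℝ) : G2 α β C ε x d t ≤ 0 := by
  unfold G2
  refine Finset.sum_nonpos fun j _ => ?_
  refine mul_nonpos_of_nonneg_of_nonpos (hβ j).le ?_
  have hpos := Sx_pos (C := C) (ε := ε) (x := x) (d := d) hn hα j t
  have hcs : S1 α C ε x d j t ^ 2 ≤ Sx α C ε x d j t * S2 α C ε x d j t := by
    have key := Finset.sum_mul_sq_le_sq_mul_sq Finset.univ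
      (fun i => Real.sqrt (α i * Real.exp ((x i + t * d i - C i j) / ε)))
      (fun i => d i / ε * Real.sqrt (α i * Real.exp ((x i + t * d i - C i j) / ε)))
    have hsq : ∀ i : Fin n,
        Real.sqrt (α i * Real.exp ((x i + t * d i - C i j) / ε)) ^ 2
          = α i * Real.exp ((x i + t * d i - C i j) / ε) := fun i =>
      Real.sq_sqrt (mul_nonneg (hα i).le (Real.exp_pos _).le)
    calc S1 α C ε x d j t ^ 2
        = (∑ i, Real.sqrt (α i * Real.exp ((x i + t * d i - C i j) / ε)) *
            (d i / ε * Real.sqrt (α i * Real.exp ((x i + t * d i - C i j) / ε)))) ^ 2 := by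
          unfold S1
          congr 1
          refine Finset.sum_congr rfl fun i _ => ?_
          linear_combination (-(d i / ε)) * hsq i
      _ ≤ (∑ i, Real.sqrt (α i * Real.exp ((x i + t * d i - C i j) / ε)) ^ 2) *
            (∑ i, (d i / ε * Real.sqrt (α i * Real.exp ((x i + t * d i - C i j) / ε))) ^ 2) :=
          key
      _ = Sx α C ε x d j t * S2 α C ε x d j t := by
          unfold Sx S2
          congr 1
          · exact Finset.sum_congr rfl fun i _ => hsq i
          · refine Finset.sum_congr rfl fun i _ => ?_
            linear_combination (d i / ε) ^ 2 * hsq i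
  have hnum : 0 ≤ S2 α C ε x d j t * Sx α C ε x d j t
      - S1 α C ε x d j t * S1 α C ε x d j t := by nlinarith
  have : 0 ≤ (S2 α C ε x d j t * Sx α C ε x d j t
      - S1 α C ε x d j t * S1 α C ε x d j t) / Sx α C ε x d j t ^ 2 :=
    div_nonneg hnum (sq_nonneg _)
  nlinarith

lemma deriv2_eq (hn : 0 < n) (hα : ∀ i, 0 < α i) (hε : ε ≠ 0) (t : ℝ) :
    deriv (deriv (fun t : ℝ => Qsemi α β C ε (fun i => x i + t * d i))) t
      = G2 α β C ε x d t := by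
  have h1 : deriv (fun t : ℝ => Qsemi α β C ε (fun i => x i + t * d i))
      = G1 α β C ε x d := funext fun s => (hasDerivAt_G hn hα hε s).deriv
  rw [h1]
  exact (hasDerivAt_G1 hn hα t).deriv

end EOTaux

open EOTaux

/-- Second differential of the semi-dual objective as minus an averaged
variance: `D²Q^semi_ε(f)[f₁,f₁] = −(1/ε)·∑ⱼ βⱼ Var_{p_j}(f₁) ≤ 0`, where the
`p_j` are probability weights on `Fin n`; in particular `Q^semi_ε` is concave. -/
theorem second_differential_Qsemi_variance
    {n m : ℕ} (hn : 0 < n) (hm : 0 < m)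
    (α : Fin n → ℝ) (β : Fin m → ℝ)
    (hα : ∀ i, 0 < α i) (hβ : ∀ j, 0 < β j)
    (hαs : ∑ i, α i = 1) (hβs : ∑ j, β j = 1)
    (C : Fin n → Fin m → ℝ) (ε : ℝ) (hε : 0 < ε)
    (f : Fin n → ℝ) (f₁ : Fin n → ℝ) :
    (∀ j, ∑ i, pweight α C ε f j i = 1) ∧
    iteratedDeriv 2 (fun t : ℝ => Qsemi α β C ε (fun i => f i + t * f₁ i)) 0
      = -(1 / ε) *
        ((∑ i, ∑ j, α i * β j * f₁ i ^ 2 *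
            Real.exp ((f i + transformF α C ε f j - C i j) / ε))
          - ∑ j, β j * (∑ i, α i * f₁ i *
              Real.exp ((f i + transformF α C ε f j - C i j) / ε)) ^ 2) ∧
    iteratedDeriv 2 (fun t : ℝ => Qsemi α β C ε (fun i => f i + t * f₁ i)) 0
      = -(1 / ε) * ∑ j, β j *
          ((∑ i, pweight α C ε f j i * f₁ i ^ 2)
            - (∑ i, pweight α C ε f j i * f₁ i) ^ 2) ∧
    iteratedDeriv 2 (fun t : ℝ => Qsemi α β C ε (fun i => f i + t * f₁ i)) 0 ≤ 0 ∧
    ConcaveOn ℝ Set.univ (Qsemi α β C ε) := by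
  have hε' : ε ≠ 0 := hε.ne'
  have hSpos : ∀ j, 0 < Sx α C ε f f₁ j 0 := fun j => Sx_pos hn hα j 0
  have hT : ∀ j, transformF α C ε f j = -ε * Real.log (Sx α C ε f f₁ j 0) := by
    intro j
    unfold transformF Sx
    norm_num
  have hpw : ∀ j i, pweight α C ε f j i
      = α i * Real.exp ((f i + 0 * f₁ i - C i j) / ε) / Sx α C ε f f₁ j 0 := by
    intro j i
    unfold pweight
    rw [hT j]
    have h1 : (f i + -ε * Real.log (Sx α C ε f f₁ j 0) - C i j) / ε
        = (f i + 0 * f₁ i - C i j) / ε + -Real.log (Sx α C ε f f₁ j 0) := by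
      field_simp
      ring
    rw [h1, Real.exp_add, Real.exp_neg, Real.exp_log (hSpos j)]
    ring
  have hpw1 : ∀ j, ∑ i, pweight α C ε f j i = 1 := by
    intro j
    rw [Finset.sum_congr rfl fun i _ => hpw j i, ← Finset.sum_div]
    exact div_self (hSpos j).ne'
  have hgen : iteratedDeriv 2 (fun t : ℝ => Qsemi α β C ε (fun i => f i + t * f₁ i)) 0
      = G2 α β C ε f f₁ 0 := by
    rw [iteratedDeriv_succ, iteratedDeriv_one]
    exact deriv2_eq hn hα hε' 0
  have hform2 : G2 α β C ε f f₁ 0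
      = -(1 / ε) * ∑ j, β j * ((∑ i, pweight α C ε f j i * f₁ i ^ 2)
          - (∑ i, pweight α C ε f j i * f₁ i) ^ 2) := by
    unfold G2
    rw [Finset.mul_sum]
    refine Finset.sum_congr rfl fun j _ => ?_
    have hA : ε ^ 2 * S2 α C ε f f₁ j 0
        = ∑ i, α i * Real.exp ((f i + 0 * f₁ i - C i j) / ε) * f₁ i ^ 2 := by
      unfold S2
      rw [Finset.mul_sum]
      refine Finset.sum_congr rfl fun i _ => ?_
      field_simp
    have hB : ε * S1 α C ε f f₁ j 0
        = ∑ i, α i * Real.exp ((f i + 0 * f₁ i - C i j) / ε) * f₁ i := by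
      unfold S1
      rw [Finset.mul_sum]
      refine Finset.sum_congr rfl fun i _ => ?_
      field_simp
    have hP2 : ∑ i, pweight α C ε f j i * f₁ i ^ 2
        = ε ^ 2 * S2 α C ε f f₁ j 0 / Sx α C ε f f₁ j 0 := by
      rw [hA, Finset.sum_div]
      refine Finset.sum_congr rfl fun i _ => ?_
      rw [hpw j i]; ring
    have hP1 : ∑ i, pweight α C ε f j i * f₁ i
        = ε * S1 α C ε f f₁ j 0 / Sx α C ε f f₁ j 0 := by
      rw [hB, Finset.sum_div]
      refine Finset.sum_congr rfl fun i _ => ?_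
      rw [hpw j i]; ring
    rw [hP2, hP1]
    have hSne := (hSpos j).ne'
    field_simp
  have hform1 : (∑ i, ∑ j, α i * β j * f₁ i ^ 2 *
        Real.exp ((f i + transformF α C ε f j - C i j) / ε))
      - ∑ j, β j * (∑ i, α i * f₁ i *
          Real.exp ((f i + transformF α C ε f j - C i j) / ε)) ^ 2
      = ∑ j, β j * ((∑ i, pweight α C ε f j i * f₁ i ^ 2)
          - (∑ i, pweight α C ε f j i * f₁ i) ^ 2) := by
    rw [Finset.sum_comm, ← Finset.sum_sub_distrib]
    refine Finset.sum_congr rfl fun j _ => ?_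
    rw [mul_sub]
    congr 1
    · rw [Finset.mul_sum]
      refine Finset.sum_congr rfl fun i _ => ?_
      unfold pweight
      ring
    · congr 2
      refine Finset.sum_congr rfl fun i _ => ?_
      unfold pweight
      ring
  refine ⟨hpw1, ?_, ?_, ?_, ?_⟩
  · rw [hgen, hform2, hform1]
  · rw [hgen, hform2]
  · rw [hgen]
    exact G2_nonpos hn hα hβ hε 0
  · refine ⟨convex_univ, ?_⟩
    intro x hx y hy a b ha hb hab
    set d : Fin n → ℝ := fun i => y i - x i with hd
    have hG : ∀ t : ℝ, HasDerivAt (fun t : ℝ => Qsemi α β C ε (fun i => x i + t * d i))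
        (G1 α β C ε x d t) t := fun t => hasDerivAt_G hn hα hε' t
    have hderiv : deriv (fun t : ℝ => Qsemi α β C ε (fun i => x i + t * d i))
        = G1 α β C ε x d := funext fun s => (hG s).deriv
    have hconc : ConcaveOn ℝ Set.univ (fun t : ℝ => Qsemi α β C ε (fun i => x i + t * d i)) := by
      refine concaveOn_of_deriv2_nonpos convex_univ ?_ ?_ ?_ ?_
      · exact (Differentiable.continuous fun t => (hG t).differentiableAt).continuousOn
      · exact fun t _ => (hG t).differentiableAt.differentiableWithinAt
      · rw [hderiv]
        exact fun t _ => (hasDerivAt_G1 hn hα t).differentiableAt.differentiableWithinAt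
      · intro s _
        have h2 := deriv2_eq (α := α) (β := β) (C := C) (ε := ε) (x := x) (d := d) hn hα hε' s
        have hle := G2_nonpos (β := β) (C := C) (x := x) (d := d) hn hα hβ hε s
        calc deriv^[2] (fun t : ℝ => Qsemi α β C ε (fun i => x i + t * d i)) s
            = deriv (deriv (fun t : ℝ => Qsemi α β C ε (fun i => x i + t * d i))) s := by
              simp [Function.iterate_succ_apply']
          _ = G2 α β C ε x d s := h2
          _ ≤ 0 := hle
    have key := hconc.2 (Set.mem_univ (0 : ℝ)) (Set.mem_univ (1 : ℝ)) ha hb hab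
    have h0 : (fun i => x i + (a * (0:ℝ) + b * (1:ℝ)) * d i) = a • x + b • y := by
      funext i
      have hab' : a = 1 - b := by linarith
      simp only [Pi.add_apply, Pi.smul_apply, smul_eq_mul, hd, hab']
      ring
    have h1 : (fun i => x i + (0:ℝ) * d i) = x := by funext i; ring_nf
    have h2 : (fun i => x i + (1:ℝ) * d i) = y := by funext i; simp [hd]
    simp only [smul_eq_mul] at key ⊢
    rw [h1, h2, h0] at key
    exact key
end

section
/- Semi-dual Hessian at the optimum: at an optimal potential f* (satisfying the Sinkhorn equations together with g* = (f*)^{C,ε}), the Hessian of Q^semi_ε with respect to the weighted inner product ⟨f₁,f₂⟩_α = ∑_i α_i f₁_i f₂_i satisfies D²Q^semi_ε(f*)[f₁,f₂] = −(1/ε)·( ⟨f₁, f₂⟩_α − ⟨(R∘Rᵀ) f₁, f₂⟩_α ) for all f₁, f₂ ∈ ℝ^n; i.e., the Hessian of Q^semi_ε at f* equals −(1/ε)(Id − R∘Rᵀ) as a self-adjoint operator on (ℝ^n, ⟨·,·⟩_α). -/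
open Real

lemma sum_pos_exp {n : ℕ} (hn : 0 < n) (α : Fin n → ℝ) (hα : ∀ i, 0 < α i)
    (w : Fin n → ℝ) : 0 < ∑ i, α i * Real.exp (w i) := by
  have : Nonempty (Fin n) := Fin.pos_iff_nonempty.mp hn
  exact Finset.sum_pos (fun i _ => mul_pos (hα i) (Real.exp_pos _)) Finset.univ_nonempty

lemma hasDerivAt_Sw {n : ℕ} (α : Fin n → ℝ) (c : Fin n → ℝ) (ε : ℝ)
    (u v w : Fin n → ℝ) :
    HasDerivAt (fun s : ℝ => ∑ i, α i * Real.exp ((u i + s * v i - c i) / ε) * w i)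
      (∑ i, α i * (Real.exp ((u i - c i) / ε) * (v i / ε)) * w i) 0 := by
  apply HasDerivAt.fun_sum
  intro i _
  have h1 : HasDerivAt (fun s : ℝ => (u i + s * v i - c i) / ε) (v i / ε) 0 := by
    simpa using ((((hasDerivAt_id (0:ℝ)).mul_const (v i)).const_add (u i)).sub_const (c i)).div_const ε
  have h2 := h1.exp
  simp only [zero_mul, add_zero] at h2
  exact (h2.const_mul (α i)).mul_const (w i)

lemma hasDerivAt_S {n : ℕ} (α : Fin n → ℝ) (c : Fin n → ℝ) (ε : ℝ)
    (u v : Fin n → ℝ) :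
    HasDerivAt (fun s : ℝ => ∑ i, α i * Real.exp ((u i + s * v i - c i) / ε))
      (∑ i, α i * (Real.exp ((u i - c i) / ε) * (v i / ε))) 0 := by
  have := hasDerivAt_Sw α c ε u v (fun _ => 1)
  simpa using this

lemma inner_deriv {n m : ℕ} (hn : 0 < n)
    (α : Fin n → ℝ) (β : Fin m → ℝ) (hα : ∀ i, 0 < α i)
    (C : Fin n → Fin m → ℝ) (ε : ℝ) (hε : 0 < ε)
    (u v : Fin n → ℝ) :
    deriv (fun t : ℝ => Qsemi α β C ε (fun i => u i + t * v i)) 0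
      = (∑ i, α i * v i) - ∑ j, β j *
          ((∑ i, α i * Real.exp ((u i - C i j) / ε) * v i)
            / (∑ i, α i * Real.exp ((u i - C i j) / ε))) := by
  have h1 : HasDerivAt (fun t : ℝ => ∑ i, α i * (u i + t * v i)) (∑ i, α i * v i) 0 := by
    apply HasDerivAt.fun_sum
    intro i _
    simpa using (((hasDerivAt_id (0:ℝ)).mul_const (v i)).const_add (u i)).const_mul (α i)
  have h2 : HasDerivAt (fun t : ℝ => ∑ j, β j *
        (-ε * Real.log (∑ i, α i * Real.exp ((u i + t * v i - C i j) / ε))))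
      (∑ j, β j * (-ε * ((∑ i, α i * (Real.exp ((u i - C i j) / ε) * (v i / ε)))
        / (∑ i, α i * Real.exp ((u i - C i j) / ε))))) 0 := by
    apply HasDerivAt.fun_sum
    intro j _
    have hS := hasDerivAt_S α (fun i => C i j) ε u v
    have hS0 : (0:ℝ) < ∑ i, α i * Real.exp ((u i + 0 * v i - C i j) / ε) :=
      sum_pos_exp hn α hα _
    have hlog := (hS.log hS0.ne')
    simp only [zero_mul, add_zero] at hlog
    exact ((hlog.const_mul (-ε)).const_mul (β j))
  have hQ : (fun t : ℝ => Qsemi α β C ε (fun i => u i + t * v i))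
      = fun t : ℝ => (∑ i, α i * (u i + t * v i)) + ∑ j, β j *
        (-ε * Real.log (∑ i, α i * Real.exp ((u i + t * v i - C i j) / ε))) := by
    funext t; simp [Qsemi, transformF]
  rw [hQ, (h1.fun_add h2).deriv, sub_eq_add_neg]
  congr 1
  rw [← Finset.sum_neg_distrib]
  refine Finset.sum_congr rfl fun j _ => ?_
  have hX : (∑ i, α i * (Real.exp ((u i - C i j) / ε) * (v i / ε)))
      = (∑ i, α i * Real.exp ((u i - C i j) / ε) * v i) / ε := by
    rw [Finset.sum_div]
    exact Finset.sum_congr rfl fun i _ => by field_simp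
  have hS0 : (0:ℝ) < ∑ i, α i * Real.exp ((u i - C i j) / ε) := sum_pos_exp hn α hα _
  rw [hX]
  field_simp


/-- Semi-dual Hessian at the optimum: for all `f₁, f₂`,
`D²Q^semi_ε(f*)[f₁,f₂] = −(1/ε)·(⟨f₁,f₂⟩_α − ⟨(R∘Rᵀ)f₁,f₂⟩_α)`, i.e. the
Hessian of `Q^semi_ε` at `f*` equals `−(1/ε)(Id − R∘Rᵀ)` as a self-adjoint
operator on `(ℝ^n, ⟨·,·⟩_α)`. The bilinear second differential is computed as
a mixed second derivative along the two directions. -/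
theorem semidual_hessian_at_optimum
    {n m : ℕ} (hn : 0 < n) (hm : 0 < m)
    (α : Fin n → ℝ) (β : Fin m → ℝ)
    (hα : ∀ i, 0 < α i) (hβ : ∀ j, 0 < β j)
    (hαs : ∑ i, α i = 1) (hβs : ∑ j, β j = 1)
    (C : Fin n → Fin m → ℝ) (ε : ℝ) (hε : 0 < ε)
    (fs : Fin n → ℝ) (gs : Fin m → ℝ)
    (hfs : ∀ i, fs i = -ε * Real.log (∑ j, β j * Real.exp ((gs j - C i j) / ε)))
    (hgs : gs = transformF α C ε fs) :
    ∀ f₁ f₂ : Fin n → ℝ,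
      deriv (fun s : ℝ => deriv (fun t : ℝ =>
          Qsemi α β C ε (fun i => fs i + t * f₁ i + s * f₂ i)) 0) 0
        = -(1 / ε) *
          ((∑ i, α i * f₁ i * f₂ i)
            - ∑ i, α i * Rop β C ε fs gs (RopT α C ε fs gs f₁) i * f₂ i) := by
  intro f₁ f₂
  -- Step 1: identify the inner derivative as a function of s
  have hfun : (fun s : ℝ => deriv (fun t : ℝ =>
        Qsemi α β C ε (fun i => fs i + t * f₁ i + s * f₂ i)) 0)
      = fun s : ℝ => (∑ i, α i * f₁ i) - ∑ j, β j *
          ((∑ i, α i * Real.exp ((fs i + s * f₂ i - C i j) / ε) * f₁ i)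
            / (∑ i, α i * Real.exp ((fs i + s * f₂ i - C i j) / ε))) := by
    funext s
    have heq : (fun t : ℝ => Qsemi α β C ε (fun i => fs i + t * f₁ i + s * f₂ i))
        = fun t : ℝ => Qsemi α β C ε (fun i => (fun i => fs i + s * f₂ i) i + t * f₁ i) := by
      funext t; congr 1; funext i; ring
    rw [heq]
    exact inner_deriv hn α β hα C ε hε (fun i => fs i + s * f₂ i) f₁
  rw [hfun]
  -- Step 2: differentiate in s at 0
  have hall : HasDerivAt (fun s : ℝ => (∑ i, α i * f₁ i) - ∑ j, β j *
        ((∑ i, α i * Real.exp ((fs i + s * f₂ i - C i j) / ε) * f₁ i)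
          / (∑ i, α i * Real.exp ((fs i + s * f₂ i - C i j) / ε))))
      (-(∑ j, β j *
        (((∑ i, α i * (Real.exp ((fs i - C i j) / ε) * (f₂ i / ε)) * f₁ i)
            * (∑ i, α i * Real.exp ((fs i - C i j) / ε))
          - (∑ i, α i * Real.exp ((fs i - C i j) / ε) * f₁ i)
            * (∑ i, α i * (Real.exp ((fs i - C i j) / ε) * (f₂ i / ε))))
          / (∑ i, α i * Real.exp ((fs i - C i j) / ε)) ^ 2))) 0 := by
    apply HasDerivAt.const_sub
    apply HasDerivAt.fun_sum
    intro j _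
    have hT := hasDerivAt_Sw α (fun i => C i j) ε fs f₂ f₁
    have hS := hasDerivAt_S α (fun i => C i j) ε fs f₂
    have hSne : (∑ i, α i * Real.exp ((fs i + (0:ℝ) * f₂ i - C i j) / ε)) ≠ 0 :=
      (sum_pos_exp hn α hα _).ne'
    have hdiv := hT.div hS hSne
    simp only [zero_mul, add_zero] at hdiv
    exact hdiv.const_mul (β j)
  rw [hall.deriv]
  -- Step 3: algebraic identification using the optimality equations
  have hK : ∀ j, (∑ i, α i * Real.exp ((fs i - C i j) / ε)) = Real.exp (-gs j / ε) := by
    intro j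
    have hpos : (0:ℝ) < ∑ i, α i * Real.exp ((fs i - C i j) / ε) := sum_pos_exp hn α hα _
    have h' : Real.log (∑ i, α i * Real.exp ((fs i - C i j) / ε)) = -gs j / ε := by
      rw [hgs]; simp only [transformF]; field_simp
    rw [← Real.exp_log hpos, h']
  have hE : ∀ i j, Real.exp ((fs i - C i j) / ε)
      = Real.exp ((fs i + gs j - C i j) / ε) * Real.exp (-gs j / ε) := by
    intro i j
    rw [← Real.exp_add]
    congr 1
    ring
  have hrow : ∀ i, ∑ j, β j * Real.exp ((fs i + gs j - C i j) / ε) = 1 := by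
    intro i
    have hpos : (0:ℝ) < ∑ j, β j * Real.exp ((gs j - C i j) / ε) := sum_pos_exp hm β hβ _
    have hW : ∑ j, β j * Real.exp ((gs j - C i j) / ε) = Real.exp (-fs i / ε) := by
      have h' : Real.log (∑ j, β j * Real.exp ((gs j - C i j) / ε)) = -fs i / ε := by
        rw [hfs i]; field_simp
      rw [← Real.exp_log hpos, h']
    have step1 : ∑ j, β j * Real.exp ((fs i + gs j - C i j) / ε)
        = (∑ j, β j * Real.exp ((gs j - C i j) / ε)) * Real.exp (fs i / ε) := by
      rw [Finset.sum_mul]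
      refine Finset.sum_congr rfl fun j _ => ?_
      rw [mul_assoc, ← Real.exp_add]
      congr 2
      ring
    rw [step1, hW, ← Real.exp_add]
    have : -fs i / ε + fs i / ε = 0 := by ring
    rw [this, Real.exp_zero]
  set E : Fin n → Fin m → ℝ := fun i j => Real.exp ((fs i + gs j - C i j) / ε) with hEdef
  set P : Fin m → ℝ := RopT α C ε fs gs f₁ with hP
  set Q2 : Fin m → ℝ := RopT α C ε fs gs f₂ with hQ2
  set A : Fin m → ℝ := fun j => ∑ i, α i * E i j * f₁ i * f₂ i with hA
  -- per-j simplification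
  have hperj : ∀ j, β j *
        (((∑ i, α i * (Real.exp ((fs i - C i j) / ε) * (f₂ i / ε)) * f₁ i)
            * (∑ i, α i * Real.exp ((fs i - C i j) / ε))
          - (∑ i, α i * Real.exp ((fs i - C i j) / ε) * f₁ i)
            * (∑ i, α i * (Real.exp ((fs i - C i j) / ε) * (f₂ i / ε))))
          / (∑ i, α i * Real.exp ((fs i - C i j) / ε)) ^ 2)
      = β j * ((1 / ε) * (A j - P j * Q2 j)) := by
    intro j
    have hKne : Real.exp (-gs j / ε) ≠ 0 := (Real.exp_pos _).ne'
    have h1 : (∑ i, α i * (Real.exp ((fs i - C i j) / ε) * (f₂ i / ε)) * f₁ i)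
        = Real.exp (-gs j / ε) / ε * A j := by
      rw [hA, Finset.mul_sum]
      refine Finset.sum_congr rfl fun i _ => ?_
      rw [hE i j]; simp only [hEdef]; ring
    have h2 : (∑ i, α i * Real.exp ((fs i - C i j) / ε) * f₁ i)
        = Real.exp (-gs j / ε) * P j := by
      rw [hP, RopT, Finset.mul_sum]
      refine Finset.sum_congr rfl fun i _ => ?_
      rw [hE i j]; ring
    have h3 : (∑ i, α i * (Real.exp ((fs i - C i j) / ε) * (f₂ i / ε)))
        = Real.exp (-gs j / ε) / ε * Q2 j := by
      rw [hQ2, RopT, Finset.mul_sum]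
      refine Finset.sum_congr rfl fun i _ => ?_
      rw [hE i j]; ring
    rw [h1, h2, h3, hK j]
    congr 1
    field_simp
  have hsum1 : ∑ j, β j * A j = ∑ i, α i * f₁ i * f₂ i := by
    calc ∑ j, β j * A j = ∑ j, ∑ i, α i * f₁ i * f₂ i * (β j * E i j) := by
          refine Finset.sum_congr rfl fun j _ => ?_
          rw [hA, Finset.mul_sum]
          exact Finset.sum_congr rfl fun i _ => by ring
      _ = ∑ i, ∑ j, α i * f₁ i * f₂ i * (β j * E i j) := Finset.sum_comm
      _ = ∑ i, α i * f₁ i * f₂ i * ∑ j, β j * E i j := by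
          refine Finset.sum_congr rfl fun i _ => ?_
          rw [Finset.mul_sum]
      _ = ∑ i, α i * f₁ i * f₂ i := by
          refine Finset.sum_congr rfl fun i _ => ?_
          rw [hrow i, mul_one]
  have hsum2 : ∑ i, α i * Rop β C ε fs gs (RopT α C ε fs gs f₁) i * f₂ i
      = ∑ j, β j * (P j * Q2 j) := by
    have hRop : ∀ i, Rop β C ε fs gs (RopT α C ε fs gs f₁) i = ∑ j, β j * E i j * P j :=
      fun i => rfl
    calc ∑ i, α i * Rop β C ε fs gs (RopT α C ε fs gs f₁) i * f₂ i
        = ∑ i, ∑ j, β j * P j * (α i * E i j * f₂ i) := by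
          refine Finset.sum_congr rfl fun i _ => ?_
          rw [hRop i, Finset.mul_sum, Finset.sum_mul]
          exact Finset.sum_congr rfl fun j _ => by ring
      _ = ∑ j, ∑ i, β j * P j * (α i * E i j * f₂ i) := Finset.sum_comm
      _ = ∑ j, β j * (P j * Q2 j) := by
          refine Finset.sum_congr rfl fun j _ => ?_
          have hQ2j : Q2 j = ∑ i, α i * E i j * f₂ i := rfl
          rw [hQ2j, Finset.mul_sum, Finset.mul_sum]
          exact Finset.sum_congr rfl fun i _ => by ring
  calc -(∑ j, β j *
        (((∑ i, α i * (Real.exp ((fs i - C i j) / ε) * (f₂ i / ε)) * f₁ i)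
            * (∑ i, α i * Real.exp ((fs i - C i j) / ε))
          - (∑ i, α i * Real.exp ((fs i - C i j) / ε) * f₁ i)
            * (∑ i, α i * (Real.exp ((fs i - C i j) / ε) * (f₂ i / ε))))
          / (∑ i, α i * Real.exp ((fs i - C i j) / ε)) ^ 2))
      = -((1 / ε) * ((∑ j, β j * A j) - ∑ j, β j * (P j * Q2 j))) := by
        congr 1
        rw [mul_sub, Finset.mul_sum, Finset.mul_sum, ← Finset.sum_sub_distrib]
        refine Finset.sum_congr rfl fun j _ => ?_
        rw [hperj j]; ring
    _ = -(1 / ε) * ((∑ i, α i * f₁ i * f₂ i)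
          - ∑ i, α i * Rop β C ε fs gs (RopT α C ε fs gs f₁) i * f₂ i) := by
        rw [hsum1, hsum2, neg_mul]
end
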